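/- arXiv:2012.04092 — 12 statements merged into one kernel-verified Lean document; each statement's English description precedes it below -/
import Mathlib

section
/- Let N be a finite set and let ⊥ be a semi-graphoid over N, i.e., a ternary relation X ⊥ Y | Z on triplets of pairwise disjoint subsets of N satisfying (S:0) ∅ ⊥ Y | Z for all disjoint Y, Z; (S:1) X ⊥ Y | Z iff Y ⊥ X | Z; and (S:2) X ⊥ (Y ∪ Z) | U iff [X ⊥ Y | (Z ∪ U) and X ⊥ Z | U], for all pairwise disjoint X, Y, Z, U ⊆ N. Then for every triplet (X, Y | Z) of pairwise disjoint subsets of N one has: X ⊥ Y | Z if and only if for every i ∈ X, every j ∈ Y, and every set K with Z ⊆ K ⊆ (X ∪ Y ∪ Z) \ {i, j}, one has {i} ⊥ {j} | K. -/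
section Helpers

variable {α : Type*} [DecidableEq α] {I : Finset α → Finset α → Finset α → Prop}

/-- Weak union: from `I X Y Z` and `B ⊆ Y`, get `I X (Y \ B) (B ∪ Z)`. -/
private lemma sg_wu
    (S2 : ∀ X Y Z U : Finset α, Disjoint X Y → Disjoint X Z → Disjoint X U →
      Disjoint Y Z → Disjoint Y U → Disjoint Z U →
      (I X (Y ∪ Z) U ↔ I X Y (Z ∪ U) ∧ I X Z U))
    {X Y Z : Finset α} (hXY : Disjoint X Y) (hXZ : Disjoint X Z) (hYZ : Disjoint Y Z)
    (hI : I X Y Z) {B : Finset α} (hB : B ⊆ Y) :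
    I X (Y \ B) (B ∪ Z) := by
  have hY : (Y \ B) ∪ B = Y := Finset.sdiff_union_of_subset hB
  exact ((S2 X (Y \ B) B Z
    (hXY.mono_right Finset.sdiff_subset)
    (hXY.mono_right hB) hXZ
    Finset.sdiff_disjoint
    (hYZ.mono_left Finset.sdiff_subset)
    (hYZ.mono_left hB)).mp (by rwa [hY])).1

/-- From `I X Y Z`, `j ∈ Y`, `B ⊆ Y.erase j`, get `I X {j} (B ∪ Z)`. -/
private lemma sg_elem_right
    (S2 : ∀ X Y Z U : Finset α, Disjoint X Y → Disjoint X Z → Disjoint X U →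
      Disjoint Y Z → Disjoint Y U → Disjoint Z U →
      (I X (Y ∪ Z) U ↔ I X Y (Z ∪ U) ∧ I X Z U))
    {X Y Z : Finset α} (hXY : Disjoint X Y) (hXZ : Disjoint X Z) (hYZ : Disjoint Y Z)
    (hI : I X Y Z) {j : α} (hj : j ∈ Y) {B : Finset α} (hB : B ⊆ Y.erase j) :
    I X {j} (B ∪ Z) := by
  have hBY : B ⊆ Y := hB.trans (Finset.erase_subset _ _)
  have h1 : I X (Y \ B) (B ∪ Z) := sg_wu S2 hXY hXZ hYZ hI hBY
  have hjB : j ∉ B := fun h => (Finset.mem_erase.mp (hB h)).1 rfl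
  have hj' : j ∈ Y \ B := Finset.mem_sdiff.mpr ⟨hj, hjB⟩
  have hrw : (Y \ B).erase j ∪ {j} = Y \ B := by
    rw [Finset.union_comm, ← Finset.insert_eq, Finset.insert_erase hj']
  have hE : (Y \ B).erase j ⊆ Y := (Finset.erase_subset _ _).trans Finset.sdiff_subset
  exact ((S2 X ((Y \ B).erase j) {j} (B ∪ Z)
    (hXY.mono_right hE)
    (Finset.disjoint_singleton_right.mpr (Finset.disjoint_right.mp hXY hj))
    (Finset.disjoint_union_right.mpr ⟨hXY.mono_right hBY, hXZ⟩)
    (Finset.disjoint_singleton_right.mpr (Finset.notMem_erase _ _))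
    (Finset.disjoint_union_right.mpr
      ⟨Finset.sdiff_disjoint.mono_left (Finset.erase_subset _ _),
       hYZ.mono_left hE⟩)
    (Finset.disjoint_union_right.mpr
      ⟨Finset.disjoint_singleton_left.mpr hjB,
       Finset.disjoint_singleton_left.mpr (Finset.disjoint_left.mp hYZ hj)⟩)).mp
    (by rwa [hrw])).2

end Helpers

/-- elementary-triplet characterization of a semi-graphoid.
`I X Y Z` stands for the abstract CI statement `X ⊥ Y | Z` over the finite set
`N`, modeled as a finite type `α` (subsets of `N` are `Finset α`). -/
theorem semigraphoid_local_characterization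
    {α : Type*} [Fintype α] [DecidableEq α]
    (I : Finset α → Finset α → Finset α → Prop)
    (S0 : ∀ Y Z : Finset α, Disjoint Y Z → I ∅ Y Z)
    (S1 : ∀ X Y Z : Finset α, Disjoint X Y → Disjoint X Z → Disjoint Y Z →
      (I X Y Z ↔ I Y X Z))
    (S2 : ∀ X Y Z U : Finset α, Disjoint X Y → Disjoint X Z → Disjoint X U →
      Disjoint Y Z → Disjoint Y U → Disjoint Z U →
      (I X (Y ∪ Z) U ↔ I X Y (Z ∪ U) ∧ I X Z U))
    (X Y Z : Finset α) (hXY : Disjoint X Y) (hXZ : Disjoint X Z) (hYZ : Disjoint Y Z) :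
    I X Y Z ↔
      ∀ i ∈ X, ∀ j ∈ Y, ∀ K : Finset α,
        Z ⊆ K → K ⊆ (X ∪ Y ∪ Z) \ {i, j} → I {i} {j} K := by
  constructor
  · -- Forward direction
    intro hI i hi j hj K hZK hK
    set A : Finset α := K ∩ X with hA
    set B : Finset α := K ∩ Y with hBdef
    have hne : i ≠ j := fun h => Finset.disjoint_left.mp hXY hi (h ▸ hj)
    have hKij : ∀ k ∈ K, k ≠ i ∧ k ≠ j := by
      intro k hk
      have := (Finset.mem_sdiff.mp (hK hk)).2
      simp only [Finset.mem_insert, Finset.mem_singleton] at this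
      exact ⟨fun h => this (Or.inl h), fun h => this (Or.inr h)⟩
    have hB : B ⊆ Y.erase j := by
      intro b hb
      exact Finset.mem_erase.mpr ⟨(hKij b (Finset.mem_inter.mp hb).1).2,
        (Finset.mem_inter.mp hb).2⟩
    have hA' : A ⊆ X.erase i := by
      intro a ha
      exact Finset.mem_erase.mpr ⟨(hKij a (Finset.mem_inter.mp ha).1).1,
        (Finset.mem_inter.mp ha).2⟩
    -- step 1 : I X {j} (B ∪ Z)
    have h1 : I X {j} (B ∪ Z) := sg_elem_right S2 hXY hXZ hYZ hI hj hB
    have dXj : Disjoint X ({j} : Finset α) :=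
      Finset.disjoint_singleton_right.mpr (Finset.disjoint_right.mp hXY hj)
    have dXBZ : Disjoint X (B ∪ Z) :=
      Finset.disjoint_union_right.mpr
        ⟨hXY.mono_right (hB.trans (Finset.erase_subset _ _)), hXZ⟩
    have djBZ : Disjoint ({j} : Finset α) (B ∪ Z) :=
      Finset.disjoint_union_right.mpr
        ⟨Finset.disjoint_singleton_left.mpr
          (fun h => (Finset.mem_erase.mp (hB h)).1 rfl),
         Finset.disjoint_singleton_left.mpr (Finset.disjoint_left.mp hYZ hj)⟩
    have h2 : I {j} X (B ∪ Z) := (S1 X {j} (B ∪ Z) dXj dXBZ djBZ).mp h1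
    -- step 2 : I {j} {i} (A ∪ (B ∪ Z))
    have h3 : I {j} {i} (A ∪ (B ∪ Z)) :=
      sg_elem_right S2 dXj.symm djBZ dXBZ h2 hi hA'
    have dji : Disjoint ({j} : Finset α) ({i} : Finset α) :=
      Finset.disjoint_singleton_right.mpr (by simpa using hne)
    have diABZ : Disjoint ({i} : Finset α) (A ∪ (B ∪ Z)) :=
      Finset.disjoint_union_right.mpr
        ⟨Finset.disjoint_singleton_left.mpr
          (fun h => (Finset.mem_erase.mp (hA' h)).1 rfl),
         Finset.disjoint_singleton_left.mpr (Finset.disjoint_left.mp dXBZ hi)⟩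
    have djABZ : Disjoint ({j} : Finset α) (A ∪ (B ∪ Z)) :=
      Finset.disjoint_union_right.mpr
        ⟨(dXj.symm).mono_right (hA'.trans (Finset.erase_subset _ _)), djBZ⟩
    have h4 : I {i} {j} (A ∪ (B ∪ Z)) :=
      (S1 {j} {i} (A ∪ (B ∪ Z)) dji djABZ diABZ).mp h3
    have hKeq : A ∪ (B ∪ Z) = K := by
      apply Finset.Subset.antisymm
      · refine Finset.union_subset Finset.inter_subset_left
          (Finset.union_subset Finset.inter_subset_left hZK)
      · intro k hk
        have hm := (Finset.mem_sdiff.mp (hK hk)).1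
        simp only [Finset.mem_union] at hm
        simp only [Finset.mem_union, hA, hBdef, Finset.mem_inter]
        rcases hm with (h | h) | h
        · exact Or.inl ⟨hk, h⟩
        · exact Or.inr (Or.inl ⟨hk, h⟩)
        · exact Or.inr (Or.inr h)
    rwa [hKeq] at h4
  · -- Backward direction: strong induction on |X| + |Y|
    intro h
    suffices H : ∀ n : ℕ, ∀ X Y Z : Finset α, Disjoint X Y → Disjoint X Z → Disjoint Y Z →
        X.card + Y.card ≤ n →
        (∀ i ∈ X, ∀ j ∈ Y, ∀ K : Finset α,
          Z ⊆ K → K ⊆ (X ∪ Y ∪ Z) \ {i, j} → I {i} {j} K) →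
        I X Y Z by
      exact H (X.card + Y.card) X Y Z hXY hXZ hYZ le_rfl h
    intro n
    induction n with
    | zero =>
      intro X Y Z hXY hXZ hYZ hn _
      have : X = ∅ := Finset.card_eq_zero.mp (by omega)
      exact this ▸ S0 Y Z hYZ
    | succ n ih =>
      intro X Y Z hXY hXZ hYZ hn h
      rcases Finset.eq_empty_or_nonempty X with hX | ⟨i, hi⟩
      · exact hX ▸ S0 Y Z hYZ
      rcases Finset.eq_empty_or_nonempty Y with hY | ⟨j, hj⟩
      · subst hY
        exact (S1 X ∅ Z (by simp) hXZ (by simp)).mpr (S0 X Z hXZ)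
      rcases Finset.eq_empty_or_nonempty (Y.erase j) with hY2 | hY2
      · rcases Finset.eq_empty_or_nonempty (X.erase i) with hX2 | hX2
        · -- X = {i}, Y = {j}
          have hXs : X = {i} := by
            rcases (Finset.erase_eq_empty_iff X i).mp hX2 with h' | h'
            · exact absurd h' (Finset.nonempty_iff_ne_empty.mp ⟨i, hi⟩)
            · exact h'
          have hYs : Y = {j} := by
            rcases (Finset.erase_eq_empty_iff Y j).mp hY2 with h' | h'
            · exact absurd h' (Finset.nonempty_iff_ne_empty.mp ⟨j, hj⟩)
            · exact h'
          subst hXs; subst hYs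
          refine h i (by simp) j (by simp) Z Finset.Subset.rfl ?_
          intro z hz
          refine Finset.mem_sdiff.mpr ⟨by simp [hz], ?_⟩
          simp only [Finset.mem_insert, Finset.mem_singleton]
          rintro (rfl | rfl)
          · exact Finset.disjoint_left.mp hXZ (by simp) hz
          · exact Finset.disjoint_left.mp hYZ (by simp) hz
        · -- split X: X = {i} ∪ X.erase i
          have hXsplit : ({i} : Finset α) ∪ X.erase i = X := by
            rw [← Finset.insert_eq, Finset.insert_erase hi]
          have hEX : X.erase i ⊆ X := Finset.erase_subset _ _
          have diX : Disjoint ({i} : Finset α) (X.erase i) :=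
            Finset.disjoint_singleton_left.mpr (Finset.notMem_erase _ _)
          have diY : Disjoint ({i} : Finset α) Y :=
            Finset.disjoint_singleton_left.mpr (Finset.disjoint_left.mp hXY hi)
          have diZ : Disjoint ({i} : Finset α) Z :=
            Finset.disjoint_singleton_left.mpr (Finset.disjoint_left.mp hXZ hi)
          -- I Y ({i} ∪ X.erase i) Z via S2
          have key := (S2 Y {i} (X.erase i) Z diY.symm (hXY.mono_left hEX).symm hYZ
            diX (diZ) ((hXZ.mono_left hEX))).mpr ?_
          · rw [hXsplit] at key
            exact (S1 X Y Z hXY hXZ hYZ).mpr key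
          constructor
          · -- I Y {i} (X.erase i ∪ Z)
            have card1 : Y.card + ({i} : Finset α).card ≤ n := by
              have := Finset.card_erase_of_mem hi
              have hcard : 1 ≤ (X.erase i).card := Finset.card_pos.mpr hX2
              simp only [Finset.card_singleton]
              omega
            have dYXZ : Disjoint Y (X.erase i ∪ Z) :=
              Finset.disjoint_union_right.mpr ⟨(hXY.mono_left hEX).symm, hYZ⟩
            have diXZ : Disjoint ({i} : Finset α) (X.erase i ∪ Z) :=
              Finset.disjoint_union_right.mpr ⟨diX, diZ⟩
            refine (S1 {i} Y (X.erase i ∪ Z) diY diXZ dYXZ).mp ?_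
            refine ih {i} Y (X.erase i ∪ Z) diY diXZ dYXZ (by omega) ?_
            intro i' hi' j' hj' K hZK hK
            have hi'' : i' = i := by simpa using hi'
            subst hi''
            refine h i' hi j' hj' K ((Finset.subset_union_right).trans hZK) ?_
            refine hK.trans ?_
            apply Finset.sdiff_subset_sdiff _ Finset.Subset.rfl
            intro k hk
            simp only [Finset.mem_union, Finset.mem_singleton, Finset.mem_erase] at hk ⊢
            rcases hk with (rfl | hk) | (hk | hk)
            · exact Or.inl (Or.inl hi)
            · exact Or.inl (Or.inr hk)
            · exact Or.inl (Or.inl hk.2)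
            · exact Or.inr hk
          · -- I Y (X.erase i) Z
            have card2 : Y.card + (X.erase i).card ≤ n := by
              have := Finset.card_erase_of_mem hi
              have hXc : 1 ≤ X.card := Finset.card_pos.mpr ⟨i, hi⟩
              omega
            refine (S1 (X.erase i) Y Z (hXY.mono_left hEX) (hXZ.mono_left hEX) hYZ).mp ?_
            refine ih (X.erase i) Y Z (hXY.mono_left hEX) (hXZ.mono_left hEX) hYZ
              (by omega) ?_
            intro i' hi' j' hj' K hZK hK
            refine h i' (hEX hi') j' hj' K hZK ?_
            refine hK.trans ?_
            apply Finset.sdiff_subset_sdiff _ Finset.Subset.rfl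
            intro k hk
            simp only [Finset.mem_union, Finset.mem_erase] at hk ⊢
            tauto
      · -- split Y: Y = {j} ∪ Y.erase j
        have hYsplit : ({j} : Finset α) ∪ Y.erase j = Y := by
          rw [← Finset.insert_eq, Finset.insert_erase hj]
        have hEY : Y.erase j ⊆ Y := Finset.erase_subset _ _
        have djY : Disjoint ({j} : Finset α) (Y.erase j) :=
          Finset.disjoint_singleton_left.mpr (Finset.notMem_erase _ _)
        have dXj : Disjoint X ({j} : Finset α) :=
          Finset.disjoint_singleton_right.mpr (Finset.disjoint_right.mp hXY hj)
        have djZ : Disjoint ({j} : Finset α) Z :=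
          Finset.disjoint_singleton_left.mpr (Finset.disjoint_left.mp hYZ hj)
        have key := (S2 X {j} (Y.erase j) Z dXj (hXY.mono_right hEY) hXZ
          djY djZ (hYZ.mono_left hEY)).mpr ?_
        · rwa [hYsplit] at key
        constructor
        · -- I X {j} (Y.erase j ∪ Z)
          have card1 : X.card + ({j} : Finset α).card ≤ n := by
            have := Finset.card_erase_of_mem hj
            have hcard : 1 ≤ (Y.erase j).card := Finset.card_pos.mpr hY2
            simp only [Finset.card_singleton]
            omega
          have dXYZ : Disjoint X (Y.erase j ∪ Z) :=
            Finset.disjoint_union_right.mpr ⟨hXY.mono_right hEY, hXZ⟩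
          have djYZ : Disjoint ({j} : Finset α) (Y.erase j ∪ Z) :=
            Finset.disjoint_union_right.mpr ⟨djY, djZ⟩
          refine ih X {j} (Y.erase j ∪ Z) dXj dXYZ djYZ (by omega) ?_
          intro i' hi' j' hj' K hZK hK
          have hj'' : j' = j := by simpa using hj'
          subst hj''
          refine h i' hi' j' hj K ((Finset.subset_union_right).trans hZK) ?_
          refine hK.trans ?_
          apply Finset.sdiff_subset_sdiff _ Finset.Subset.rfl
          intro k hk
          simp only [Finset.mem_union, Finset.mem_singleton, Finset.mem_erase] at hk ⊢
          rcases hk with (hk | rfl) | (hk | hk)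
          · exact Or.inl (Or.inl hk)
          · exact Or.inl (Or.inr hj)
          · exact Or.inl (Or.inr hk.2)
          · exact Or.inr hk
        · -- I X (Y.erase j) Z
          have card2 : X.card + (Y.erase j).card ≤ n := by
            have := Finset.card_erase_of_mem hj
            have hYc : 1 ≤ Y.card := Finset.card_pos.mpr ⟨j, hj⟩
            omega
          refine ih X (Y.erase j) Z (hXY.mono_right hEY) hXZ (hYZ.mono_left hEY)
            (by omega) ?_
          intro i' hi' j' hj' K hZK hK
          refine h i' hi' j' (hEY hj') K hZK ?_
          refine hK.trans ?_
          apply Finset.sdiff_subset_sdiff _ Finset.Subset.rfl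
          intro k hk
          simp only [Finset.mem_union, Finset.mem_erase] at hk ⊢
          tauto
end

section
/- First conditional Ingleton inequality [1cI]: let ξ_X, ξ_Y, ξ_Z, ξ_U be discrete random variables with nonempty finite ranges on a common probability space, and let h be the entropy function assigning to each subset S of {X, Y, Z, U} the Shannon entropy of the joint distribution of (ξ_i)_{i∈S}. If ξ_X ⊥ ξ_Y (unconditional independence) and ξ_X ⊥ ξ_Y | ξ_Z, then □h(X,Y) ≥ 0. -/
open MeasureTheory

/-- The probability that the discrete random variable `f` takes the value `x`. -/
noncomputable def probOf {Ω S : Type*} [MeasurableSpace Ω] (μ : Measure Ω)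
    (f : Ω → S) (x : S) : ℝ :=
  (μ {ω | f ω = x}).toReal

/-- The Shannon entropy `−Σ_x p(x)·ln p(x)` of the distribution of a discrete
random variable `f` with finite range `S`. -/
noncomputable def entropyOf {Ω S : Type*} [MeasurableSpace Ω] [Fintype S]
    (μ : Measure Ω) (f : Ω → S) : ℝ :=
  ∑ x : S, Real.negMulLog (probOf μ f x)

/-- Conditional independence of discrete random variables:
`P(f = a, g = b, k = c) · P(k = c) = P(f = a, k = c) · P(g = b, k = c)` for all values. -/
def CondIndepRV {Ω A B C : Type*} [MeasurableSpace Ω] (μ : Measure Ω)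
    (f : Ω → A) (g : Ω → B) (k : Ω → C) : Prop :=
  ∀ (a : A) (b : B) (c : C),
    μ {ω | f ω = a ∧ g ω = b ∧ k ω = c} * μ {ω | k ω = c} =
    μ {ω | f ω = a ∧ k ω = c} * μ {ω | g ω = b ∧ k ω = c}

/-- Unconditional independence: the case of a constant conditioning variable. -/
def IndepRV {Ω A B : Type*} [MeasurableSpace Ω] (μ : Measure Ω)
    (f : Ω → A) (g : Ω → B) : Prop :=
  CondIndepRV μ f g (fun _ => ())

/-- The Ingleton expression □h(X,Y) for the entropy function `h` of the four
discrete random variables `ξX, ξY, ξZ, ξU` (entropies of joint sub-vectors). -/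
noncomputable def ingletonEnt {Ω SX SY SZ SU : Type*} [MeasurableSpace Ω]
    [Fintype SX] [Fintype SY] [Fintype SZ] [Fintype SU] (μ : Measure Ω)
    (ξX : Ω → SX) (ξY : Ω → SY) (ξZ : Ω → SZ) (ξU : Ω → SU) : ℝ :=
  - entropyOf μ (fun ω => (ξX ω, ξY ω)) + entropyOf μ (fun ω => (ξX ω, ξZ ω))
  + entropyOf μ (fun ω => (ξX ω, ξU ω)) + entropyOf μ (fun ω => (ξY ω, ξZ ω))
  + entropyOf μ (fun ω => (ξY ω, ξU ω)) + entropyOf μ (fun ω => (ξZ ω, ξU ω))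
  - entropyOf μ ξZ - entropyOf μ ξU
  - entropyOf μ (fun ω => (ξX ω, ξZ ω, ξU ω)) - entropyOf μ (fun ω => (ξY ω, ξZ ω, ξU ω))


set_option linter.unusedSectionVars false

namespace CI1
open Real Finset

variable {X Y Z U : Type*} [Fintype X] [Fintype Y] [Fintype Z] [Fintype U]

noncomputable section

variable (P : X → Y → Z → U → ℝ)

def pXZU (x : X) (z : Z) (u : U) : ℝ := ∑ y, P x y z u
def pYZU (y : Y) (z : Z) (u : U) : ℝ := ∑ x, P x y z u
def pXYZ (x : X) (y : Y) (z : Z) : ℝ := ∑ u, P x y z u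
def pXY (x : X) (y : Y) : ℝ := ∑ z, pXYZ P x y z
def pXZ (x : X) (z : Z) : ℝ := ∑ u, pXZU P x z u
def pXU (x : X) (u : U) : ℝ := ∑ z, pXZU P x z u
def pYZ (y : Y) (z : Z) : ℝ := ∑ u, pYZU P y z u
def pYU (y : Y) (u : U) : ℝ := ∑ z, pYZU P y z u
def pZU (z : Z) (u : U) : ℝ := ∑ x, pXZU P x z u
def pX (x : X) : ℝ := ∑ z, pXZ P x z
def pY (y : Y) : ℝ := ∑ z, pYZ P y z
def pZ (z : Z) : ℝ := ∑ u, pZU P z u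
def pU (u : U) : ℝ := ∑ z, pZU P z u
def q (x : X) (y : Y) (z : Z) (u : U) : ℝ := pXZU P x z u * (pYZU P y z u / pZU P z u)
def bet (x : X) (y : Y) (z : Z) (u : U) : ℝ :=
  pXZ P x z * pXU P x u * pYZ P y z * pYU P y u / (pX P x * pY P y * pZ P z * pU P u)

variable {P} (hP : ∀ x y z u, 0 ≤ P x y z u)

section nonneg
include hP

lemma pXZU_nonneg (x z u) : 0 ≤ pXZU P x z u := Finset.sum_nonneg fun y _ => hP x y z u
lemma pYZU_nonneg (y z u) : 0 ≤ pYZU P y z u := Finset.sum_nonneg fun x _ => hP x y z u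
lemma pXYZ_nonneg (x y z) : 0 ≤ pXYZ P x y z := Finset.sum_nonneg fun u _ => hP x y z u
lemma pXZ_nonneg (x z) : 0 ≤ pXZ P x z := Finset.sum_nonneg fun u _ => pXZU_nonneg hP x z u
lemma pXU_nonneg (x u) : 0 ≤ pXU P x u := Finset.sum_nonneg fun z _ => pXZU_nonneg hP x z u
lemma pYZ_nonneg (y z) : 0 ≤ pYZ P y z := Finset.sum_nonneg fun u _ => pYZU_nonneg hP y z u
lemma pYU_nonneg (y u) : 0 ≤ pYU P y u := Finset.sum_nonneg fun z _ => pYZU_nonneg hP y z u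
lemma pZU_nonneg (z u) : 0 ≤ pZU P z u := Finset.sum_nonneg fun x _ => pXZU_nonneg hP x z u
lemma pX_nonneg (x) : 0 ≤ pX P x := Finset.sum_nonneg fun z _ => pXZ_nonneg hP x z
lemma pY_nonneg (y) : 0 ≤ pY P y := Finset.sum_nonneg fun z _ => pYZ_nonneg hP y z
lemma pZ_nonneg (z) : 0 ≤ pZ P z := Finset.sum_nonneg fun u _ => pZU_nonneg hP z u
lemma pU_nonneg (u) : 0 ≤ pU P u := Finset.sum_nonneg fun z _ => pZU_nonneg hP z u
lemma q_nonneg (x y z u) : 0 ≤ q P x y z u :=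
  mul_nonneg (pXZU_nonneg hP x z u) (div_nonneg (pYZU_nonneg hP y z u) (pZU_nonneg hP z u))
lemma bet_nonneg (x y z u) : 0 ≤ bet P x y z u := by
  apply div_nonneg
  · exact mul_nonneg (mul_nonneg (mul_nonneg (pXZ_nonneg hP x z) (pXU_nonneg hP x u))
      (pYZ_nonneg hP y z)) (pYU_nonneg hP y u)
  · exact mul_nonneg (mul_nonneg (mul_nonneg (pX_nonneg hP x) (pY_nonneg hP y))
      (pZ_nonneg hP z)) (pU_nonneg hP u)

end nonneg

-- cross identities (sum reorderings)
lemma pZU_eq (z z') : pZU P z z' = ∑ y, pYZU P y z z' := Finset.sum_comm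
lemma pXZ_eq (x z) : pXZ P x z = ∑ y, pXYZ P x y z := Finset.sum_comm
lemma pYZ_eq (y z) : pYZ P y z = ∑ x, pXYZ P x y z := Finset.sum_comm
lemma pX_eq (x) : pX P x = ∑ u, pXU P x u := Finset.sum_comm
lemma pY_eq (y) : pY P y = ∑ u, pYU P y u := Finset.sum_comm
lemma pU_eq (u) : pU P u = ∑ x, pXU P x u := Finset.sum_comm
lemma pZ_eq (z) : pZ P z = ∑ x, pXZ P x z := Finset.sum_comm
lemma pU_eq' (u) : pU P u = ∑ y, pYU P y u := by
  rw [pU, Finset.sum_congr rfl fun z _ => pZU_eq (P := P) z u]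
  exact Finset.sum_comm
lemma pY_eq' (y) : pY P y = ∑ z, ∑ u, pYZU P y z u := rfl
lemma pX_eq' (x) : pX P x = ∑ z, ∑ u, pXZU P x z u := rfl

lemma single_le {α : Type*} [Fintype α] {f : α → ℝ} (hf : ∀ a, 0 ≤ f a) (a : α) :
    f a ≤ ∑ b, f b := Finset.single_le_sum (fun b _ => hf b) (Finset.mem_univ a)

section mono
include hP

lemma pXZU_le_pZU (x z u) : pXZU P x z u ≤ pZU P z u :=
  single_le (fun a => pXZU_nonneg hP a z u) x
lemma pXZU_le_pXZ (x z u) : pXZU P x z u ≤ pXZ P x z :=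
  single_le (fun a => pXZU_nonneg hP x z a) u
lemma pXZU_le_pXU (x z u) : pXZU P x z u ≤ pXU P x u :=
  single_le (fun a => pXZU_nonneg hP x a u) z
lemma pYZU_le_pZU (y z u) : pYZU P y z u ≤ pZU P z u := by
  rw [pZU_eq]; exact single_le (fun a => pYZU_nonneg hP a z u) y
lemma pYZU_le_pYZ (y z u) : pYZU P y z u ≤ pYZ P y z :=
  single_le (fun a => pYZU_nonneg hP y z a) u
lemma pYZU_le_pYU (y z u) : pYZU P y z u ≤ pYU P y u :=
  single_le (fun a => pYZU_nonneg hP y a u) z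
lemma pXZ_le_pX (x z) : pXZ P x z ≤ pX P x :=
  single_le (fun a => pXZ_nonneg hP x a) z
lemma pYZ_le_pY (y z) : pYZ P y z ≤ pY P y :=
  single_le (fun a => pYZ_nonneg hP y a) z
lemma pXU_le_pX (x u) : pXU P x u ≤ pX P x := by
  rw [pX_eq]; exact single_le (fun a => pXU_nonneg hP x a) u
lemma pYU_le_pY (y u) : pYU P y u ≤ pY P y := by
  rw [pY_eq]; exact single_le (fun a => pYU_nonneg hP y a) u
lemma pYU_le_pU (y u) : pYU P y u ≤ pU P u := by
  rw [pU_eq']; exact single_le (fun a => pYU_nonneg hP a u) y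
lemma pXU_le_pU (x u) : pXU P x u ≤ pU P u := by
  rw [pU_eq]; exact single_le (fun a => pXU_nonneg hP a u) x
lemma pZU_le_pZ (z u) : pZU P z u ≤ pZ P z :=
  single_le (fun a => pZU_nonneg hP z a) u
lemma pZU_le_pU (z u) : pZU P z u ≤ pU P u :=
  single_le (fun a => pZU_nonneg hP a u) z
lemma pXZ_le_pZ (x z) : pXZ P x z ≤ pZ P z := by
  rw [pZ_eq]; exact single_le (fun a => pXZ_nonneg hP a z) x
lemma pXYZ_le_pXZ (x y z) : pXYZ P x y z ≤ pXZ P x z := by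
  rw [pXZ_eq]; exact single_le (fun a => pXYZ_nonneg hP x a z) y
lemma pXYZ_le_pZ (x y z) : pXYZ P x y z ≤ pZ P z :=
  (pXYZ_le_pXZ hP x y z).trans (pXZ_le_pZ hP x z)
lemma pXYZ_le_pX (x y z) : pXYZ P x y z ≤ pX P x :=
  (pXYZ_le_pXZ hP x y z).trans (pXZ_le_pX hP x z)
lemma pXYZ_le_pYZ (x y z) : pXYZ P x y z ≤ pYZ P y z := by
  rw [pYZ_eq]; exact single_le (fun a => pXYZ_nonneg hP a y z) x
lemma pXYZ_le_pY (x y z) : pXYZ P x y z ≤ pY P y :=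
  (pXYZ_le_pYZ hP x y z).trans (pYZ_le_pY hP y z)

end mono

-- q marginal lemmas
include hP in
lemma sumq_y (x z u) : (∑ y, q P x y z u) = pXZU P x z u := by
  by_cases h : pZU P z u = 0
  · have h0 : pXZU P x z u = 0 :=
      le_antisymm (h ▸ pXZU_le_pZU hP x z u) (pXZU_nonneg hP x z u)
    simp [q, h, h0]
  · simp only [q, ← Finset.mul_sum, ← Finset.sum_div, ← pZU_eq]
    rw [div_self h, mul_one]

include hP in
lemma sumq_x (y z u) : (∑ x, q P x y z u) = pYZU P y z u := by
  by_cases h : pZU P z u = 0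
  · have h0 : pYZU P y z u = 0 := by
      have h1 : ∀ x, P x y z u = 0 := by
        intro x
        have hx0 : pXZU P x z u = 0 :=
          le_antisymm (h ▸ pXZU_le_pZU hP x z u) (pXZU_nonneg hP x z u)
        have hle : P x y z u ≤ pXZU P x z u := single_le (fun b => hP x b z u) y
        exact le_antisymm (hx0 ▸ hle) (hP x y z u)
      simp [pYZU, h1]
    simp [q, h, h0]
  · simp only [q, ← Finset.sum_mul]
    rw [show (∑ x, pXZU P x z u) = pZU P z u from rfl, mul_div_cancel₀ _ h]

-- grand sum collapse helpers
include hP in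
lemma helper1 (g : X → Z → U → ℝ) :
    (∑ x, ∑ y, ∑ z, ∑ u, q P x y z u * g x z u) = ∑ x, ∑ z, ∑ u, pXZU P x z u * g x z u := by
  refine Finset.sum_congr rfl fun x _ => ?_
  rw [Finset.sum_comm]
  refine Finset.sum_congr rfl fun z _ => ?_
  rw [Finset.sum_comm]
  refine Finset.sum_congr rfl fun u _ => ?_
  rw [← Finset.sum_mul, sumq_y hP]

include hP in
lemma helper2 (g : Y → Z → U → ℝ) :
    (∑ x, ∑ y, ∑ z, ∑ u, q P x y z u * g y z u) = ∑ y, ∑ z, ∑ u, pYZU P y z u * g y z u := by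
  rw [Finset.sum_comm]
  refine Finset.sum_congr rfl fun y _ => ?_
  rw [Finset.sum_comm]
  refine Finset.sum_congr rfl fun z _ => ?_
  rw [Finset.sum_comm]
  refine Finset.sum_congr rfl fun u _ => ?_
  rw [← Finset.sum_mul, sumq_x hP]

-- collapse of pXZU-sums against coarser tests
lemma cXZ (g : X → Z → ℝ) :
    (∑ x, ∑ z, ∑ u, pXZU P x z u * g x z) = ∑ x, ∑ z, pXZ P x z * g x z := by
  refine Finset.sum_congr rfl fun x _ => Finset.sum_congr rfl fun z _ => ?_
  rw [← Finset.sum_mul]; rfl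

lemma cXU (g : X → U → ℝ) :
    (∑ x, ∑ z, ∑ u, pXZU P x z u * g x u) = ∑ x, ∑ u, pXU P x u * g x u := by
  refine Finset.sum_congr rfl fun x _ => ?_
  rw [Finset.sum_comm]
  refine Finset.sum_congr rfl fun u _ => ?_
  rw [← Finset.sum_mul]; rfl

lemma cZU (g : Z → U → ℝ) :
    (∑ x, ∑ z, ∑ u, pXZU P x z u * g z u) = ∑ z, ∑ u, pZU P z u * g z u := by
  rw [Finset.sum_comm]
  refine Finset.sum_congr rfl fun z _ => ?_
  rw [Finset.sum_comm]
  refine Finset.sum_congr rfl fun u _ => ?_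
  rw [← Finset.sum_mul]; rfl

lemma cX (g : X → ℝ) :
    (∑ x, ∑ z, ∑ u, pXZU P x z u * g x) = ∑ x, pX P x * g x := by
  refine Finset.sum_congr rfl fun x _ => ?_
  simp only [← Finset.sum_mul]
  rfl

lemma cZ (g : Z → ℝ) :
    (∑ x, ∑ z, ∑ u, pXZU P x z u * g z) = ∑ z, pZ P z * g z := by
  rw [cZU (P := P) (fun z _ => g z)]
  refine Finset.sum_congr rfl fun z _ => ?_
  rw [← Finset.sum_mul]; rfl

lemma cU (g : U → ℝ) :
    (∑ x, ∑ z, ∑ u, pXZU P x z u * g u) = ∑ u, pU P u * g u := by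
  rw [cZU (P := P) (fun _ u => g u)]
  rw [show (∑ z, ∑ u, pZU P z u * g u) = ∑ u, ∑ z, pZU P z u * g u from Finset.sum_comm]
  refine Finset.sum_congr rfl fun u _ => ?_
  rw [← Finset.sum_mul]; rfl

-- collapse of pYZU-sums
lemma cYZ (g : Y → Z → ℝ) :
    (∑ y, ∑ z, ∑ u, pYZU P y z u * g y z) = ∑ y, ∑ z, pYZ P y z * g y z := by
  refine Finset.sum_congr rfl fun y _ => Finset.sum_congr rfl fun z _ => ?_
  rw [← Finset.sum_mul]; rfl

lemma cYU (g : Y → U → ℝ) :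
    (∑ y, ∑ z, ∑ u, pYZU P y z u * g y u) = ∑ y, ∑ u, pYU P y u * g y u := by
  refine Finset.sum_congr rfl fun y _ => ?_
  rw [Finset.sum_comm]
  refine Finset.sum_congr rfl fun u _ => ?_
  rw [← Finset.sum_mul]; rfl

lemma cY (g : Y → ℝ) :
    (∑ y, ∑ z, ∑ u, pYZU P y z u * g y) = ∑ y, pY P y * g y := by
  refine Finset.sum_congr rfl fun y _ => ?_
  simp only [← Finset.sum_mul]
  rfl

-- totals
include hP in
lemma sumq_total (htot : ∑ x, pX P x = 1) : (∑ x, ∑ y, ∑ z, ∑ u, q P x y z u) = 1 := by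
  have h := helper1 hP (fun _ _ _ => (1 : ℝ))
  simp only [mul_one] at h
  rw [h]
  exact htot

lemma sumX_eq : (∑ x, pX P x) = ∑ z, ∑ u, pZU P z u := by
  have h1 : (∑ x, pX P x) = ∑ x, ∑ z, ∑ u, pXZU P x z u := rfl
  rw [h1, Finset.sum_comm]
  exact Finset.sum_congr rfl fun z _ => Finset.sum_comm

lemma sumY_eq : (∑ y, pY P y) = ∑ z, ∑ u, pZU P z u := by
  have h1 : (∑ y, pY P y) = ∑ y, ∑ z, ∑ u, pYZU P y z u := rfl
  rw [h1, Finset.sum_comm]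
  refine Finset.sum_congr rfl fun z _ => ?_
  exact (Finset.sum_comm).trans (Finset.sum_congr rfl fun u _ => (pZU_eq (P := P) z u).symm)

lemma sumY_total (htot : ∑ x, pX P x = 1) : (∑ y, pY P y) = 1 := by
  rw [sumY_eq, ← sumX_eq]; exact htot

lemma sumYU_total (htot : ∑ x, pX P x = 1) : (∑ y, ∑ u, pYU P y u) = 1 := by
  rw [Finset.sum_congr rfl fun y _ => (pY_eq (P := P) y).symm]
  exact sumY_total htot

-- beta sums to one
include hP in
lemma key1 (hc2 : ∀ x y z, pXYZ P x y z * pZ P z = pXZ P x z * pYZ P y z) (x y z) :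
    pXZ P x z * pYZ P y z / pZ P z = pXYZ P x y z := by
  by_cases hz : pZ P z = 0
  · have h1 : pXZ P x z = 0 := le_antisymm (hz ▸ pXZ_le_pZ hP x z) (pXZ_nonneg hP x z)
    have h2 : pXYZ P x y z = 0 := le_antisymm (hz ▸ pXYZ_le_pZ hP x y z) (pXYZ_nonneg hP x y z)
    simp [h1, h2]
  · rw [← hc2 x y z, mul_div_cancel_right₀ _ hz]

include hP in
lemma bet_eq (hc2 : ∀ x y z, pXYZ P x y z * pZ P z = pXZ P x z * pYZ P y z) (x y z u) :
    bet P x y z u = pXYZ P x y z * (pXU P x u * pYU P y u / (pX P x * pY P y * pU P u)) := by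
  rw [← key1 hP hc2 x y z, bet, div_mul_div_comm]
  ring_nf

include hP in
lemma key2 (x y u) :
    pX P x * pY P y * (pXU P x u * pYU P y u / (pX P x * pY P y * pU P u)) =
      pXU P x u * pYU P y u / pU P u := by
  by_cases hx : pX P x = 0
  · have h1 : pXU P x u = 0 := le_antisymm (hx ▸ pXU_le_pX hP x u) (pXU_nonneg hP x u)
    simp [hx, h1]
  · by_cases hy : pY P y = 0
    · have h1 : pYU P y u = 0 := le_antisymm (hy ▸ pYU_le_pY hP y u) (pYU_nonneg hP y u)
      simp [hy, h1]
    · rw [← mul_div_assoc]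
      exact mul_div_mul_left _ _ (mul_ne_zero hx hy)

include hP in
lemma sumbet (htot : ∑ x, pX P x = 1)
    (hc1 : ∀ x y, pXY P x y = pX P x * pY P y)
    (hc2 : ∀ x y z, pXYZ P x y z * pZ P z = pXZ P x z * pYZ P y z) :
    (∑ x, ∑ y, ∑ z, ∑ u, bet P x y z u) = 1 := by
  have step1 : ∀ x y, (∑ z, ∑ u, bet P x y z u) = ∑ u, pXU P x u * pYU P y u / pU P u := by
    intro x y
    simp only [bet_eq hP hc2]
    rw [← Finset.sum_mul_sum]
    rw [show (∑ z, pXYZ P x y z) = pXY P x y from rfl, hc1 x y, Finset.mul_sum]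
    exact Finset.sum_congr rfl fun u _ => key2 hP x y u
  calc (∑ x, ∑ y, ∑ z, ∑ u, bet P x y z u)
      = ∑ x, ∑ y, ∑ u, pXU P x u * pYU P y u / pU P u :=
        Finset.sum_congr rfl fun x _ => Finset.sum_congr rfl fun y _ => step1 x y
    _ = ∑ y, ∑ u, ∑ x, pXU P x u * pYU P y u / pU P u := by
        rw [Finset.sum_comm]
        exact Finset.sum_congr rfl fun y _ => Finset.sum_comm
    _ = ∑ y, ∑ u, pYU P y u := by
        refine Finset.sum_congr rfl fun y _ => Finset.sum_congr rfl fun u _ => ?_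
        simp only [mul_div_assoc]
        rw [← Finset.sum_mul, ← pU_eq]
        by_cases hu : pU P u = 0
        · have h1 : pYU P y u = 0 := le_antisymm (hu ▸ pYU_le_pU hP y u) (pYU_nonneg hP y u)
          simp [hu, h1]
        · rw [mul_comm, div_mul_cancel₀ _ hu]
    _ = 1 := sumYU_total htot

-- positivity consequences of q > 0
include hP in
lemma q_pos_marg {x y z u} (hq : 0 < q P x y z u) :
    0 < pXZU P x z u ∧ 0 < pYZU P y z u ∧ 0 < pZU P z u ∧ 0 < pXZ P x z ∧ 0 < pXU P x u ∧
    0 < pYZ P y z ∧ 0 < pYU P y u ∧ 0 < pX P x ∧ 0 < pY P y ∧ 0 < pZ P z ∧ 0 < pU P u := by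
  have hzu : 0 < pZU P z u := by
    rcases (pZU_nonneg hP z u).lt_or_eq with h | h
    · exact h
    · simp only [q, ← h, div_zero, mul_zero] at hq; exact absurd hq (lt_irrefl 0)
  have h1 : 0 < pXZU P x z u := by
    rcases (pXZU_nonneg hP x z u).lt_or_eq with h | h
    · exact h
    · simp only [q, ← h, zero_mul] at hq; exact absurd hq (lt_irrefl 0)
  have h2 : 0 < pYZU P y z u := by
    rcases (pYZU_nonneg hP y z u).lt_or_eq with h | h
    · exact h
    · simp only [q, ← h, zero_div, mul_zero] at hq; exact absurd hq (lt_irrefl 0)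
  exact ⟨h1, h2, hzu, lt_of_lt_of_le h1 (pXZU_le_pXZ hP x z u),
    lt_of_lt_of_le h1 (pXZU_le_pXU hP x z u), lt_of_lt_of_le h2 (pYZU_le_pYZ hP y z u),
    lt_of_lt_of_le h2 (pYZU_le_pYU hP y z u),
    lt_of_lt_of_le h1 ((pXZU_le_pXZ hP x z u).trans (pXZ_le_pX hP x z)),
    lt_of_lt_of_le h2 ((pYZU_le_pYZ hP y z u).trans (pYZ_le_pY hP y z)),
    lt_of_lt_of_le hzu (pZU_le_pZ hP z u), lt_of_lt_of_le hzu (pZU_le_pU hP z u)⟩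

include hP in
lemma bet_pos {x y z u} (hq : 0 < q P x y z u) : 0 < bet P x y z u := by
  obtain ⟨h1, h2, hzu, hxz, hxu, hyz, hyu, hx, hy, hz, hu⟩ := q_pos_marg hP hq
  exact div_pos (mul_pos (mul_pos (mul_pos hxz hxu) hyz) hyu)
    (mul_pos (mul_pos (mul_pos hx hy) hz) hu)

include hP in
lemma qlog (x y z u) :
    q P x y z u * Real.log (q P x y z u / bet P x y z u) =
      q P x y z u * Real.log (pX P x) + q P x y z u * Real.log (pY P y)
      + q P x y z u * Real.log (pZ P z) + q P x y z u * Real.log (pU P u)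
      + q P x y z u * Real.log (pXZU P x z u) + q P x y z u * Real.log (pYZU P y z u)
      - q P x y z u * Real.log (pXZ P x z) - q P x y z u * Real.log (pXU P x u)
      - q P x y z u * Real.log (pYZ P y z) - q P x y z u * Real.log (pYU P y u)
      - q P x y z u * Real.log (pZU P z u) := by
  rcases (q_nonneg hP x y z u).lt_or_eq with hq | hq
  · obtain ⟨h1, h2, hzu, hxz, hxu, hyz, hyu, hx, hy, hz, hu⟩ := q_pos_marg hP hq
    have hbet : 0 < bet P x y z u := bet_pos hP hq
    have hlq : Real.log (q P x y z u) =
        Real.log (pXZU P x z u) + Real.log (pYZU P y z u) - Real.log (pZU P z u) := by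
      rw [show q P x y z u = pXZU P x z u * (pYZU P y z u / pZU P z u) from rfl,
        Real.log_mul h1.ne' (div_pos h2 hzu).ne', Real.log_div h2.ne' hzu.ne']
      ring
    have hlb : Real.log (bet P x y z u) =
        Real.log (pXZ P x z) + Real.log (pXU P x u) + Real.log (pYZ P y z)
        + Real.log (pYU P y u) - Real.log (pX P x) - Real.log (pY P y)
        - Real.log (pZ P z) - Real.log (pU P u) := by
      rw [show bet P x y z u = pXZ P x z * pXU P x u * pYZ P y z * pYU P y u /
          (pX P x * pY P y * pZ P z * pU P u) from rfl,
        Real.log_div (mul_pos (mul_pos (mul_pos hxz hxu) hyz) hyu).ne'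
          (mul_pos (mul_pos (mul_pos hx hy) hz) hu).ne',
        Real.log_mul (mul_pos (mul_pos hxz hxu) hyz).ne' hyu.ne',
        Real.log_mul (mul_pos hxz hxu).ne' hyz.ne',
        Real.log_mul hxz.ne' hxu.ne',
        Real.log_mul (mul_pos (mul_pos hx hy) hz).ne' hu.ne',
        Real.log_mul (mul_pos hx hy).ne' hz.ne',
        Real.log_mul hx.ne' hy.ne']
      ring
    rw [Real.log_div hq.ne' hbet.ne', hlq, hlb]
    ring
  · rw [← hq]; ring

include hP in
lemma qbound (x y z u) :
    q P x y z u - bet P x y z u ≤ q P x y z u * Real.log (q P x y z u / bet P x y z u) := by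
  rcases (q_nonneg hP x y z u).lt_or_eq with hq | hq
  · have hbet : 0 < bet P x y z u := bet_pos hP hq
    have hl := Real.log_le_sub_one_of_pos (div_pos hbet hq)
    have hinv : Real.log (q P x y z u / bet P x y z u)
        = - Real.log (bet P x y z u / q P x y z u) := by
      rw [← Real.log_inv, inv_div]
    have hmul : q P x y z u * (bet P x y z u / q P x y z u) = bet P x y z u := by
      field_simp
    have h3 := mul_le_mul_of_nonneg_left hl hq.le
    rw [mul_sub, hmul, mul_one] at h3
    rw [hinv]
    linarith
  · rw [← hq]
    simp only [zero_mul, zero_sub, neg_nonpos]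
    linarith [bet_nonneg hP x y z u]

-- entropy-style grand sum identities
include hP in
lemma eX : (∑ x, ∑ y, ∑ z, ∑ u, q P x y z u * Real.log (pX P x))
    = ∑ x, pX P x * Real.log (pX P x) := by
  rw [helper1 hP (fun x _ _ => Real.log (pX P x))]; exact cX _
include hP in
lemma eY : (∑ x, ∑ y, ∑ z, ∑ u, q P x y z u * Real.log (pY P y))
    = ∑ y, pY P y * Real.log (pY P y) := by
  rw [helper2 hP (fun y _ _ => Real.log (pY P y))]; exact cY _
include hP in
lemma eZ : (∑ x, ∑ y, ∑ z, ∑ u, q P x y z u * Real.log (pZ P z))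
    = ∑ z, pZ P z * Real.log (pZ P z) := by
  rw [helper1 hP (fun _ z _ => Real.log (pZ P z))]; exact cZ _
include hP in
lemma eU : (∑ x, ∑ y, ∑ z, ∑ u, q P x y z u * Real.log (pU P u))
    = ∑ u, pU P u * Real.log (pU P u) := by
  rw [helper1 hP (fun _ _ u => Real.log (pU P u))]; exact cU _
include hP in
lemma eXZ : (∑ x, ∑ y, ∑ z, ∑ u, q P x y z u * Real.log (pXZ P x z))
    = ∑ x, ∑ z, pXZ P x z * Real.log (pXZ P x z) := by
  rw [helper1 hP (fun x z _ => Real.log (pXZ P x z))]; exact cXZ _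
include hP in
lemma eXU : (∑ x, ∑ y, ∑ z, ∑ u, q P x y z u * Real.log (pXU P x u))
    = ∑ x, ∑ u, pXU P x u * Real.log (pXU P x u) := by
  rw [helper1 hP (fun x _ u => Real.log (pXU P x u))]; exact cXU _
include hP in
lemma eZU : (∑ x, ∑ y, ∑ z, ∑ u, q P x y z u * Real.log (pZU P z u))
    = ∑ z, ∑ u, pZU P z u * Real.log (pZU P z u) := by
  rw [helper1 hP (fun _ z u => Real.log (pZU P z u))]; exact cZU _
include hP in
lemma eYZ : (∑ x, ∑ y, ∑ z, ∑ u, q P x y z u * Real.log (pYZ P y z))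
    = ∑ y, ∑ z, pYZ P y z * Real.log (pYZ P y z) := by
  rw [helper2 hP (fun y z _ => Real.log (pYZ P y z))]; exact cYZ _
include hP in
lemma eYU : (∑ x, ∑ y, ∑ z, ∑ u, q P x y z u * Real.log (pYU P y u))
    = ∑ y, ∑ u, pYU P y u * Real.log (pYU P y u) := by
  rw [helper2 hP (fun y _ u => Real.log (pYU P y u))]; exact cYU _
include hP in
lemma eXZU : (∑ x, ∑ y, ∑ z, ∑ u, q P x y z u * Real.log (pXZU P x z u))
    = ∑ x, ∑ z, ∑ u, pXZU P x z u * Real.log (pXZU P x z u) :=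
  helper1 hP (fun x z u => Real.log (pXZU P x z u))
include hP in
lemma eYZU : (∑ x, ∑ y, ∑ z, ∑ u, q P x y z u * Real.log (pYZU P y z u))
    = ∑ y, ∑ z, ∑ u, pYZU P y z u * Real.log (pYZU P y z u) :=
  helper2 hP (fun y z u => Real.log (pYZU P y z u))

include hP in
theorem core (htot : ∑ x, pX P x = 1)
    (hc1 : ∀ x y, pXY P x y = pX P x * pY P y)
    (hc2 : ∀ x y z, pXYZ P x y z * pZ P z = pXZ P x z * pYZ P y z) :
    0 ≤ -(∑ x, ∑ y, Real.negMulLog (pXY P x y))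
      + (∑ x, ∑ z, Real.negMulLog (pXZ P x z)) + (∑ x, ∑ u, Real.negMulLog (pXU P x u))
      + (∑ y, ∑ z, Real.negMulLog (pYZ P y z)) + (∑ y, ∑ u, Real.negMulLog (pYU P y u))
      + (∑ z, ∑ u, Real.negMulLog (pZU P z u))
      - (∑ z, Real.negMulLog (pZ P z)) - (∑ u, Real.negMulLog (pU P u))
      - (∑ x, ∑ z, ∑ u, Real.negMulLog (pXZU P x z u))
      - (∑ y, ∑ z, ∑ u, Real.negMulLog (pYZU P y z u)) := by
  have hxy_split : (∑ x, ∑ y, Real.negMulLog (pXY P x y))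
      = (∑ x, Real.negMulLog (pX P x)) + (∑ y, Real.negMulLog (pY P y)) := by
    simp only [hc1, Real.negMulLog_mul]
    rw [Finset.sum_congr rfl fun x _ => Finset.sum_add_distrib, Finset.sum_add_distrib]
    congr 1
    · refine Finset.sum_congr rfl fun x _ => ?_
      rw [← Finset.sum_mul, sumY_total htot, one_mul]
    · rw [Finset.sum_comm]
      refine Finset.sum_congr rfl fun y _ => ?_
      rw [← Finset.sum_mul, htot, one_mul]
  have hS : (∑ x, ∑ y, ∑ z, ∑ u, q P x y z u * Real.log (q P x y z u / bet P x y z u))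
      = (∑ x, pX P x * Real.log (pX P x)) + (∑ y, pY P y * Real.log (pY P y))
      + (∑ z, pZ P z * Real.log (pZ P z)) + (∑ u, pU P u * Real.log (pU P u))
      + (∑ x, ∑ z, ∑ u, pXZU P x z u * Real.log (pXZU P x z u))
      + (∑ y, ∑ z, ∑ u, pYZU P y z u * Real.log (pYZU P y z u))
      - (∑ x, ∑ z, pXZ P x z * Real.log (pXZ P x z))
      - (∑ x, ∑ u, pXU P x u * Real.log (pXU P x u))
      - (∑ y, ∑ z, pYZ P y z * Real.log (pYZ P y z))
      - (∑ y, ∑ u, pYU P y u * Real.log (pYU P y u))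
      - (∑ z, ∑ u, pZU P z u * Real.log (pZU P z u)) := by
    simp only [qlog hP]
    simp only [Finset.sum_add_distrib, Finset.sum_sub_distrib]
    rw [eX hP, eY hP, eZ hP, eU hP, eXZ hP, eXU hP, eYZ hP, eYU hP, eZU hP, eXZU hP, eYZU hP]
  have hSnonneg :
      0 ≤ ∑ x, ∑ y, ∑ z, ∑ u, q P x y z u * Real.log (q P x y z u / bet P x y z u) := by
    have hle : (∑ x, ∑ y, ∑ z, ∑ u, (q P x y z u - bet P x y z u))
        ≤ ∑ x, ∑ y, ∑ z, ∑ u, q P x y z u * Real.log (q P x y z u / bet P x y z u) := by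
      refine Finset.sum_le_sum fun x _ => Finset.sum_le_sum fun y _ =>
        Finset.sum_le_sum fun z _ => Finset.sum_le_sum fun u _ => qbound hP x y z u
    have hzero : (∑ x, ∑ y, ∑ z, ∑ u, (q P x y z u - bet P x y z u)) = 0 := by
      simp only [Finset.sum_sub_distrib]
      rw [sumq_total hP htot, sumbet hP htot hc1 hc2]
      norm_num
    linarith
  rw [hxy_split]
  simp only [Real.negMulLog, neg_mul, Finset.sum_neg_distrib]
  linarith [hS, hSnonneg]

end
end CI1

lemma CI1.measure_partition {Ω : Type*} [MeasurableSpace Ω] (μ : Measure Ω) [IsFiniteMeasure μ]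
    {T : Type*} [Fintype T] (F : Ω → T) (hF : ∀ t, MeasurableSet {ω | F ω = t})
    (s : Set Ω) (hs : MeasurableSet s) :
    (μ s).toReal = ∑ t : T, (μ (s ∩ {ω | F ω = t})).toReal := by
  classical
  have hU : s = ⋃ t : T, s ∩ {ω | F ω = t} := by
    ext ω
    simp only [Set.mem_iUnion, Set.mem_inter_iff, Set.mem_setOf_eq]
    exact ⟨fun h => ⟨F ω, h, rfl⟩, fun ⟨t, h, _⟩ => h⟩
  have hdisj : Pairwise (Function.onFun Disjoint fun t => s ∩ {ω | F ω = t}) := by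
    intro a b hab
    refine Set.disjoint_left.2 fun ω h1 h2 => hab ?_
    rw [← h1.2, ← h2.2]
  rw [show μ s = μ (⋃ t : T, s ∩ {ω | F ω = t}) from by rw [← hU]]
  rw [measure_iUnion hdisj fun t => hs.inter (hF t), tsum_fintype]
  exact ENNReal.toReal_sum fun t _ => measure_ne_top μ _

lemma CI1.fiber_pair {Ω A B : Type*} [MeasurableSpace Ω] {f : Ω → A} {g : Ω → B}
    (hf : ∀ a, MeasurableSet {ω | f ω = a}) (hg : ∀ b, MeasurableSet {ω | g ω = b}) :
    ∀ t : A × B, MeasurableSet {ω | (f ω, g ω) = t} := by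
  rintro ⟨a, b⟩
  have h : {ω | (f ω, g ω) = (a, b)} = {ω | f ω = a} ∩ {ω | g ω = b} := by
    ext ω
    simp [Prod.ext_iff]
  rw [h]
  exact (hf a).inter (hg b)


set_option maxHeartbeats 1000000 in
/-- Statement: the first conditional Ingleton inequality. -/
theorem conditional_ingleton_1cI
    {Ω : Type*} [MeasurableSpace Ω] (μ : Measure Ω) [IsProbabilityMeasure μ]
    {SX SY SZ SU : Type*}
    [Fintype SX] [Nonempty SX] [MeasurableSpace SX] [MeasurableSingletonClass SX]
    [Fintype SY] [Nonempty SY] [MeasurableSpace SY] [MeasurableSingletonClass SY]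
    [Fintype SZ] [Nonempty SZ] [MeasurableSpace SZ] [MeasurableSingletonClass SZ]
    [Fintype SU] [Nonempty SU] [MeasurableSpace SU] [MeasurableSingletonClass SU]
    (ξX : Ω → SX) (ξY : Ω → SY) (ξZ : Ω → SZ) (ξU : Ω → SU)
    (mX : Measurable ξX) (mY : Measurable ξY) (mZ : Measurable ξZ) (mU : Measurable ξU)
    (h1 : IndepRV μ ξX ξY) (h2 : CondIndepRV μ ξX ξY ξZ) :
    0 ≤ ingletonEnt μ ξX ξY ξZ ξU := by
  classical
  have hmX : ∀ a : SX, MeasurableSet {ω | ξX ω = a} := fun a => mX (measurableSet_singleton a)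
  have hmY : ∀ a : SY, MeasurableSet {ω | ξY ω = a} := fun a => mY (measurableSet_singleton a)
  have hmZ : ∀ a : SZ, MeasurableSet {ω | ξZ ω = a} := fun a => mZ (measurableSet_singleton a)
  have hmU : ∀ a : SU, MeasurableSet {ω | ξU ω = a} := fun a => mU (measurableSet_singleton a)
  set P : SX → SY → SZ → SU → ℝ :=
    fun x y z u => (μ {ω | ξX ω = x ∧ ξY ω = y ∧ ξZ ω = z ∧ ξU ω = u}).toReal with hPdef
  have hP : ∀ x y z u, 0 ≤ P x y z u := fun x y z u => ENNReal.toReal_nonneg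
  -- event lemmas, tuple shapes
  have evXZU : ∀ (x : SX) (z : SZ) (u : SU),
      (μ {ω | (ξX ω, ξZ ω, ξU ω) = (x, z, u)}).toReal = CI1.pXZU P x z u := by
    intro x z u
    rw [CI1.measure_partition μ ξY hmY _ (CI1.fiber_pair hmX (CI1.fiber_pair hmZ hmU) (x, z, u))]
    simp only [CI1.pXZU]
    refine Finset.sum_congr rfl fun y _ => ?_
    rw [show {ω | (ξX ω, ξZ ω, ξU ω) = (x, z, u)} ∩ {ω | ξY ω = y}
        = {ω | ξX ω = x ∧ ξY ω = y ∧ ξZ ω = z ∧ ξU ω = u} from by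
      ext ω; simp only [Set.mem_inter_iff, Set.mem_setOf_eq, Prod.mk.injEq]; tauto]
  have evYZU : ∀ (y : SY) (z : SZ) (u : SU),
      (μ {ω | (ξY ω, ξZ ω, ξU ω) = (y, z, u)}).toReal = CI1.pYZU P y z u := by
    intro y z u
    rw [CI1.measure_partition μ ξX hmX _ (CI1.fiber_pair hmY (CI1.fiber_pair hmZ hmU) (y, z, u))]
    simp only [CI1.pYZU]
    refine Finset.sum_congr rfl fun x _ => ?_
    rw [show {ω | (ξY ω, ξZ ω, ξU ω) = (y, z, u)} ∩ {ω | ξX ω = x}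
        = {ω | ξX ω = x ∧ ξY ω = y ∧ ξZ ω = z ∧ ξU ω = u} from by
      ext ω; simp only [Set.mem_inter_iff, Set.mem_setOf_eq, Prod.mk.injEq]; tauto]
  have evXY : ∀ (x : SX) (y : SY),
      (μ {ω | (ξX ω, ξY ω) = (x, y)}).toReal = CI1.pXY P x y := by
    intro x y
    rw [CI1.measure_partition μ (fun ω => (ξZ ω, ξU ω)) (CI1.fiber_pair hmZ hmU) _
      (CI1.fiber_pair hmX hmY (x, y))]
    simp only [CI1.pXY, CI1.pXYZ, Fintype.sum_prod_type]
    refine Finset.sum_congr rfl fun z _ => Finset.sum_congr rfl fun u _ => ?_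
    rw [show {ω | (ξX ω, ξY ω) = (x, y)} ∩ {ω | (ξZ ω, ξU ω) = (z, u)}
        = {ω | ξX ω = x ∧ ξY ω = y ∧ ξZ ω = z ∧ ξU ω = u} from by
      ext ω; simp only [Set.mem_inter_iff, Set.mem_setOf_eq, Prod.mk.injEq]; tauto]
  have evXZ : ∀ (x : SX) (z : SZ),
      (μ {ω | (ξX ω, ξZ ω) = (x, z)}).toReal = CI1.pXZ P x z := by
    intro x z
    rw [CI1.measure_partition μ (fun ω => (ξU ω, ξY ω)) (CI1.fiber_pair hmU hmY) _
      (CI1.fiber_pair hmX hmZ (x, z))]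
    simp only [CI1.pXZ, CI1.pXZU, Fintype.sum_prod_type]
    refine Finset.sum_congr rfl fun u _ => Finset.sum_congr rfl fun y _ => ?_
    rw [show {ω | (ξX ω, ξZ ω) = (x, z)} ∩ {ω | (ξU ω, ξY ω) = (u, y)}
        = {ω | ξX ω = x ∧ ξY ω = y ∧ ξZ ω = z ∧ ξU ω = u} from by
      ext ω; simp only [Set.mem_inter_iff, Set.mem_setOf_eq, Prod.mk.injEq]; tauto]
  have evXU : ∀ (x : SX) (u : SU),
      (μ {ω | (ξX ω, ξU ω) = (x, u)}).toReal = CI1.pXU P x u := by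
    intro x u
    rw [CI1.measure_partition μ (fun ω => (ξZ ω, ξY ω)) (CI1.fiber_pair hmZ hmY) _
      (CI1.fiber_pair hmX hmU (x, u))]
    simp only [CI1.pXU, CI1.pXZU, Fintype.sum_prod_type]
    refine Finset.sum_congr rfl fun z _ => Finset.sum_congr rfl fun y _ => ?_
    rw [show {ω | (ξX ω, ξU ω) = (x, u)} ∩ {ω | (ξZ ω, ξY ω) = (z, y)}
        = {ω | ξX ω = x ∧ ξY ω = y ∧ ξZ ω = z ∧ ξU ω = u} from by
      ext ω; simp only [Set.mem_inter_iff, Set.mem_setOf_eq, Prod.mk.injEq]; tauto]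
  have evYZ : ∀ (y : SY) (z : SZ),
      (μ {ω | (ξY ω, ξZ ω) = (y, z)}).toReal = CI1.pYZ P y z := by
    intro y z
    rw [CI1.measure_partition μ (fun ω => (ξU ω, ξX ω)) (CI1.fiber_pair hmU hmX) _
      (CI1.fiber_pair hmY hmZ (y, z))]
    simp only [CI1.pYZ, CI1.pYZU, Fintype.sum_prod_type]
    refine Finset.sum_congr rfl fun u _ => Finset.sum_congr rfl fun x _ => ?_
    rw [show {ω | (ξY ω, ξZ ω) = (y, z)} ∩ {ω | (ξU ω, ξX ω) = (u, x)}
        = {ω | ξX ω = x ∧ ξY ω = y ∧ ξZ ω = z ∧ ξU ω = u} from by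
      ext ω; simp only [Set.mem_inter_iff, Set.mem_setOf_eq, Prod.mk.injEq]; tauto]
  have evYU : ∀ (y : SY) (u : SU),
      (μ {ω | (ξY ω, ξU ω) = (y, u)}).toReal = CI1.pYU P y u := by
    intro y u
    rw [CI1.measure_partition μ (fun ω => (ξZ ω, ξX ω)) (CI1.fiber_pair hmZ hmX) _
      (CI1.fiber_pair hmY hmU (y, u))]
    simp only [CI1.pYU, CI1.pYZU, Fintype.sum_prod_type]
    refine Finset.sum_congr rfl fun z _ => Finset.sum_congr rfl fun x _ => ?_
    rw [show {ω | (ξY ω, ξU ω) = (y, u)} ∩ {ω | (ξZ ω, ξX ω) = (z, x)}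
        = {ω | ξX ω = x ∧ ξY ω = y ∧ ξZ ω = z ∧ ξU ω = u} from by
      ext ω; simp only [Set.mem_inter_iff, Set.mem_setOf_eq, Prod.mk.injEq]; tauto]
  have evZU : ∀ (z : SZ) (u : SU),
      (μ {ω | (ξZ ω, ξU ω) = (z, u)}).toReal = CI1.pZU P z u := by
    intro z u
    rw [CI1.measure_partition μ (fun ω => (ξX ω, ξY ω)) (CI1.fiber_pair hmX hmY) _
      (CI1.fiber_pair hmZ hmU (z, u))]
    simp only [CI1.pZU, CI1.pXZU, Fintype.sum_prod_type]
    refine Finset.sum_congr rfl fun x _ => Finset.sum_congr rfl fun y _ => ?_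
    rw [show {ω | (ξZ ω, ξU ω) = (z, u)} ∩ {ω | (ξX ω, ξY ω) = (x, y)}
        = {ω | ξX ω = x ∧ ξY ω = y ∧ ξZ ω = z ∧ ξU ω = u} from by
      ext ω; simp only [Set.mem_inter_iff, Set.mem_setOf_eq, Prod.mk.injEq]; tauto]
  -- singleton / conjunction shapes
  have evX : ∀ (x : SX), (μ {ω | ξX ω = x}).toReal = CI1.pX P x := by
    intro x
    rw [CI1.measure_partition μ (fun ω => (ξZ ω, ξU ω, ξY ω))
      (CI1.fiber_pair hmZ (CI1.fiber_pair hmU hmY)) _ (hmX x)]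
    simp only [CI1.pX, CI1.pXZ, CI1.pXZU, Fintype.sum_prod_type]
    refine Finset.sum_congr rfl fun z _ => Finset.sum_congr rfl fun u _ =>
      Finset.sum_congr rfl fun y _ => ?_
    rw [show {ω | ξX ω = x} ∩ {ω | (ξZ ω, ξU ω, ξY ω) = (z, u, y)}
        = {ω | ξX ω = x ∧ ξY ω = y ∧ ξZ ω = z ∧ ξU ω = u} from by
      ext ω; simp only [Set.mem_inter_iff, Set.mem_setOf_eq, Prod.mk.injEq]; tauto]
  have evY : ∀ (y : SY), (μ {ω | ξY ω = y}).toReal = CI1.pY P y := by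
    intro y
    rw [CI1.measure_partition μ (fun ω => (ξZ ω, ξU ω, ξX ω))
      (CI1.fiber_pair hmZ (CI1.fiber_pair hmU hmX)) _ (hmY y)]
    simp only [CI1.pY, CI1.pYZ, CI1.pYZU, Fintype.sum_prod_type]
    refine Finset.sum_congr rfl fun z _ => Finset.sum_congr rfl fun u _ =>
      Finset.sum_congr rfl fun x _ => ?_
    rw [show {ω | ξY ω = y} ∩ {ω | (ξZ ω, ξU ω, ξX ω) = (z, u, x)}
        = {ω | ξX ω = x ∧ ξY ω = y ∧ ξZ ω = z ∧ ξU ω = u} from by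
      ext ω; simp only [Set.mem_inter_iff, Set.mem_setOf_eq, Prod.mk.injEq]; tauto]
  have evZ : ∀ (z : SZ), (μ {ω | ξZ ω = z}).toReal = CI1.pZ P z := by
    intro z
    rw [CI1.measure_partition μ (fun ω => (ξU ω, ξX ω, ξY ω))
      (CI1.fiber_pair hmU (CI1.fiber_pair hmX hmY)) _ (hmZ z)]
    simp only [CI1.pZ, CI1.pZU, CI1.pXZU, Fintype.sum_prod_type]
    refine Finset.sum_congr rfl fun u _ => Finset.sum_congr rfl fun x _ =>
      Finset.sum_congr rfl fun y _ => ?_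
    rw [show {ω | ξZ ω = z} ∩ {ω | (ξU ω, ξX ω, ξY ω) = (u, x, y)}
        = {ω | ξX ω = x ∧ ξY ω = y ∧ ξZ ω = z ∧ ξU ω = u} from by
      ext ω; simp only [Set.mem_inter_iff, Set.mem_setOf_eq, Prod.mk.injEq]; tauto]
  have evU : ∀ (u : SU), (μ {ω | ξU ω = u}).toReal = CI1.pU P u := by
    intro u
    rw [CI1.measure_partition μ (fun ω => (ξZ ω, ξX ω, ξY ω))
      (CI1.fiber_pair hmZ (CI1.fiber_pair hmX hmY)) _ (hmU u)]
    simp only [CI1.pU, CI1.pZU, CI1.pXZU, Fintype.sum_prod_type]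
    refine Finset.sum_congr rfl fun z _ => Finset.sum_congr rfl fun x _ =>
      Finset.sum_congr rfl fun y _ => ?_
    rw [show {ω | ξU ω = u} ∩ {ω | (ξZ ω, ξX ω, ξY ω) = (z, x, y)}
        = {ω | ξX ω = x ∧ ξY ω = y ∧ ξZ ω = z ∧ ξU ω = u} from by
      ext ω; simp only [Set.mem_inter_iff, Set.mem_setOf_eq, Prod.mk.injEq]; tauto]
  have evXYand : ∀ (x : SX) (y : SY),
      (μ {ω | ξX ω = x ∧ ξY ω = y}).toReal = CI1.pXY P x y := by
    intro x y
    rw [CI1.measure_partition μ (fun ω => (ξZ ω, ξU ω)) (CI1.fiber_pair hmZ hmU) _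
      (show MeasurableSet {ω | ξX ω = x ∧ ξY ω = y} from (hmX x).inter (hmY y))]
    simp only [CI1.pXY, CI1.pXYZ, Fintype.sum_prod_type]
    refine Finset.sum_congr rfl fun z _ => Finset.sum_congr rfl fun u _ => ?_
    rw [show {ω | ξX ω = x ∧ ξY ω = y} ∩ {ω | (ξZ ω, ξU ω) = (z, u)}
        = {ω | ξX ω = x ∧ ξY ω = y ∧ ξZ ω = z ∧ ξU ω = u} from by
      ext ω; simp only [Set.mem_inter_iff, Set.mem_setOf_eq, Prod.mk.injEq]; tauto]
  have evXZand : ∀ (x : SX) (z : SZ),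
      (μ {ω | ξX ω = x ∧ ξZ ω = z}).toReal = CI1.pXZ P x z := by
    intro x z
    rw [CI1.measure_partition μ (fun ω => (ξU ω, ξY ω)) (CI1.fiber_pair hmU hmY) _
      (show MeasurableSet {ω | ξX ω = x ∧ ξZ ω = z} from (hmX x).inter (hmZ z))]
    simp only [CI1.pXZ, CI1.pXZU, Fintype.sum_prod_type]
    refine Finset.sum_congr rfl fun u _ => Finset.sum_congr rfl fun y _ => ?_
    rw [show {ω | ξX ω = x ∧ ξZ ω = z} ∩ {ω | (ξU ω, ξY ω) = (u, y)}
        = {ω | ξX ω = x ∧ ξY ω = y ∧ ξZ ω = z ∧ ξU ω = u} from by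
      ext ω; simp only [Set.mem_inter_iff, Set.mem_setOf_eq, Prod.mk.injEq]; tauto]
  have evYZand : ∀ (y : SY) (z : SZ),
      (μ {ω | ξY ω = y ∧ ξZ ω = z}).toReal = CI1.pYZ P y z := by
    intro y z
    rw [CI1.measure_partition μ (fun ω => (ξU ω, ξX ω)) (CI1.fiber_pair hmU hmX) _
      (show MeasurableSet {ω | ξY ω = y ∧ ξZ ω = z} from (hmY y).inter (hmZ z))]
    simp only [CI1.pYZ, CI1.pYZU, Fintype.sum_prod_type]
    refine Finset.sum_congr rfl fun u _ => Finset.sum_congr rfl fun x _ => ?_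
    rw [show {ω | ξY ω = y ∧ ξZ ω = z} ∩ {ω | (ξU ω, ξX ω) = (u, x)}
        = {ω | ξX ω = x ∧ ξY ω = y ∧ ξZ ω = z ∧ ξU ω = u} from by
      ext ω; simp only [Set.mem_inter_iff, Set.mem_setOf_eq, Prod.mk.injEq]; tauto]
  have evXYZand : ∀ (x : SX) (y : SY) (z : SZ),
      (μ {ω | ξX ω = x ∧ ξY ω = y ∧ ξZ ω = z}).toReal = CI1.pXYZ P x y z := by
    intro x y z
    rw [CI1.measure_partition μ ξU hmU _ (show MeasurableSet {ω | ξX ω = x ∧ ξY ω = y ∧ ξZ ω = z} from (hmX x).inter ((hmY y).inter (hmZ z)))]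
    simp only [CI1.pXYZ]
    refine Finset.sum_congr rfl fun u _ => ?_
    rw [show {ω | ξX ω = x ∧ ξY ω = y ∧ ξZ ω = z} ∩ {ω | ξU ω = u}
        = {ω | ξX ω = x ∧ ξY ω = y ∧ ξZ ω = z ∧ ξU ω = u} from by
      ext ω; simp only [Set.mem_inter_iff, Set.mem_setOf_eq]; tauto]
  -- total mass
  have htot : (∑ x, CI1.pX P x) = 1 := by
    have h := CI1.measure_partition μ (fun ω => (ξX ω, ξZ ω, ξU ω, ξY ω))
      (CI1.fiber_pair hmX (CI1.fiber_pair hmZ (CI1.fiber_pair hmU hmY)))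
      Set.univ MeasurableSet.univ
    rw [measure_univ, ENNReal.toReal_one] at h
    simp only [Set.univ_inter, Fintype.sum_prod_type] at h
    have hsum : (∑ x, CI1.pX P x)
        = ∑ x, ∑ z, ∑ u, ∑ y, (μ {ω | (ξX ω, ξZ ω, ξU ω, ξY ω) = (x, z, u, y)}).toReal := by
      rw [show (∑ x, CI1.pX P x) = ∑ x, ∑ z, ∑ u, ∑ y, P x y z u from rfl]
      refine Finset.sum_congr rfl fun x _ => Finset.sum_congr rfl fun z _ =>
        Finset.sum_congr rfl fun u _ => Finset.sum_congr rfl fun y _ => ?_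
      rw [show {ω | (ξX ω, ξZ ω, ξU ω, ξY ω) = (x, z, u, y)}
          = {ω | ξX ω = x ∧ ξY ω = y ∧ ξZ ω = z ∧ ξU ω = u} from by
        ext ω; simp only [Set.mem_setOf_eq, Prod.mk.injEq]; tauto]
    rw [hsum, ← h]
  -- translate the independence conditions
  have hc1 : ∀ x y, CI1.pXY P x y = CI1.pX P x * CI1.pY P y := by
    intro x y
    have h := h1 x y ()
    rw [show {ω | ξX ω = x ∧ ξY ω = y ∧ (fun _ : Ω => ()) ω = ()} = {ω | ξX ω = x ∧ ξY ω = y}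
        from by ext ω; simp,
      show {ω | (fun _ : Ω => ()) ω = ()} = (Set.univ : Set Ω) from by ext ω; simp,
      show {ω | ξX ω = x ∧ (fun _ : Ω => ()) ω = ()} = {ω | ξX ω = x} from by ext ω; simp,
      show {ω | ξY ω = y ∧ (fun _ : Ω => ()) ω = ()} = {ω | ξY ω = y} from by ext ω; simp,
      measure_univ, mul_one] at h
    have h' := congrArg ENNReal.toReal h
    rw [ENNReal.toReal_mul, evXYand x y, evX x, evY y] at h'
    exact h'
  have hc2 : ∀ x y z, CI1.pXYZ P x y z * CI1.pZ P z = CI1.pXZ P x z * CI1.pYZ P y z := by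
    intro x y z
    have h' := congrArg ENNReal.toReal (h2 x y z)
    rw [ENNReal.toReal_mul, ENNReal.toReal_mul, evXYZand x y z, evZ z, evXZand x z,
      evYZand y z] at h'
    exact h'
  -- conclude via the core inequality
  have hmain := CI1.core hP htot hc1 hc2
  simp only [ingletonEnt, entropyOf, probOf, Fintype.sum_prod_type]
  simp only [evXY, evXZ, evXU, evYZ, evYU, evZU, evZ, evU, evXZU, evYZU]
  exact hmain
end

section
/- Third conditional Ingleton inequality [3cI]: let ξ_X, ξ_Y, ξ_Z, ξ_U be discrete random variables with nonempty finite ranges on a common probability space, and let h be the entropy function assigning to each subset S of {X, Y, Z, U} the Shannon entropy of the joint distribution of (ξ_i)_{i∈S}. If ξ_X ⊥ ξ_Z | ξ_U and ξ_X ⊥ ξ_U | ξ_Z, then □h(X,Y) ≥ 0. -/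
open MeasureTheory

/-! Under `X ⊥ Z | U` and `X ⊥ U | Z`, the conditional law of `X` given `Z = z` coincides with
that given `U = u` whenever `P(Z = z, U = u) > 0`. Hence `W`, the conditional law of `X` given `Z`,
is a function of `Z` that is almost surely also a function of `U`, and it is a sufficient
statistic: `X ⊥ (Z, U) | W`. With such a common part the Ingleton inequality is a sum of Shannon
inequalities: `I(X;U|Z) ≥ 0`, `I(X;Z|U) ≥ 0`, `I(X;Y|W) ≥ 0`, `H(X,Y) ≤ H(X,Y,W)`,
`I(Z;U|Y,W) ≥ 0`, and the identity `I(X;Z,U|W) = 0`. -/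

open Real Finset Function

section ProbOf

variable {Ω A B C : Type*} [MeasurableSpace Ω] {μ : Measure Ω}

lemma probOf_nonneg (f : Ω → A) (a : A) : 0 ≤ probOf μ f a := ENNReal.toReal_nonneg

lemma probOf_congr {f : Ω → A} {g : Ω → B} {a : A} {b : B}
    (h : ∀ ω, f ω = a ↔ g ω = b) :
    probOf μ f a = probOf μ g b := by
  simp only [probOf, h]

lemma probOf_pair_swap (f : Ω → A) (g : Ω → B) (a : A) (b : B) :
    probOf μ (fun ω => (f ω, g ω)) (a, b) = probOf μ (fun ω => (g ω, f ω)) (b, a) :=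
  probOf_congr fun ω => by simp only [Prod.mk.injEq]; tauto

lemma probOf_triple_swap (f : Ω → A) (g : Ω → B) (k : Ω → C) (a : A) (b : B) (c : C) :
    probOf μ (fun ω => (f ω, g ω, k ω)) (a, b, c)
      = probOf μ (fun ω => (f ω, k ω, g ω)) (a, c, b) :=
  probOf_congr fun ω => by simp only [Prod.mk.injEq]; tauto

lemma probOf_eq_zero_of_ne {f : Ω → A} {a : A} (h : ∀ ω, f ω ≠ a) : probOf μ f a = 0 := by
  simp [probOf, h]

lemma probOf_congr_ae {f g : Ω → A} (h : f =ᵐ[μ] g) (a : A) :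
    probOf μ f a = probOf μ g a := by
  have hset : {ω | f ω = a} =ᵐ[μ] {ω | g ω = a} := h.fun_comp (· = a)
  rw [probOf, probOf, measure_congr hset]

variable [IsFiniteMeasure μ]

lemma probOf_le_probOf {f : Ω → A} {g : Ω → B} {a : A} {b : B}
    (h : ∀ ω, f ω = a → g ω = b) :
    probOf μ f a ≤ probOf μ g b :=
  ENNReal.toReal_mono (measure_ne_top _ _) (measure_mono h)

lemma probOf_eq_zero_of_imp {f : Ω → A} {g : Ω → B} {a : A} {b : B}
    (h : ∀ ω, f ω = a → g ω = b) (hb : probOf μ g b = 0) : probOf μ f a = 0 :=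
  le_antisymm (hb ▸ probOf_le_probOf h) (probOf_nonneg _ _)

lemma ae_probOf_pos [Countable A] (f : Ω → A) : ∀ᵐ ω ∂μ, 0 < probOf μ f (f ω) := by
  rw [ae_iff]
  refine measure_mono_null (t := ⋃ a : A, {ω | f ω = a ∧ probOf μ f a = 0}) ?_ ?_
  · intro ω hω
    exact Set.mem_iUnion.2 ⟨f ω, rfl, le_antisymm (not_lt.1 hω) (probOf_nonneg _ _)⟩
  · refine measure_iUnion_null fun a => ?_
    by_cases ha : probOf μ f a = 0
    · refine measure_mono_null (fun ω hω => hω.1) ?_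
      exact (ENNReal.toReal_eq_zero_iff _).1 ha |>.resolve_right (measure_ne_top _ _)
    · simp [ha]

variable [Fintype A] [MeasurableSpace A] [MeasurableSingletonClass A]

lemma probOf_comp_eq_sum [DecidableEq B] {ψ : Ω → A} (hψ : Measurable ψ) (pj : A → B)
    (b : B) :
    probOf μ (fun ω => pj (ψ ω)) b = ∑ a with pj a = b, probOf μ ψ a := by
  have hsum := sum_measure_preimage_singleton (μ := μ) {a | pj a = b}
    fun a _ => hψ (measurableSet_singleton a)
  have hset : ψ ⁻¹' ↑({a | pj a = b} : Finset A) = {ω | pj (ψ ω) = b} := by ext; simp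
  rw [probOf, ← hset, ← hsum, ENNReal.toReal_sum fun a _ => measure_ne_top μ _]
  rfl

lemma sum_probOf_pair [Fintype B] [MeasurableSpace B] [MeasurableSingletonClass B]
    {f : Ω → A} {k : Ω → B} (hf : Measurable f) (hk : Measurable k) (c : B) :
    ∑ a, probOf μ (fun ω => (f ω, k ω)) (a, c) = probOf μ k c := by
  classical
  calc ∑ a, probOf μ (fun ω => (f ω, k ω)) (a, c)
      = ∑ x : A × B with x.2 = c, probOf μ (fun ω => (f ω, k ω)) x := by
        rw [sum_filter, Fintype.sum_prod_type]
        simp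
    _ = probOf μ k c := (probOf_comp_eq_sum (hf.prodMk hk) Prod.snd c).symm

end ProbOf

section Entropy

variable {Ω A B : Type*} [MeasurableSpace Ω] {μ : Measure Ω} [Fintype A] [Fintype B]

lemma entropyOf_congr_ae {f g : Ω → A} (h : f =ᵐ[μ] g) : entropyOf μ f = entropyOf μ g := by
  simp only [entropyOf, probOf_congr_ae h]

variable [IsFiniteMeasure μ] [MeasurableSpace A] [MeasurableSingletonClass A]

lemma entropyOf_comp_eq_sum {ψ : Ω → A} (hψ : Measurable ψ) (pj : A → B) :
    entropyOf μ (fun ω => pj (ψ ω))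
      = ∑ a, -probOf μ ψ a * log (probOf μ (fun ω => pj (ψ ω)) (pj a)) := by
  classical
  rw [← Finset.sum_fiberwise univ pj]
  refine Finset.sum_congr rfl fun b _ => ?_
  rw [negMulLog, probOf_comp_eq_sum hψ pj b, ← Finset.sum_neg_distrib, Finset.sum_mul]
  refine Finset.sum_congr rfl fun a ha => ?_
  rw [(Finset.mem_filter.1 ha).2, probOf_comp_eq_sum hψ pj b]

lemma entropyOf_comp_le {ψ : Ω → A} (hψ : Measurable ψ) (pj : A → B) :
    entropyOf μ (fun ω => pj (ψ ω)) ≤ entropyOf μ ψ := by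
  rw [entropyOf_comp_eq_sum hψ]
  refine Finset.sum_le_sum fun a _ => ?_
  rcases (probOf_nonneg (μ := μ) ψ a).eq_or_lt with hp | hp
  · simp [← hp]
  · rw [negMulLog, neg_mul, neg_mul, neg_le_neg_iff]
    exact mul_le_mul_of_nonneg_left
      (log_le_log hp (probOf_le_probOf fun ω hω => by rw [hω])) hp.le

lemma entropyOf_eq_of_ae_comp [MeasurableSpace B] [MeasurableSingletonClass B]
    {f : Ω → A} {g : Ω → B} (hf : Measurable f) (hg : Measurable g)
    (e : B → A) (e' : A → B)
    (hfg : f =ᵐ[μ] fun ω => e (g ω)) (hgf : g =ᵐ[μ] fun ω => e' (f ω)) :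
    entropyOf μ f = entropyOf μ g :=
  le_antisymm ((entropyOf_congr_ae hfg).trans_le (entropyOf_comp_le hg e))
    ((entropyOf_congr_ae hgf).trans_le (entropyOf_comp_le hf e'))

end Entropy

section CondMutualInfo

variable {Ω A B C : Type*} [MeasurableSpace Ω] {μ : Measure Ω}
  [Fintype A] [Fintype B] [Fintype C]

noncomputable def condMutualInfo (μ : Measure Ω) (f : Ω → A) (g : Ω → B)
    (k : Ω → C) : ℝ :=
  entropyOf μ (fun ω => (f ω, k ω)) + entropyOf μ (fun ω => (g ω, k ω))
    - entropyOf μ (fun ω => (f ω, g ω, k ω)) - entropyOf μ k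

lemma sub_div_le_mul_log {p a b c : ℝ} (hp : 0 ≤ p) (ha : p ≤ a) (hb : p ≤ b)
    (hc : p ≤ c) :
    p - a * b / c ≤ p * (log p + log c - log a - log b) := by
  rcases hp.eq_or_lt with rfl | hp
  · have := div_nonneg (mul_nonneg ha hb) hc
    simp only [zero_mul, zero_sub]
    linarith
  have ha' := hp.trans_le ha
  have hb' := hp.trans_le hb
  have hc' := hp.trans_le hc
  have hlog : log (a * b / (p * c)) = log a + log b - log p - log c := by
    rw [log_div (by positivity) (by positivity), log_mul ha'.ne' hb'.ne', log_mul hp.ne' hc'.ne']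
    ring
  have key := mul_le_mul_of_nonneg_left
    (log_le_sub_one_of_pos (by positivity : 0 < a * b / (p * c))) hp.le
  have hfrac : p * (a * b / (p * c) - 1) = a * b / c - p := by field_simp
  rw [hlog, hfrac] at key
  linear_combination key

variable [IsFiniteMeasure μ]
  [MeasurableSpace A] [MeasurableSingletonClass A] [MeasurableSpace B] [MeasurableSingletonClass B]
  [MeasurableSpace C] [MeasurableSingletonClass C] {f : Ω → A} {g : Ω → B} {k : Ω → C}

lemma condMutualInfo_eq_sum (hf : Measurable f) (hg : Measurable g) (hk : Measurable k) :
    condMutualInfo μ f g k = ∑ x : A × B × C, probOf μ (fun ω => (f ω, g ω, k ω)) x *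
      (log (probOf μ (fun ω => (f ω, g ω, k ω)) x) + log (probOf μ k x.2.2)
        - log (probOf μ (fun ω => (f ω, k ω)) (x.1, x.2.2))
        - log (probOf μ (fun ω => (g ω, k ω)) x.2)) := by
  have hψ := hf.prodMk (hg.prodMk hk)
  have efk := entropyOf_comp_eq_sum (μ := μ) hψ fun x => (x.1, x.2.2)
  have egk := entropyOf_comp_eq_sum (μ := μ) hψ Prod.snd
  have ek := entropyOf_comp_eq_sum (μ := μ) hψ fun x => x.2.2
  simp only at efk egk ek
  rw [condMutualInfo, efk, egk, ek, entropyOf, ← sum_add_distrib, ← sum_sub_distrib,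
    ← sum_sub_distrib]
  refine sum_congr rfl fun x _ => ?_
  rw [negMulLog]
  ring

lemma condMutualInfo_nonneg (hf : Measurable f) (hg : Measurable g) (hk : Measurable k) :
    0 ≤ condMutualInfo μ f g k := by
  have hmass : ∑ x : A × B × C, probOf μ (fun ω => (f ω, k ω)) (x.1, x.2.2)
      * probOf μ (fun ω => (g ω, k ω)) x.2 / probOf μ k x.2.2
      ≤ ∑ x : A × B × C, probOf μ (fun ω => (f ω, g ω, k ω)) x := by
    rw [Fintype.sum_prod_type_right, Fintype.sum_prod_type_right
      fun x : A × B × C => probOf μ (fun ω => (f ω, g ω, k ω)) x]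
    refine Finset.sum_le_sum fun y _ => ?_
    dsimp only
    rw [← sum_div, ← sum_mul, sum_probOf_pair hf hk, sum_probOf_pair hf (hg.prodMk hk)]
    exact div_le_of_le_mul₀ (probOf_nonneg _ _) (probOf_nonneg _ _) (mul_comm _ _).le
  rw [condMutualInfo_eq_sum hf hg hk]
  refine (sub_nonneg.2 hmass).trans ?_
  rw [← sum_sub_distrib]
  refine Finset.sum_le_sum fun x _ => sub_div_le_mul_log (probOf_nonneg _ _) ?_ ?_ ?_
  all_goals exact probOf_le_probOf fun ω hω => by subst hω; rfl

lemma condMutualInfo_eq_zero (hf : Measurable f) (hg : Measurable g) (hk : Measurable k)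
    (hci : ∀ a b c, probOf μ (fun ω => (f ω, g ω, k ω)) (a, b, c) * probOf μ k c
      = probOf μ (fun ω => (f ω, k ω)) (a, c) * probOf μ (fun ω => (g ω, k ω)) (b, c)) :
    condMutualInfo μ f g k = 0 := by
  rw [condMutualInfo_eq_sum hf hg hk]
  refine sum_eq_zero fun ⟨a, b, c⟩ _ => ?_
  rcases (probOf_nonneg (μ := μ) (fun ω => (f ω, g ω, k ω)) (a, b, c)).eq_or_lt with hp | hp
  · simp [← hp]
  have hc : 0 < probOf μ k c := hp.trans_le (probOf_le_probOf fun ω hω => by simp_all)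
  have hac : 0 < probOf μ (fun ω => (f ω, k ω)) (a, c) :=
    hp.trans_le (probOf_le_probOf fun ω hω => by simp_all)
  have hbc : 0 < probOf μ (fun ω => (g ω, k ω)) (b, c) :=
    hp.trans_le (probOf_le_probOf fun ω hω => by simp_all)
  have hlog := congrArg log (hci a b c)
  rw [log_mul hp.ne' hc.ne', log_mul hac.ne' hbc.ne'] at hlog
  dsimp only
  linear_combination probOf μ (fun ω => (f ω, g ω, k ω)) (a, b, c) * hlog

end CondMutualInfo

section CondProbOf

variable {Ω A B C D : Type*} [MeasurableSpace Ω] {μ : Measure Ω}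
  {f : Ω → A} {g : Ω → B} {k : Ω → C}

noncomputable def condProbOf (μ : Measure Ω) (f : Ω → A) (k : Ω → C) (a : A)
    (c : C) : ℝ :=
  probOf μ (fun ω => (f ω, k ω)) (a, c) / probOf μ k c

lemma CondIndepRV.probOf_mul_probOf (h : CondIndepRV μ f g k) (a : A) (b : B) (c : C) :
    probOf μ (fun ω => (f ω, g ω, k ω)) (a, b, c) * probOf μ k c
      = probOf μ (fun ω => (f ω, k ω)) (a, c) * probOf μ (fun ω => (g ω, k ω)) (b, c) := by
  simp only [probOf, ← ENNReal.toReal_mul, Prod.mk.injEq, h a b c]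

variable [IsFiniteMeasure μ]

lemma CondIndepRV.probOf_eq_condProbOf_mul (h : CondIndepRV μ f g k) (a : A) (b : B) (c : C) :
    probOf μ (fun ω => (f ω, g ω, k ω)) (a, b, c)
      = condProbOf μ f k a c * probOf μ (fun ω => (g ω, k ω)) (b, c) := by
  rcases eq_or_ne (probOf μ k c) 0 with hc | hc
  · rw [probOf_eq_zero_of_imp (fun ω hω => by simp_all) hc,
      probOf_eq_zero_of_imp (fun ω hω => by simp_all) hc, mul_zero]
  · rw [condProbOf, div_mul_eq_mul_div, eq_div_iff hc, h.probOf_mul_probOf]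

lemma condProbOf_eq_of_condIndepRV (h₁ : CondIndepRV μ f g k) (h₂ : CondIndepRV μ f k g)
    {b : B} {c : C} (hbc : 0 < probOf μ (fun ω => (g ω, k ω)) (b, c)) (a : A) :
    condProbOf μ f k a c = condProbOf μ f g a b := by
  have e₁ := h₁.probOf_eq_condProbOf_mul a b c
  have e₂ := h₂.probOf_eq_condProbOf_mul a c b
  rw [← probOf_triple_swap, probOf_pair_swap k g] at e₂
  exact mul_right_cancel₀ hbc.ne' (e₁.symm.trans e₂)

variable [Fintype A] [Fintype C]
  [MeasurableSpace A] [MeasurableSingletonClass A] [MeasurableSpace C] [MeasurableSingletonClass C]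

lemma probOf_pair_comp_of_factor (hf : Measurable f) (hk : Measurable k) {r : C → D}
    {q : D → A → ℝ}
    (hq : ∀ a c, probOf μ (fun ω => (f ω, k ω)) (a, c) = q (r c) a * probOf μ k c)
    (a : A) (d : D) :
    probOf μ (fun ω => (f ω, r (k ω))) (a, d) = q d a * probOf μ (fun ω => r (k ω)) d := by
  classical
  calc probOf μ (fun ω => (f ω, r (k ω))) (a, d)
      = ∑ x : A × C with (x.1, r x.2) = (a, d), probOf μ (fun ω => (f ω, k ω)) x :=
        probOf_comp_eq_sum (hf.prodMk hk) (fun x => (x.1, r x.2)) (a, d)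
    _ = ∑ c with r c = d, q d a * probOf μ k c := by
        rw [sum_filter, sum_filter, Fintype.sum_prod_type_right]
        refine sum_congr rfl fun c _ => ?_
        by_cases h : r c = d <;> simp [h, hq]
    _ = q d a * probOf μ (fun ω => r (k ω)) d := by rw [← mul_sum, probOf_comp_eq_sum hk r d]

variable [Fintype D] [MeasurableSpace D] [MeasurableSingletonClass D]

lemma entropyOf_add_eq_of_factor (hf : Measurable f) (hk : Measurable k) {r : C → D}
    {q : D → A → ℝ}
    (hq : ∀ a c, probOf μ (fun ω => (f ω, k ω)) (a, c) = q (r c) a * probOf μ k c) :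
    entropyOf μ (fun ω => (f ω, k ω)) + entropyOf μ (fun ω => r (k ω))
      = entropyOf μ (fun ω => (f ω, r (k ω))) + entropyOf μ k := by
  have hw : Measurable fun ω => r (k ω) := (measurable_of_countable r).comp hk
  have hci : ∀ a c d, probOf μ (fun ω => (f ω, k ω, r (k ω))) (a, c, d)
      * probOf μ (fun ω => r (k ω)) d
      = probOf μ (fun ω => (f ω, r (k ω))) (a, d)
        * probOf μ (fun ω => (k ω, r (k ω))) (c, d) := by
    intro a c d
    by_cases hcd : r c = d
    · subst hcd
      have hfkw : probOf μ (fun ω => (f ω, k ω, r (k ω))) (a, c, r c)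
          = probOf μ (fun ω => (f ω, k ω)) (a, c) :=
        probOf_congr fun ω => by simp only [Prod.mk.injEq]; aesop
      have hkw : probOf μ (fun ω => (k ω, r (k ω))) (c, r c) = probOf μ k c :=
        probOf_congr fun ω => by simp only [Prod.mk.injEq]; aesop
      rw [hfkw, hkw, probOf_pair_comp_of_factor hf hk hq, hq]
      ring
    · rw [probOf_eq_zero_of_ne fun ω hω => hcd (by
          simp only [Prod.mk.injEq] at hω; obtain ⟨-, rfl, rfl⟩ := hω; rfl),
        probOf_eq_zero_of_ne (f := fun ω => (k ω, r (k ω))) fun ω hω => hcd (by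
          simp only [Prod.mk.injEq] at hω; obtain ⟨rfl, rfl⟩ := hω; rfl),
        zero_mul, mul_zero]
  have hI := condMutualInfo_eq_zero hf hk hw hci
  have hkw : entropyOf μ (fun ω => (k ω, r (k ω))) = entropyOf μ k :=
    entropyOf_eq_of_ae_comp (hk.prodMk hw) hk (fun c => (c, r c)) Prod.fst .rfl .rfl
  have hfkw :
      entropyOf μ (fun ω => (f ω, k ω, r (k ω))) = entropyOf μ (fun ω => (f ω, k ω)) :=
    entropyOf_eq_of_ae_comp (hf.prodMk (hk.prodMk hw)) (hf.prodMk hk) (fun x => (x.1, x.2, r x.2))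
      (fun x => (x.1, x.2.1)) .rfl .rfl
  rw [condMutualInfo, hkw, hfkw] at hI
  linarith

end CondProbOf

section Ingleton

variable {Ω : Type*} [MeasurableSpace Ω] {μ : Measure Ω} [IsFiniteMeasure μ]

lemma entropyOf_add_le_of_common {A B C D : Type*}
    [Fintype A] [MeasurableSpace A] [MeasurableSingletonClass A]
    [Fintype B] [MeasurableSpace B] [MeasurableSingletonClass B]
    [Fintype C] [MeasurableSpace C] [MeasurableSingletonClass C]
    [Fintype D] [MeasurableSpace D] [MeasurableSingletonClass D]
    {f : Ω → A} {g : Ω → B} {k : Ω → C} (hf : Measurable f) (hg : Measurable g)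
    (hk : Measurable k) {r : B → D} {s : C → D}
    (hrs : (fun ω => r (g ω)) =ᵐ[μ] fun ω => s (k ω)) :
    entropyOf μ (fun ω => (f ω, g ω, k ω)) + entropyOf μ (fun ω => (f ω, r (g ω)))
      ≤ entropyOf μ (fun ω => (f ω, g ω)) + entropyOf μ (fun ω => (f ω, k ω)) := by
  have hw : Measurable fun ω => r (g ω) := (measurable_of_countable r).comp hg
  have hI := condMutualInfo_nonneg (μ := μ) hg hk (hf.prodMk hw)
  have hgfw :
      entropyOf μ (fun ω => (g ω, f ω, r (g ω))) = entropyOf μ (fun ω => (f ω, g ω)) :=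
    entropyOf_eq_of_ae_comp (hg.prodMk (hf.prodMk hw)) (hf.prodMk hg)
      (fun x => (x.2, x.1, r x.2)) (fun x => (x.2.1, x.1)) .rfl .rfl
  have hkfw :
      entropyOf μ (fun ω => (k ω, f ω, r (g ω))) = entropyOf μ (fun ω => (f ω, k ω)) :=
    entropyOf_eq_of_ae_comp (hk.prodMk (hf.prodMk hw)) (hf.prodMk hk)
      (fun x => (x.2, x.1, s x.2)) (fun x => (x.2.1, x.1)) (hrs.mono fun ω h => by simp [h]) .rfl
  have hgkfw : entropyOf μ (fun ω => (g ω, k ω, f ω, r (g ω)))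
      = entropyOf μ (fun ω => (f ω, g ω, k ω)) :=
    entropyOf_eq_of_ae_comp (hg.prodMk (hk.prodMk (hf.prodMk hw))) (hf.prodMk (hg.prodMk hk))
      (fun x => (x.2.1, x.2.2, x.1, r x.2.1)) (fun x => (x.2.2.1, x.1, x.2.1)) .rfl .rfl
  rw [condMutualInfo, hgfw, hkfw, hgkfw] at hI
  linarith

theorem ingletonEnt_nonneg_of_common {SX SY SZ SU SW : Type*}
    [Fintype SX] [MeasurableSpace SX] [MeasurableSingletonClass SX]
    [Fintype SY] [MeasurableSpace SY] [MeasurableSingletonClass SY]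
    [Fintype SZ] [MeasurableSpace SZ] [MeasurableSingletonClass SZ]
    [Fintype SU] [MeasurableSpace SU] [MeasurableSingletonClass SU]
    [Fintype SW] [MeasurableSpace SW] [MeasurableSingletonClass SW]
    {ξX : Ω → SX} {ξY : Ω → SY} {ξZ : Ω → SZ} {ξU : Ω → SU}
    (mX : Measurable ξX) (mY : Measurable ξY) (mZ : Measurable ξZ) (mU : Measurable ξU)
    {r : SZ → SW} {s : SU → SW} (hrs : (fun ω => r (ξZ ω)) =ᵐ[μ] fun ω => s (ξU ω))
    (hX : entropyOf μ (fun ω => (ξX ω, ξZ ω, ξU ω)) + entropyOf μ (fun ω => r (ξZ ω))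
      = entropyOf μ (fun ω => (ξX ω, r (ξZ ω))) + entropyOf μ (fun ω => (ξZ ω, ξU ω))) :
    0 ≤ ingletonEnt μ ξX ξY ξZ ξU := by
  have mW : Measurable fun ω => r (ξZ ω) := (measurable_of_countable r).comp mZ
  have hXUZ := condMutualInfo_nonneg (μ := μ) mX mU mZ
  have hXZU := condMutualInfo_nonneg (μ := μ) mX mZ mU
  have hXYW := condMutualInfo_nonneg (μ := μ) mX mY mW
  have hXY : entropyOf μ (fun ω => (ξX ω, ξY ω))
      ≤ entropyOf μ (fun ω => (ξX ω, ξY ω, r (ξZ ω))) :=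
    entropyOf_comp_le (mX.prodMk (mY.prodMk mW)) fun x => (x.1, x.2.1)
  have hYZU := entropyOf_add_le_of_common mY mZ mU hrs
  have hUZ :
      entropyOf μ (fun ω => (ξU ω, ξZ ω)) = entropyOf μ (fun ω => (ξZ ω, ξU ω)) :=
    entropyOf_eq_of_ae_comp (mU.prodMk mZ) (mZ.prodMk mU) Prod.swap Prod.swap .rfl .rfl
  have hXUZ' : entropyOf μ (fun ω => (ξX ω, ξU ω, ξZ ω))
      = entropyOf μ (fun ω => (ξX ω, ξZ ω, ξU ω)) :=
    entropyOf_eq_of_ae_comp (mX.prodMk (mU.prodMk mZ)) (mX.prodMk (mZ.prodMk mU))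
      (fun x => (x.1, x.2.2, x.2.1)) (fun x => (x.1, x.2.2, x.2.1)) .rfl .rfl
  rw [condMutualInfo] at hXUZ hXZU hXYW
  rw [ingletonEnt]
  linarith

end Ingleton

theorem conditional_ingleton_3cI_general
    {Ω : Type*} [MeasurableSpace Ω] (μ : Measure Ω) [IsProbabilityMeasure μ]
    {SX SY SZ SU : Type*}
    [Fintype SX] [MeasurableSpace SX] [MeasurableSingletonClass SX]
    [Fintype SY] [MeasurableSpace SY] [MeasurableSingletonClass SY]
    [Fintype SZ] [Nonempty SZ] [MeasurableSpace SZ] [MeasurableSingletonClass SZ]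
    [Fintype SU] [MeasurableSpace SU] [MeasurableSingletonClass SU]
    (ξX : Ω → SX) (ξY : Ω → SY) (ξZ : Ω → SZ) (ξU : Ω → SU)
    (mX : Measurable ξX) (mY : Measurable ξY) (mZ : Measurable ξZ) (mU : Measurable ξU)
    (h1 : CondIndepRV μ ξX ξZ ξU) (h2 : CondIndepRV μ ξX ξU ξZ) :
    0 ≤ ingletonEnt μ ξX ξY ξZ ξU := by
  set c : SZ → SX → ℝ := fun z x => condProbOf μ ξX ξZ x z
  -- `r z` is a canonical point with the same conditional law as `z`, so `r ∘ ξZ` encodes `W`.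
  set r : SZ → SZ := fun z => invFun c (c z)
  have hr (z : SZ) : c (r z) = c z := invFun_eq ⟨z, rfl⟩
  refine ingletonEnt_nonneg_of_common (μ := μ) mX mY mZ mU (r := r)
    (s := fun u => invFun c fun x => condProbOf μ ξX ξU x u) ?_ ?_
  · filter_upwards [ae_probOf_pos (μ := μ) fun ω => (ξZ ω, ξU ω)] with ω hω
    exact congrArg (invFun c) (funext fun x => (condProbOf_eq_of_condIndepRV h1 h2 hω x).symm)
  · refine entropyOf_add_eq_of_factor mX (mZ.prodMk mU) (r := fun p => r p.1) (q := c)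
      fun x ⟨z, u⟩ => ?_
    rw [hr, probOf_triple_swap, h2.probOf_eq_condProbOf_mul, probOf_pair_swap]

/-- Statement: the third conditional Ingleton inequality. -/
theorem conditional_ingleton_3cI
    {Ω : Type*} [MeasurableSpace Ω] (μ : Measure Ω) [IsProbabilityMeasure μ]
    {SX SY SZ SU : Type*}
    [Fintype SX] [Nonempty SX] [MeasurableSpace SX] [MeasurableSingletonClass SX]
    [Fintype SY] [Nonempty SY] [MeasurableSpace SY] [MeasurableSingletonClass SY]
    [Fintype SZ] [Nonempty SZ] [MeasurableSpace SZ] [MeasurableSingletonClass SZ]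
    [Fintype SU] [Nonempty SU] [MeasurableSpace SU] [MeasurableSingletonClass SU]
    (ξX : Ω → SX) (ξY : Ω → SY) (ξZ : Ω → SZ) (ξU : Ω → SU)
    (mX : Measurable ξX) (mY : Measurable ξY) (mZ : Measurable ξZ) (mU : Measurable ξU)
    (h1 : CondIndepRV μ ξX ξZ ξU) (h2 : CondIndepRV μ ξX ξU ξZ) :
    0 ≤ ingletonEnt μ ξX ξY ξZ ξU :=
  conditional_ingleton_3cI_general μ ξX ξY ξZ ξU mX mY mZ mU h1 h2
end

section
/- Fourth conditional Ingleton inequality [4cI]: let ξ_X, ξ_Y, ξ_Z, ξ_U be discrete random variables with nonempty finite ranges on a common probability space, and let h be the entropy function assigning to each subset S of {X, Y, Z, U} the Shannon entropy of the joint distribution of (ξ_i)_{i∈S}. If ξ_X ⊥ ξ_Z | ξ_U and ξ_Z ⊥ ξ_U | ξ_X, then □h(X,Y) ≥ 0. -/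
/-!
In terms of information quantities, `□h(X,Y) = I(Z;U|X) + I(Z;U|Y) + I(X;Y) - I(Z;U)`, so it
suffices to show `I(Z;U) ≤ I(X;Y) + I(Z;U|Y)`.

Let `W` be the conditional law of `ξ_Z` given `ξ_U`, read as a random variable. On every atom of
positive probability, `ξ_X ⊥ ξ_Z | ξ_U` gives `P(Z | X, U) = P(Z | U)` and `ξ_Z ⊥ ξ_U | ξ_X` gives
`P(Z | X, U) = P(Z | X)`; hence `W` is almost surely a function of `ξ_X` as well as of `ξ_U`.
Being a sufficient statistic, `W` satisfies `ξ_Z ⊥ ξ_U | W`, so `I(Z;U) = I(Z;W)`, and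
`I(Z;W) ≤ I(W;Y) + I(Z;W|Y) ≤ I(X;Y) + I(Z;U|Y)` by the chain rule and data processing.

Information quantities are taken with respect to the weights of the joint law on the finite
product of the four ranges, which turns all of this into finite sums.
-/

open MeasureTheory

namespace DiscreteEntropy

open Finset Real
open scoped Classical

variable {α β γ δ ε κ : Type*} [Fintype α] {w : α → ℝ}

noncomputable def mass (w : α → ℝ) (f : α → β) (b : β) : ℝ :=
  ∑ a, if f a = b then w a else 0

lemma mass_nonneg (hw : ∀ a, 0 ≤ w a) (f : α → β) (b : β) : 0 ≤ mass w f b :=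
  sum_nonneg fun a _ => by split_ifs <;> simp [hw a]

lemma mass_congr {f : α → β} {g : α → γ} {b : β} {c : γ} (h : ∀ a, f a = b ↔ g a = c) :
    mass w f b = mass w g c :=
  sum_congr rfl fun a _ => if_congr (h a) rfl rfl

lemma mass_eq_zero {f : α → β} {b : β} (h : ∀ a, f a ≠ b) : mass w f b = 0 :=
  sum_eq_zero fun a _ => if_neg (h a)

lemma mass_mono (hw : ∀ a, 0 ≤ w a) {f : α → β} {g : α → γ} {b : β} {c : γ}
    (h : ∀ a, f a = b → g a = c) : mass w f b ≤ mass w g c :=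
  sum_le_sum fun a _ => by
    by_cases hf : f a = b
    · simp [hf, h a hf]
    · split_ifs <;> simp [hw a]

lemma le_mass (hw : ∀ a, 0 ≤ w a) (f : α → β) (a : α) : w a ≤ mass w f (f a) := by
  simpa [mass] using single_le_sum (f := fun a' => if f a' = f a then w a' else 0)
    (fun a' _ => by split_ifs <;> simp [hw a']) (mem_univ a)

lemma mass_pos (hw : ∀ a, 0 ≤ w a) (f : α → β) {a : α} (ha : w a ≠ 0) : 0 < mass w f (f a) :=
  (lt_of_le_of_ne (hw a) (Ne.symm ha)).trans_le (le_mass hw f a)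

lemma sum_mul_comp [Fintype β] (f : α → β) (Φ : β → ℝ) :
    ∑ a, w a * Φ (f a) = ∑ b, mass w f b * Φ b := by
  simp only [mass, sum_mul, ite_mul, zero_mul]
  rw [sum_comm]
  simp [sum_ite_eq]

lemma sum_mass [Fintype β] (f : α → β) : ∑ b, mass w f b = ∑ a, w a := by
  simpa using (sum_mul_comp (w := w) f fun _ => 1).symm

lemma mass_comp [Fintype β] (g : β → γ) (f : α → β) (c : γ) :
    mass w (fun a => g (f a)) c = ∑ b, if g b = c then mass w f b else 0 := by
  simpa [mass] using sum_mul_comp (w := w) f fun b => if g b = c then (1 : ℝ) else 0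

lemma sum_mass_pair [Fintype β] (f : α → β) (g : α → γ) (c : γ) :
    ∑ b, mass w (fun a => (f a, g a)) (b, c) = mass w g c := by
  simp only [mass]
  rw [sum_comm]
  refine sum_congr rfl fun a _ => ?_
  by_cases h : g a = c <;> simp [h, Prod.ext_iff]

def CondIndep (w : α → ℝ) (f : α → β) (g : α → γ) (k : α → δ) : Prop :=
  ∀ b c d, mass w (fun a => (f a, g a, k a)) (b, c, d) * mass w k d =
    mass w (fun a => (f a, k a)) (b, d) * mass w (fun a => (g a, k a)) (c, d)

/-- Junk value: `0` for every `b` when `k = d` has weight zero. -/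
noncomputable def condDist (w : α → ℝ) (f : α → β) (k : α → δ) (d : δ) (b : β) : ℝ :=
  mass w (fun a => (f a, k a)) (b, d) / mass w k d

lemma mass_pair_eq_condDist_mul (hw : ∀ a, 0 ≤ w a) (f : α → β) (k : α → δ) (b : β) (d : δ) :
    mass w (fun a => (f a, k a)) (b, d) = condDist w f k d b * mass w k d := by
  rcases (mass_nonneg hw k d).eq_or_lt with h | h
  · rw [← h, mul_zero]
    exact le_antisymm (h ▸ mass_mono hw fun a ha => congrArg Prod.snd ha) (mass_nonneg hw _ _)
  · exact (div_mul_cancel₀ _ h.ne').symm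

lemma condDist_pair_comm (f : α → β) (g : α → γ) (k : α → δ) (c : γ) (d : δ) :
    condDist w f (fun a => (g a, k a)) (c, d) = condDist w f (fun a => (k a, g a)) (d, c) := by
  funext b
  rw [condDist, condDist,
    mass_congr (f := fun a => (f a, g a, k a)) (g := fun a => (f a, k a, g a)) (c := (b, d, c))
      fun a => by simp only [Prod.mk.injEq]; tauto,
    mass_congr (f := fun a => (g a, k a)) (g := fun a => (k a, g a)) (c := (d, c))
      fun a => by simp only [Prod.mk.injEq]; tauto]

lemma CondIndep.symm {f : α → β} {g : α → γ} {k : α → δ} (h : CondIndep w f g k) :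
    CondIndep w g f k := fun b c d => by
  rw [mass_congr (g := fun a => (f a, g a, k a)) (c := (c, b, d)) fun a => by
    simp only [Prod.mk.injEq]; tauto, h, mul_comm]

lemma CondIndep.condDist_eq (hw : ∀ a, 0 ≤ w a) {f : α → β} {g : α → γ} {k : α → δ}
    (h : CondIndep w f g k) {c : γ} {d : δ} (hcd : mass w (fun a => (g a, k a)) (c, d) ≠ 0) :
    condDist w f (fun a => (g a, k a)) (c, d) = condDist w f k d := by
  have hd : mass w k d ≠ 0 := (((mass_nonneg hw _ _).lt_of_ne hcd.symm).trans_le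
    (mass_mono hw fun a ha => congrArg Prod.snd ha)).ne'
  funext b
  rw [condDist, condDist, div_eq_div_iff hcd hd]
  exact h b c d

lemma condIndep_comp_of_condDist [Fintype β] [Fintype δ] (hw : ∀ a, 0 ≤ w a) (f : α → β)
    (k : α → δ) (g : δ → κ)
    (hg : ∀ d d', g d = g d' → condDist w f k d = condDist w f k d') :
    CondIndep w f k fun a => g (k a) := by
  intro b d e
  by_cases hde : g d = e
  · subst hde
    have hfkW : mass w (fun a => (f a, k a, g (k a))) (b, d, g d) =
        mass w (fun a => (f a, k a)) (b, d) := mass_congr fun a => by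
      simp only [Prod.mk.injEq]
      exact ⟨fun h => ⟨h.1, h.2.1⟩, fun h => ⟨h.1, h.2, by rw [h.2]⟩⟩
    have hkW : mass w (fun a => (k a, g (k a))) (d, g d) = mass w k d := mass_congr fun a => by
      simp only [Prod.mk.injEq]
      exact ⟨fun h => h.1, fun h => ⟨h, by rw [h]⟩⟩
    have hfW : mass w (fun a => (f a, g (k a))) (b, g d) =
        condDist w f k d b * mass w (fun a => g (k a)) (g d) := by
      rw [mass_comp (fun p : β × δ => (p.1, g p.2)) (fun a => (f a, k a)), mass_comp g k, mul_sum,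
        Fintype.sum_prod_type]
      simp only [Prod.mk.injEq, ite_and]
      rw [sum_comm]
      simp only [sum_ite_eq', mem_univ, if_true]
      refine sum_congr rfl fun d' _ => ?_
      split_ifs with hd'
      · rw [mass_pair_eq_condDist_mul hw, hg _ _ hd']
      · rw [mul_zero]
    rw [hfkW, hkW, hfW, mass_pair_eq_condDist_mul hw f k b d]
    ring
  · have hne : ∀ a, k a = d → g (k a) ≠ e := fun a ha => by rwa [ha]
    rw [mass_eq_zero (f := fun a => (f a, k a, g (k a))) fun a ha => by
        simp only [Prod.mk.injEq] at ha; exact hne a ha.2.1 ha.2.2,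
      mass_eq_zero (f := fun a => (k a, g (k a))) fun a ha => by
        simp only [Prod.mk.injEq] at ha; exact hne a ha.1 ha.2]
    ring

lemma condDist_eq_of_condIndep (hw : ∀ a, 0 ≤ w a) {x : α → β} {z : α → γ} {u : α → δ}
    (hxz : CondIndep w x z u) (hzu : CondIndep w z u x) {a : α} (ha : w a ≠ 0) :
    condDist w z u (u a) = condDist w z x (x a) :=
  calc condDist w z u (u a) = condDist w z (fun a => (x a, u a)) (x a, u a) :=
        (hxz.symm.condDist_eq hw (mass_pos hw _ ha).ne').symm
    _ = condDist w z (fun a => (u a, x a)) (u a, x a) := condDist_pair_comm z x u _ _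
    _ = condDist w z x (x a) := hzu.condDist_eq hw (mass_pos hw _ ha).ne'

section Entropy

variable [Fintype β] [Fintype γ] [Fintype δ] [Fintype ε] [Fintype κ]

noncomputable def entropy (w : α → ℝ) (f : α → β) : ℝ :=
  ∑ b, negMulLog (mass w f b)

lemma entropy_eq_sum (f : α → β) : entropy w f = -∑ a, w a * log (mass w f (f a)) := by
  rw [sum_mul_comp f fun b => log (mass w f b), entropy, ← sum_neg_distrib]
  simp [negMulLog]

lemma entropy_congr {f : α → β} {g : α → γ}
    (h : ∀ a a', w a ≠ 0 → w a' ≠ 0 → (f a = f a' ↔ g a = g a')) :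
    entropy w f = entropy w g := by
  rw [entropy_eq_sum, entropy_eq_sum]
  congr 1
  refine sum_congr rfl fun a _ => ?_
  by_cases ha : w a = 0
  · simp [ha]
  refine congrArg (fun m => w a * log m) (sum_congr rfl fun a' _ => ?_)
  by_cases ha' : w a' = 0
  · simp [ha']
  exact if_congr (h a' a ha' ha) rfl rfl

noncomputable def mutualInfo (w : α → ℝ) (f : α → β) (g : α → γ) : ℝ :=
  entropy w f + entropy w g - entropy w (fun a => (f a, g a))

noncomputable def condMutualInfo (w : α → ℝ) (f : α → β) (g : α → γ) (k : α → δ) : ℝ :=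
  entropy w (fun a => (f a, k a)) + entropy w (fun a => (g a, k a))
    - entropy w (fun a => (f a, g a, k a)) - entropy w k

def Determines (w : α → ℝ) (f : α → β) (g : α → γ) : Prop :=
  ∀ a a', w a ≠ 0 → w a' ≠ 0 → f a = f a' → g a = g a'

lemma entropy_pair_comm (f : α → β) (g : α → γ) :
    entropy w (fun a => (f a, g a)) = entropy w (fun a => (g a, f a)) :=
  entropy_congr fun _ _ _ _ => by simp only [Prod.mk.injEq, and_comm]

lemma mutualInfo_comm (f : α → β) (g : α → γ) : mutualInfo w f g = mutualInfo w g f := by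
  rw [mutualInfo, mutualInfo, entropy_pair_comm f g]
  ring

lemma condMutualInfo_comm (f : α → β) (g : α → γ) (k : α → δ) :
    condMutualInfo w f g k = condMutualInfo w g f k := by
  rw [condMutualInfo, condMutualInfo, entropy_congr (f := fun a => (f a, g a, k a))
    (g := fun a => (g a, f a, k a))
    fun _ _ _ _ => by simp only [Prod.mk.injEq]; tauto]
  ring

lemma condMutualInfo_eq_sum (f : α → β) (g : α → γ) (k : α → δ) :
    condMutualInfo w f g k = ∑ a, w a *
      (log (mass w (fun a => (f a, g a, k a)) (f a, g a, k a)) + log (mass w k (k a))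
        - log (mass w (fun a => (f a, k a)) (f a, k a))
        - log (mass w (fun a => (g a, k a)) (g a, k a))) := by
  simp only [condMutualInfo, entropy_eq_sum, mul_add, mul_sub, sum_add_distrib, sum_sub_distrib]
  ring

lemma condMutualInfo_eq_zero_of_condIndep (hw : ∀ a, 0 ≤ w a) {f : α → β} {g : α → γ}
    {k : α → δ} (h : CondIndep w f g k) : condMutualInfo w f g k = 0 := by
  rw [condMutualInfo_eq_sum]
  refine sum_eq_zero fun a _ => ?_
  by_cases ha : w a = 0
  · simp [ha]
  have hpt := h (f a) (g a) (k a)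
  rw [← log_mul (mass_pos hw _ ha).ne' (mass_pos hw _ ha).ne', hpt,
    log_mul (mass_pos hw _ ha).ne' (mass_pos hw _ ha).ne']
  ring

lemma one_sub_div_le_log {p q r s : ℝ} (hp : 0 < p) (hq : 0 < q) (hr : 0 < r) (hs : 0 < s) :
    1 - r * s / (p * q) ≤ log p + log q - log r - log s := by
  have := one_sub_inv_le_log_of_pos (show 0 < p * q / (r * s) by positivity)
  rwa [inv_div, log_div (by positivity) (by positivity), log_mul hp.ne' hq.ne',
    log_mul hr.ne' hs.ne', ← sub_sub] at this

lemma mul_div_mul_le {x y z : ℝ} (hx : 0 ≤ x) (hyz : 0 ≤ y / z) : x * (y / (x * z)) ≤ y / z := by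
  rcases hx.eq_or_lt with rfl | hx
  · simpa using hyz
  · rw [mul_comm x z, ← div_div, mul_div_cancel₀ _ hx.ne']

/-- Grouped by the atoms `t = (b, c, d)` of `(f, g, k)`, the left side is at most
`Σ_t p(b,d) p(c,d) / p(d) = Σ_d p(d)`. -/
lemma sum_mul_mass_ratio_le (hw : ∀ a, 0 ≤ w a) (f : α → β) (g : α → γ) (k : α → δ) :
    ∑ a, w a * (mass w (fun a => (f a, k a)) (f a, k a) * mass w (fun a => (g a, k a)) (g a, k a)
      / (mass w (fun a => (f a, g a, k a)) (f a, g a, k a) * mass w k (k a))) ≤ ∑ a, w a := by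
  rw [sum_mul_comp (fun a => (f a, g a, k a)) fun t =>
    mass w (fun a => (f a, k a)) (t.1, t.2.2) * mass w (fun a => (g a, k a)) t.2
      / (mass w (fun a => (f a, g a, k a)) t * mass w k t.2.2)]
  calc _ ≤ ∑ t : β × γ × δ, mass w (fun a => (f a, k a)) (t.1, t.2.2)
          * mass w (fun a => (g a, k a)) t.2 / mass w k t.2.2 :=
        sum_le_sum fun t _ => mul_div_mul_le (mass_nonneg hw _ _) (div_nonneg
          (mul_nonneg (mass_nonneg hw _ _) (mass_nonneg hw _ _)) (mass_nonneg hw _ _))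
    _ = ∑ p : γ × δ, mass w k p.2 * mass w (fun a => (g a, k a)) p / mass w k p.2 := by
        rw [Fintype.sum_prod_type, sum_comm]
        simp only [← sum_div, ← sum_mul, sum_mass_pair]
    _ ≤ ∑ p : γ × δ, mass w (fun a => (g a, k a)) p := by
        refine sum_le_sum fun p _ => ?_
        rcases (mass_nonneg hw k p.2).eq_or_lt with h | h
        · simp [← h, mass_nonneg hw]
        · rw [mul_div_cancel_left₀ _ h.ne']
    _ = ∑ a, w a := sum_mass _

lemma condMutualInfo_nonneg (hw : ∀ a, 0 ≤ w a) (f : α → β) (g : α → γ) (k : α → δ) :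
    0 ≤ condMutualInfo w f g k := by
  rw [condMutualInfo_eq_sum]
  calc 0 ≤ ∑ a, w a - ∑ a, w a * (mass w (fun a => (f a, k a)) (f a, k a)
          * mass w (fun a => (g a, k a)) (g a, k a)
          / (mass w (fun a => (f a, g a, k a)) (f a, g a, k a) * mass w k (k a))) :=
        sub_nonneg.2 (sum_mul_mass_ratio_le hw f g k)
    _ ≤ _ := by
        rw [← sum_sub_distrib]
        refine sum_le_sum fun a _ => ?_
        by_cases ha : w a = 0
        · simp [ha]
        rw [← mul_one_sub]
        exact mul_le_mul_of_nonneg_left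
          (one_sub_div_le_log (mass_pos hw _ ha) (mass_pos hw _ ha) (mass_pos hw _ ha)
            (mass_pos hw _ ha)) (hw a)

lemma condMutualInfo_eq_zero_of_determines {g : α → γ} {k : α → δ} (h : Determines w k g)
    (f : α → β) : condMutualInfo w f g k = 0 := by
  rw [condMutualInfo,
    entropy_congr (f := fun a => (g a, k a)) (g := k) fun a a' ha ha' => by
      have := h a a' ha ha'; simp only [Prod.mk.injEq]; tauto,
    entropy_congr (f := fun a => (f a, g a, k a)) (g := fun a => (f a, k a)) fun a a' ha ha' => by
      have := h a a' ha ha'; simp only [Prod.mk.injEq]; tauto]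
  ring

lemma mutualInfo_le_of_determines (hw : ∀ a, 0 ≤ w a) {f : α → β} {g : α → γ}
    (h : Determines w f g) (e : α → ε) : mutualInfo w e g ≤ mutualInfo w e f := by
  have := condMutualInfo_nonneg hw e f g
  rw [condMutualInfo,
    entropy_congr (f := fun a => (f a, g a)) (g := f) fun a a' ha ha' => by
      have := h a a' ha ha'; simp only [Prod.mk.injEq]; tauto,
    entropy_congr (f := fun a => (e a, f a, g a)) (g := fun a => (e a, f a)) fun a a' ha ha' => by
      have := h a a' ha ha'; simp only [Prod.mk.injEq]; tauto] at this
  rw [mutualInfo, mutualInfo]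
  linarith

lemma condMutualInfo_le_of_determines (hw : ∀ a, 0 ≤ w a) {f : α → β} {g : α → γ}
    (h : Determines w f g) (e : α → ε) (k : α → δ) :
    condMutualInfo w e g k ≤ condMutualInfo w e f k := by
  have := condMutualInfo_nonneg hw e f fun a => (g a, k a)
  rw [condMutualInfo,
    entropy_congr (f := fun a => (f a, g a, k a)) (g := fun a => (f a, k a)) fun a a' ha ha' => by
      have := h a a' ha ha'; simp only [Prod.mk.injEq]; tauto,
    entropy_congr (f := fun a => (e a, f a, g a, k a)) (g := fun a => (e a, f a, k a))
      fun a a' ha ha' => by have := h a a' ha ha'; simp only [Prod.mk.injEq]; tauto] at this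
  rw [condMutualInfo, condMutualInfo]
  linarith

lemma mutualInfo_eq_of_condMutualInfo_eq_zero {f : α → β} {g : α → γ} {k : α → δ}
    (h : Determines w g k) (h0 : condMutualInfo w f g k = 0) :
    mutualInfo w f g = mutualInfo w f k := by
  rw [condMutualInfo,
    entropy_congr (f := fun a => (g a, k a)) (g := g) fun a a' ha ha' => by
      have := h a a' ha ha'; simp only [Prod.mk.injEq]; tauto,
    entropy_congr (f := fun a => (f a, g a, k a)) (g := fun a => (f a, g a)) fun a a' ha ha' => by
      have := h a a' ha ha'; simp only [Prod.mk.injEq]; tauto] at h0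
  rw [mutualInfo, mutualInfo]
  linarith

lemma mutualInfo_le_add_condMutualInfo (hw : ∀ a, 0 ≤ w a) (f : α → β) (g : α → γ)
    (k : α → δ) : mutualInfo w f g ≤ mutualInfo w f k + condMutualInfo w f g k := by
  have := condMutualInfo_nonneg hw f k g
  rw [condMutualInfo, entropy_pair_comm k g,
    entropy_congr (f := fun a => (f a, k a, g a)) (g := fun a => (f a, g a, k a))
      fun _ _ _ _ => by simp only [Prod.mk.injEq]; tauto] at this
  rw [mutualInfo, mutualInfo, condMutualInfo]
  linarith

lemma mutualInfo_le_of_common_part (hw : ∀ a, 0 ≤ w a) {x : α → β} {u : α → δ} {z : α → γ}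
    {W : α → κ} (hxW : Determines w x W) (huW : Determines w u W)
    (h0 : condMutualInfo w z u W = 0) (y : α → ε) :
    mutualInfo w z u ≤ mutualInfo w x y + condMutualInfo w z u y :=
  calc mutualInfo w z u = mutualInfo w W z := by
        rw [mutualInfo_eq_of_condMutualInfo_eq_zero huW h0, mutualInfo_comm]
    _ ≤ mutualInfo w W y + condMutualInfo w W z y := mutualInfo_le_add_condMutualInfo hw W z y
    _ = mutualInfo w y W + condMutualInfo w z W y := by
        rw [mutualInfo_comm, condMutualInfo_comm]
    _ ≤ mutualInfo w y x + condMutualInfo w z u y :=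
        add_le_add (mutualInfo_le_of_determines hw hxW y)
          (condMutualInfo_le_of_determines hw huW z y)
    _ = mutualInfo w x y + condMutualInfo w z u y := by rw [mutualInfo_comm]

/-- The common part is the conditional law of `z` given `u`, which the two independences make
almost surely a function of `x` too. -/
lemma mutualInfo_le_of_condIndep (hw : ∀ a, 0 ≤ w a) {x : α → β} {z : α → γ} {u : α → δ}
    (hxz : CondIndep w x z u) (hzu : CondIndep w z u x) (y : α → ε) :
    mutualInfo w z u ≤ mutualInfo w x y + condMutualInfo w z u y := by
  let ψ := condDist w z u
  let _ : Fintype (Set.range ψ) := Fintype.ofFinite _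
  refine mutualInfo_le_of_common_part hw (W := fun a => Set.rangeFactorization ψ (u a))
    (fun a a' ha ha' hx => Subtype.ext ?_)
    (fun _ _ _ _ hu => congrArg (Set.rangeFactorization ψ) hu) ?_ y
  · exact (condDist_eq_of_condIndep hw hxz hzu ha).trans
      ((congrArg _ hx).trans (condDist_eq_of_condIndep hw hxz hzu ha').symm)
  · exact condMutualInfo_eq_zero_of_condIndep hw
      (condIndep_comp_of_condDist hw z u _ fun _ _ h => congrArg Subtype.val h)

lemma ingleton_expression_eq (x : α → β) (y : α → γ) (z : α → δ) (u : α → ε) :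
    - entropy w (fun a => (x a, y a)) + entropy w (fun a => (x a, z a))
      + entropy w (fun a => (x a, u a)) + entropy w (fun a => (y a, z a))
      + entropy w (fun a => (y a, u a)) + entropy w (fun a => (z a, u a))
      - entropy w z - entropy w u
      - entropy w (fun a => (x a, z a, u a)) - entropy w (fun a => (y a, z a, u a)) =
    condMutualInfo w z u x + condMutualInfo w z u y + mutualInfo w x y - mutualInfo w z u := by
  simp only [condMutualInfo, mutualInfo]
  rw [entropy_pair_comm z x, entropy_pair_comm u x, entropy_pair_comm z y, entropy_pair_comm u y,
    entropy_congr (f := fun a => (z a, u a, x a)) (g := fun a => (x a, z a, u a))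
      fun _ _ _ _ => by simp only [Prod.mk.injEq]; tauto,
    entropy_congr (f := fun a => (z a, u a, y a)) (g := fun a => (y a, z a, u a))
      fun _ _ _ _ => by simp only [Prod.mk.injEq]; tauto]
  ring

end Entropy

section Measure

variable {Ω : Type*} [MeasurableSpace Ω] {μ : Measure Ω} [IsFiniteMeasure μ]
  [MeasurableSpace α] [MeasurableSingletonClass α] {ξ : Ω → α}

lemma mass_probOf (hξ : Measurable ξ) (F : α → β) (b : β) :
    mass (probOf μ ξ) F b = probOf μ (fun ω => F (ξ ω)) b := by
  have hset : {ω | F (ξ ω) = b} = ξ ⁻¹' ↑(univ.filter fun a => F a = b) := by ext; simp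
  rw [mass, ← sum_filter, probOf, hset, ← measureReal_def,
    ← sum_measureReal_preimage_singleton _ fun a _ => hξ (measurableSet_singleton a)]
  rfl

lemma entropy_probOf [Fintype β] (hξ : Measurable ξ) (F : α → β) :
    entropy (probOf μ ξ) F = entropyOf μ (fun ω => F (ξ ω)) := by
  simp only [entropy, entropyOf, mass_probOf hξ]

lemma condIndep_of_condIndepRV (hξ : Measurable ξ) (F : α → β) (G : α → γ) (K : α → δ)
    (h : CondIndepRV μ (fun ω => F (ξ ω)) (fun ω => G (ξ ω)) (fun ω => K (ξ ω))) :
    CondIndep (probOf μ ξ) F G K := fun b c d => by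
  simpa only [mass_probOf hξ, probOf, Prod.mk.injEq, ENNReal.toReal_mul]
    using congrArg ENNReal.toReal (h b c d)

lemma ingletonEnt_comp [Fintype β] [Fintype γ] [Fintype δ] [Fintype ε] (hξ : Measurable ξ)
    (x : α → β) (y : α → γ) (z : α → δ) (u : α → ε) :
    ingletonEnt μ (fun ω => x (ξ ω)) (fun ω => y (ξ ω)) (fun ω => z (ξ ω)) (fun ω => u (ξ ω)) =
      condMutualInfo (probOf μ ξ) z u x + condMutualInfo (probOf μ ξ) z u y
        + mutualInfo (probOf μ ξ) x y - mutualInfo (probOf μ ξ) z u := by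
  rw [← ingleton_expression_eq]
  simp only [ingletonEnt, entropy_probOf hξ]

end Measure

end DiscreteEntropy

theorem conditional_ingleton_4cI_general
    {Ω : Type*} [MeasurableSpace Ω] (μ : Measure Ω) [IsProbabilityMeasure μ]
    {SX SY SZ SU : Type*}
    [Fintype SX] [MeasurableSpace SX] [MeasurableSingletonClass SX]
    [Fintype SY] [MeasurableSpace SY] [MeasurableSingletonClass SY]
    [Fintype SZ] [MeasurableSpace SZ] [MeasurableSingletonClass SZ]
    [Fintype SU] [MeasurableSpace SU] [MeasurableSingletonClass SU]
    (ξX : Ω → SX) (ξY : Ω → SY) (ξZ : Ω → SZ) (ξU : Ω → SU)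
    (mX : Measurable ξX) (mY : Measurable ξY) (mZ : Measurable ξZ) (mU : Measurable ξU)
    (h1 : CondIndepRV μ ξX ξZ ξU) (h2 : CondIndepRV μ ξZ ξU ξX) :
    0 ≤ ingletonEnt μ ξX ξY ξZ ξU := by
  let X : SX × SY × SZ × SU → SX := (·.1)
  let Y : SX × SY × SZ × SU → SY := (·.2.1)
  let Z : SX × SY × SZ × SU → SZ := (·.2.2.1)
  let U : SX × SY × SZ × SU → SU := (·.2.2.2)
  have hξ : Measurable fun ω => (ξX ω, ξY ω, ξZ ω, ξU ω) := mX.prodMk (mY.prodMk (mZ.prodMk mU))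
  have hw : ∀ a, 0 ≤ probOf μ (fun ω => (ξX ω, ξY ω, ξZ ω, ξU ω)) a :=
    fun _ => ENNReal.toReal_nonneg
  rw [show ingletonEnt μ ξX ξY ξZ ξU = _ from DiscreteEntropy.ingletonEnt_comp hξ X Y Z U]
  have hZUX := DiscreteEntropy.condMutualInfo_nonneg hw Z U X
  have hZUY := DiscreteEntropy.mutualInfo_le_of_condIndep hw
    (DiscreteEntropy.condIndep_of_condIndepRV hξ X Z U h1)
    (DiscreteEntropy.condIndep_of_condIndepRV hξ Z U X h2) Y
  linarith

/-- Statement: the fourth conditional Ingleton inequality. -/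
theorem conditional_ingleton_4cI
    {Ω : Type*} [MeasurableSpace Ω] (μ : Measure Ω) [IsProbabilityMeasure μ]
    {SX SY SZ SU : Type*}
    [Fintype SX] [Nonempty SX] [MeasurableSpace SX] [MeasurableSingletonClass SX]
    [Fintype SY] [Nonempty SY] [MeasurableSpace SY] [MeasurableSingletonClass SY]
    [Fintype SZ] [Nonempty SZ] [MeasurableSpace SZ] [MeasurableSingletonClass SZ]
    [Fintype SU] [Nonempty SU] [MeasurableSpace SU] [MeasurableSingletonClass SU]
    (ξX : Ω → SX) (ξY : Ω → SY) (ξZ : Ω → SZ) (ξU : Ω → SU)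
    (mX : Measurable ξX) (mY : Measurable ξY) (mZ : Measurable ξZ) (mU : Measurable ξU)
    (h1 : CondIndepRV μ ξX ξZ ξU) (h2 : CondIndepRV μ ξZ ξU ξX) :
    0 ≤ ingletonEnt μ ξX ξY ξZ ξU :=
  conditional_ingleton_4cI_general μ ξX ξY ξZ ξU mX mY mZ mU h1 h2
end

section
/- Fifth (new) conditional Ingleton inequality [5cI]: let ξ_X, ξ_Y, ξ_Z, ξ_U be discrete random variables with nonempty finite ranges on a common probability space, and let h be the entropy function assigning to each subset S of {X, Y, Z, U} the Shannon entropy of the joint distribution of (ξ_i)_{i∈S}. If ξ_X ⊥ ξ_Z | ξ_U and ξ_Y ⊥ ξ_Z | ξ_U, then □h(X,Y) ≥ 0. -/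
open MeasureTheory

/-!
Let `q` be the law of `((X, Y), Z, U)` modified so that `Z ⊥ (X, Y) | U`, keeping the `(X, Y, U)`
and `(Z, U)` marginals: `q(x, y, z, u) = p(x, y, u) p(z, u) / p(u)`. Since `X ⊥ Z | U` and
`Y ⊥ Z | U` already hold, `q` also keeps the `(X, Z)` and `(Y, Z)` marginals. By these two
independences the Ingleton expression equals `H(X,Z) + H(Y,Z) - H(Z) - H(X,Y) - H(Z | U)`, which
only involves marginals shared by `q`; evaluated in `q` it is
`I(X; Y | Z) + H(Z | X, Y) - H(Z | X, Y, U) = I(X; Y | Z) + I(Z; U | X, Y) ≥ 0`.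
-/

open Real

namespace FiniteEntropy

open scoped Classical

variable {T V W : Type*} [Fintype T]

noncomputable def marginal (p : T → ℝ) (f : T → V) (v : V) : ℝ :=
  ∑ t with f t = v, p t

noncomputable def entropy [Fintype V] (p : T → ℝ) (f : T → V) : ℝ :=
  ∑ v, negMulLog (marginal p f v)

variable {p : T → ℝ}

lemma marginal_nonneg (hp : 0 ≤ p) (f : T → V) : 0 ≤ marginal p f :=
  fun _ => Finset.sum_nonneg fun t _ => hp t

lemma le_marginal (hp : 0 ≤ p) (f : T → V) (t : T) : p t ≤ marginal p f (f t) :=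
  Finset.single_le_sum (fun t _ => hp t) (by simp)

lemma marginal_pos (hp : 0 ≤ p) (f : T → V) {t : T} (ht : 0 < p t) : 0 < marginal p f (f t) :=
  ht.trans_le (le_marginal hp f t)

lemma sum_marginal [Fintype V] (p : T → ℝ) (f : T → V) : ∑ v, marginal p f v = ∑ t, p t :=
  Finset.sum_fiberwise _ f p

@[simp]
lemma marginal_id (p : T → ℝ) : marginal p id = p := by
  ext t; simp [marginal, Finset.sum_filter]

lemma marginal_marginal [Fintype V] (p : T → ℝ) (f : T → V) (g : V → W) :
    marginal (marginal p f) g = marginal p (g ∘ f) := by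
  ext w
  simp only [marginal, Function.comp_apply]
  rw [← Finset.sum_fiberwise_of_maps_to (s := {t | g (f t) = w}) (t := {v | g v = w}) (g := f)
    (fun t ht => by simpa using ht)]
  refine Finset.sum_congr rfl fun v hv => Finset.sum_congr ?_ fun _ _ => rfl
  ext t
  simp only [Finset.mem_filter, Finset.mem_univ, true_and] at hv ⊢
  constructor
  · rintro rfl; exact ⟨hv, rfl⟩
  · exact fun h => h.2

lemma entropy_marginal [Fintype V] [Fintype W] (p : T → ℝ) (f : T → V) (g : V → W) :
    entropy (marginal p f) g = entropy p (g ∘ f) := by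
  rw [entropy, marginal_marginal, entropy]

lemma marginal_apply_of_injective (p : T → ℝ) {f : T → V} (hf : f.Injective) (t : T) :
    marginal p f (f t) = p t := by
  rw [marginal, Finset.sum_eq_single_of_mem t (by simp)]
  intro t' ht' hne
  exact absurd (hf (Finset.mem_filter.1 ht').2) hne

lemma marginal_eq_zero_of_notMem_range (p : T → ℝ) {f : T → V} {v : V}
    (hv : v ∉ Set.range f) : marginal p f v = 0 :=
  Finset.sum_eq_zero fun t ht => absurd ⟨t, (Finset.mem_filter.1 ht).2⟩ hv

lemma entropy_of_injective [Fintype V] (p : T → ℝ) {f : T → V} (hf : f.Injective) :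
    entropy p f = entropy p id :=
  (Fintype.sum_of_injective f hf _ _
    (fun v hv => by rw [marginal_eq_zero_of_notMem_range p hv, negMulLog_zero])
    (fun t => by rw [marginal_id, marginal_apply_of_injective p hf])).symm

lemma entropy_comp_of_injective [Fintype V] [Fintype W] (p : T → ℝ) (f : T → V) {g : V → W}
    (hg : g.Injective) : entropy p (g ∘ f) = entropy p f := by
  rw [← entropy_marginal, entropy_of_injective _ hg, entropy_marginal, Function.id_comp]

lemma entropy_eq_neg_sum_mul_log [Fintype V] (p : T → ℝ) (f : T → V) :
    entropy p f = -∑ t, p t * log (marginal p f (f t)) := by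
  rw [← Finset.sum_fiberwise Finset.univ f, entropy, ← Finset.sum_neg_distrib]
  refine Finset.sum_congr rfl fun v _ => ?_
  rw [Finset.sum_congr rfl fun t ht => by rw [(Finset.mem_filter.1 ht).2], ← Finset.sum_mul,
    negMulLog, neg_mul]
  rfl

lemma marginal_le_marginal_comp [Fintype V] (hp : 0 ≤ p) (f : T → V) (g : V → W) (v : V) :
    marginal p f v ≤ marginal p (g ∘ f) (g v) :=
  marginal_marginal p f g ▸ le_marginal (marginal_nonneg hp f) g v

lemma entropy_comp_eq_of_marginal_eq [Fintype V] [Fintype W] {q : T → ℝ} {f : T → V}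
    (h : marginal p f = marginal q f) (g : V → W) :
    entropy p (g ∘ f) = entropy q (g ∘ f) := by
  rw [← entropy_marginal, h, entropy_marginal]

lemma marginal_mul_const (p : T → ℝ) (f : T → V) (K : ℝ) (v : V) :
    marginal (fun t => p t * K) f v = marginal p f v * K :=
  (Finset.sum_mul _ _ _).symm

lemma sub_le_mul_log_div {x y : ℝ} (hx : 0 ≤ x) (hy : 0 ≤ y) (hxy : 0 < x → 0 < y) :
    x - y ≤ x * log (x / y) := by
  rcases hx.eq_or_lt with rfl | hx
  · simpa using hy
  · have h := mul_le_mul_of_nonneg_left (one_sub_inv_le_log_of_pos (div_pos hx (hxy hx))) hx.le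
    rwa [inv_div, mul_sub, mul_one, mul_div_cancel₀ _ hx.ne'] at h

lemma sum_mul_log_div_nonneg {q : T → ℝ} (hp : 0 ≤ p) (hq : 0 ≤ q)
    (hpq : ∀ t, 0 < p t → 0 < q t) (hsum : ∑ t, q t ≤ ∑ t, p t) :
    0 ≤ ∑ t, p t * log (p t / q t) :=
  calc 0 ≤ ∑ t, (p t - q t) := by rw [Finset.sum_sub_distrib]; linarith
    _ ≤ _ := Finset.sum_le_sum fun t _ => sub_le_mul_log_div (hp t) (hq t) (hpq t)

section Product

variable {A D A' D' : Type*} [Fintype A] [Fintype D]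

lemma marginal_snd_apply (q : A × D → ℝ) (d : D) :
    marginal q Prod.snd d = ∑ a, q (a, d) := by
  simp [marginal, Finset.sum_filter, Fintype.sum_prod_type]

lemma marginal_map_fst_apply (q : A × D → ℝ) (φ : A → A') (a' : A') (d : D) :
    marginal q (fun t => (φ t.1, t.2)) (a', d) = marginal (fun a => q (a, d)) φ a' := by
  simp [marginal, Finset.sum_filter, Fintype.sum_prod_type, Prod.ext_iff, ite_and]

lemma marginal_map_snd_apply (q : A × D → ℝ) (ψ : D → D') (a : A) (d' : D') :
    marginal q (fun t => (t.1, ψ t.2)) (a, d') = marginal (fun d => q (a, d)) ψ d' := by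
  simp [marginal, Finset.sum_filter, Fintype.sum_prod_type, Prod.ext_iff, ite_and]

end Product

section Coupling

variable {A B C A' : Type*} [Fintype A] [Fintype B] [Fintype C] {s : A × B × C → ℝ}

/-- `s(a, c) s(b, c) / s(c)`: the law with the same `(A, C)` and `(B, C)` marginals as `s` under
which `A ⊥ B | C`. Where `s(c) = 0`, division by zero gives the correct value `0`. -/
noncomputable def condIndepCoupling (s : A × B × C → ℝ) (t : A × B × C) : ℝ :=
  marginal s (fun t => (t.1, t.2.2)) (t.1, t.2.2) * marginal s Prod.snd t.2 /
    marginal s (fun t => t.2.2) t.2.2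

def IsCondIndep (s : A × B × C → ℝ) : Prop :=
  ∀ t, s t * marginal s (fun t => t.2.2) t.2.2 =
    marginal s (fun t => (t.1, t.2.2)) (t.1, t.2.2) * marginal s Prod.snd t.2

lemma condIndepCoupling_nonneg (hs : 0 ≤ s) : 0 ≤ condIndepCoupling s := fun _ =>
  div_nonneg (mul_nonneg (marginal_nonneg hs _ _) (marginal_nonneg hs _ _))
    (marginal_nonneg hs _ _)

lemma condIndepCoupling_pos (hs : 0 ≤ s) {t : A × B × C} (ht : 0 < s t) :
    0 < condIndepCoupling s t :=
  div_pos (mul_pos (marginal_pos hs _ ht) (marginal_pos hs _ ht)) (marginal_pos hs _ ht)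

lemma condIndepCoupling_mul_marginal (hs : 0 ≤ s) (t : A × B × C) :
    condIndepCoupling s t * marginal s (fun t => t.2.2) t.2.2 =
      marginal s (fun t => (t.1, t.2.2)) (t.1, t.2.2) * marginal s Prod.snd t.2 := by
  by_cases hC : marginal s (fun t => t.2.2) t.2.2 = 0
  · have hBC : marginal s Prod.snd t.2 = 0 :=
      le_antisymm (hC ▸ marginal_le_marginal_comp hs _ Prod.snd t.2) (marginal_nonneg hs _ _)
    rw [hC, hBC, mul_zero, mul_zero]
  · exact div_mul_cancel₀ _ hC

lemma IsCondIndep.condIndepCoupling_eq (hs : 0 ≤ s) (h : IsCondIndep s) :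
    condIndepCoupling s = s := by
  ext t
  by_cases hC : marginal s (fun t => t.2.2) t.2.2 = 0
  · have hst : s t = 0 := le_antisymm (hC ▸ le_marginal hs _ t) (hs t)
    rw [hst, condIndepCoupling, hC, div_zero]
  · exact mul_right_cancel₀ hC ((condIndepCoupling_mul_marginal hs t).trans (h t).symm)

lemma marginal_condIndepCoupling_fst_snd_snd (hs : 0 ≤ s) :
    marginal (condIndepCoupling s) (fun t => (t.1, t.2.2)) =
      marginal s (fun t => (t.1, t.2.2)) := by
  ext ⟨a, c⟩
  rw [marginal_map_snd_apply, marginal_snd_apply]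
  simp only [condIndepCoupling]
  rw [← Finset.sum_div, ← Finset.mul_sum, ← marginal_snd_apply, marginal_marginal]
  by_cases hC : marginal s (fun t => t.2.2) c = 0
  · have hAC : marginal s (fun t => (t.1, t.2.2)) (a, c) = 0 :=
      le_antisymm (hC ▸ marginal_le_marginal_comp hs _ Prod.snd (a, c)) (marginal_nonneg hs _ _)
    rw [hAC, zero_mul, zero_div]
  · exact mul_div_cancel_right₀ _ hC

lemma marginal_condIndepCoupling_snd (hs : 0 ≤ s) :
    marginal (condIndepCoupling s) Prod.snd = marginal s Prod.snd := by
  ext ⟨b, c⟩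
  rw [marginal_snd_apply]
  simp only [condIndepCoupling]
  rw [← Finset.sum_div, ← Finset.sum_mul, ← marginal_snd_apply, marginal_marginal]
  by_cases hC : marginal s (fun t => t.2.2) c = 0
  · have hBC : marginal s Prod.snd (b, c) = 0 :=
      le_antisymm (hC ▸ marginal_le_marginal_comp hs _ Prod.snd (b, c)) (marginal_nonneg hs _ _)
    rw [hBC, mul_zero, zero_div]
  · exact mul_div_cancel_left₀ _ hC

lemma marginal_condIndepCoupling_snd_snd (hs : 0 ≤ s) :
    marginal (condIndepCoupling s) (fun t => t.2.2) = marginal s (fun t => t.2.2) := by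
  rw [show (fun t : A × B × C => t.2.2) = Prod.snd ∘ Prod.snd from rfl, ← marginal_marginal,
    marginal_condIndepCoupling_snd hs, marginal_marginal]

lemma isCondIndep_condIndepCoupling (hs : 0 ≤ s) : IsCondIndep (condIndepCoupling s) := by
  intro t
  rw [marginal_condIndepCoupling_fst_snd_snd hs, marginal_condIndepCoupling_snd hs,
    marginal_condIndepCoupling_snd_snd hs, condIndepCoupling_mul_marginal hs]

lemma marginal_condIndepCoupling_map_fst (φ : A → A') [Fintype A'] :
    marginal (condIndepCoupling s) (fun t => (φ t.1, t.2)) =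
      condIndepCoupling (marginal s (fun t => (φ t.1, t.2))) := by
  ext ⟨a', b, c⟩
  have hAC : marginal s ((fun t => (t.1, t.2.2)) ∘ fun t => (φ t.1, t.2)) (a', c) =
      marginal (fun a => marginal s (fun t => (t.1, t.2.2)) (a, c)) φ a' := by
    rw [← marginal_map_fst_apply, marginal_marginal]
    rfl
  simp only [marginal_map_fst_apply, condIndepCoupling, marginal_marginal, hAC, mul_div_assoc,
    marginal_mul_const]
  rfl

lemma marginal_condIndepCoupling_of_isCondIndep (hs : 0 ≤ s) (φ : A → A') [Fintype A']
    (h : IsCondIndep (marginal s (fun t => (φ t.1, t.2)))) :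
    marginal (condIndepCoupling s) (fun t => (φ t.1, t.2)) =
      marginal s (fun t => (φ t.1, t.2)) := by
  rw [marginal_condIndepCoupling_map_fst, h.condIndepCoupling_eq (marginal_nonneg hs _)]

end Coupling

section MutualInfo

variable {A B C : Type*} [Fintype A] [Fintype B] [Fintype C] {s : A × B × C → ℝ}

noncomputable def condMutualInfo (s : A × B × C → ℝ) : ℝ :=
  entropy s (fun t => (t.1, t.2.2)) + entropy s Prod.snd - entropy s id - entropy s (fun t => t.2.2)

lemma condMutualInfo_eq_sum_mul_log (hs : 0 ≤ s) :
    condMutualInfo s = ∑ t, s t * log (s t / condIndepCoupling s t) := by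
  have hterm : ∀ t, s t * log (s t / condIndepCoupling s t) =
      s t * log (s t) + s t * log (marginal s (fun t => t.2.2) t.2.2) -
        s t * log (marginal s (fun t => (t.1, t.2.2)) (t.1, t.2.2)) -
        s t * log (marginal s Prod.snd t.2) := by
    intro t
    rcases (hs t).eq_or_lt with hst | hst
    · simp [← hst]
    have hAC := marginal_pos hs (fun t => (t.1, t.2.2)) hst
    have hBC := marginal_pos hs Prod.snd hst
    have hC := marginal_pos hs (fun t => t.2.2) hst
    rw [condIndepCoupling, log_div hst.ne' (div_pos (mul_pos hAC hBC) hC).ne',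
      log_div (mul_pos hAC hBC).ne' hC.ne', log_mul hAC.ne' hBC.ne']
    ring
  simp only [condMutualInfo, entropy_eq_neg_sum_mul_log, marginal_id, id, hterm,
    Finset.sum_add_distrib, Finset.sum_sub_distrib]
  ring

lemma condMutualInfo_nonneg (hs : 0 ≤ s) : 0 ≤ condMutualInfo s := by
  rw [condMutualInfo_eq_sum_mul_log hs]
  refine sum_mul_log_div_nonneg hs (condIndepCoupling_nonneg hs)
    (fun t => condIndepCoupling_pos hs) (le_of_eq ?_)
  rw [← sum_marginal _ (fun t => (t.1, t.2.2)), marginal_condIndepCoupling_fst_snd_snd hs,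
    sum_marginal]

lemma IsCondIndep.condMutualInfo_eq_zero (hs : 0 ≤ s) (h : IsCondIndep s) :
    condMutualInfo s = 0 := by
  rw [condMutualInfo_eq_sum_mul_log hs, h.condIndepCoupling_eq hs]
  exact Finset.sum_eq_zero fun t _ => by by_cases hst : s t = 0 <;> simp [hst]

lemma condMutualInfo_marginal (p : T → ℝ) (f : T → A) (g : T → B) (k : T → C) :
    condMutualInfo (marginal p (fun t => (f t, g t, k t))) =
      entropy p (fun t => (f t, k t)) + entropy p (fun t => (g t, k t)) -
        entropy p (fun t => (f t, g t, k t)) - entropy p k := by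
  simp only [condMutualInfo, entropy_marginal]
  rfl

lemma entropy_add_entropy_le (hp : 0 ≤ p) (f : T → A) (g : T → B) (k : T → C) :
    entropy p (fun t => (f t, g t, k t)) + entropy p k ≤
      entropy p (fun t => (f t, k t)) + entropy p (fun t => (g t, k t)) := by
  have h := condMutualInfo_nonneg (marginal_nonneg hp (fun t => (f t, g t, k t)))
  rw [condMutualInfo_marginal] at h
  linarith

lemma entropy_add_entropy_eq_of_isCondIndep (hp : 0 ≤ p) {f : T → A} {g : T → B} {k : T → C}
    (h : IsCondIndep (marginal p (fun t => (f t, g t, k t)))) :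
    entropy p (fun t => (f t, g t, k t)) + entropy p k =
      entropy p (fun t => (f t, k t)) + entropy p (fun t => (g t, k t)) := by
  have h := h.condMutualInfo_eq_zero (marginal_nonneg hp _)
  rw [condMutualInfo_marginal] at h
  linarith

/-- `H(B | C) = H(B | A, C) ≤ H(B | A)` when `A` and `B` are independent given `C`. -/
lemma IsCondIndep.entropy_snd_add_entropy_fst_le (hs : 0 ≤ s) (h : IsCondIndep s) :
    entropy s Prod.snd + entropy s Prod.fst ≤
      entropy s (fun t => (t.1, t.2.1)) + entropy s (fun t => t.2.2) := by
  have hI := h.condMutualInfo_eq_zero hs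
  have hle : entropy s (fun t => (t.2.1, t.2.2, t.1)) + entropy s Prod.fst ≤
      entropy s (fun t => (t.2.1, t.1)) + entropy s (fun t => (t.2.2, t.1)) :=
    entropy_add_entropy_le hs (fun t => t.2.1) (fun t => t.2.2) Prod.fst
  have hBCA : entropy s (fun t => (t.2.1, t.2.2, t.1)) = entropy s id :=
    entropy_of_injective s fun x y hxy => by
      simp only [Prod.mk.injEq] at hxy
      exact Prod.ext hxy.2.2 (Prod.ext hxy.1 hxy.2.1)
  have hBA : entropy s (fun t => (t.2.1, t.1)) = entropy s (fun t => (t.1, t.2.1)) :=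
    entropy_comp_of_injective (g := Prod.swap) s (fun t => (t.1, t.2.1)) Prod.swap_injective
  have hCA : entropy s (fun t => (t.2.2, t.1)) = entropy s (fun t => (t.1, t.2.2)) :=
    entropy_comp_of_injective (g := Prod.swap) s (fun t => (t.1, t.2.2)) Prod.swap_injective
  rw [condMutualInfo] at hI
  linarith

end MutualInfo

theorem ingleton_nonneg_of_isCondIndep {X Y Z U : Type*} [Fintype X] [Fintype Y] [Fintype Z]
    [Fintype U] {r : (X × Y) × Z × U → ℝ} (hr : 0 ≤ r)
    (hXZ : IsCondIndep (marginal r (fun t => (t.1.1, t.2))))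
    (hYZ : IsCondIndep (marginal r (fun t => (t.1.2, t.2)))) :
    0 ≤ -entropy r Prod.fst + entropy r (fun t => (t.1.1, t.2.1))
      + entropy r (fun t => (t.1.1, t.2.2)) + entropy r (fun t => (t.1.2, t.2.1))
      + entropy r (fun t => (t.1.2, t.2.2)) + entropy r Prod.snd
      - entropy r (fun t => t.2.1) - entropy r (fun t => t.2.2)
      - entropy r (fun t => (t.1.1, t.2)) - entropy r (fun t => (t.1.2, t.2)) := by
  set q := condIndepCoupling r
  have hq : 0 ≤ q := condIndepCoupling_nonneg hr
  have hXZU : entropy r (fun t => (t.1.1, t.2)) + entropy r (fun t => t.2.2) =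
      entropy r (fun t => (t.1.1, t.2.2)) + entropy r Prod.snd :=
    entropy_add_entropy_eq_of_isCondIndep hr hXZ
  have hYZU : entropy r (fun t => (t.1.2, t.2)) + entropy r (fun t => t.2.2) =
      entropy r (fun t => (t.1.2, t.2.2)) + entropy r Prod.snd :=
    entropy_add_entropy_eq_of_isCondIndep hr hYZ
  have hq_ZU : entropy q Prod.snd + entropy q Prod.fst ≤
      entropy q (fun t => (t.1, t.2.1)) + entropy q (fun t => t.2.2) :=
    (isCondIndep_condIndepCoupling hr).entropy_snd_add_entropy_fst_le hq
  have hq_XYZ : entropy q (fun t => (t.1, t.2.1)) + entropy q (fun t => t.2.1) ≤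
      entropy q (fun t => (t.1.1, t.2.1)) + entropy q (fun t => (t.1.2, t.2.1)) := by
    rw [← entropy_comp_of_injective (g := Equiv.prodAssoc X Y Z) q (fun t => (t.1, t.2.1))
      (Equiv.injective _)]
    exact entropy_add_entropy_le hq (fun t => t.1.1) (fun t => t.1.2) (fun t => t.2.1)
  have hXY : entropy q Prod.fst = entropy r Prod.fst :=
    entropy_comp_eq_of_marginal_eq (marginal_condIndepCoupling_fst_snd_snd hr) Prod.fst
  have hZU : entropy q Prod.snd = entropy r Prod.snd :=
    entropy_comp_eq_of_marginal_eq (marginal_condIndepCoupling_snd hr) id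
  have hZ : entropy q (fun t => t.2.1) = entropy r (fun t => t.2.1) :=
    entropy_comp_eq_of_marginal_eq (marginal_condIndepCoupling_snd hr) Prod.fst
  have hU : entropy q (fun t => t.2.2) = entropy r (fun t => t.2.2) :=
    entropy_comp_eq_of_marginal_eq (marginal_condIndepCoupling_snd hr) Prod.snd
  have hXZ' : entropy q (fun t => (t.1.1, t.2.1)) = entropy r (fun t => (t.1.1, t.2.1)) :=
    entropy_comp_eq_of_marginal_eq
      (marginal_condIndepCoupling_of_isCondIndep hr Prod.fst hXZ) (fun t => (t.1, t.2.1))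
  have hYZ' : entropy q (fun t => (t.1.2, t.2.1)) = entropy r (fun t => (t.1.2, t.2.1)) :=
    entropy_comp_eq_of_marginal_eq
      (marginal_condIndepCoupling_of_isCondIndep hr Prod.snd hYZ) (fun t => (t.1, t.2.1))
  linarith

end FiniteEntropy

open FiniteEntropy

section ProbabilitySpace

variable {Ω T V : Type*} [MeasurableSpace Ω] (μ : Measure Ω)

lemma probOf_nonneg_s8 (ξ : Ω → T) : 0 ≤ probOf μ ξ := fun _ => ENNReal.toReal_nonneg

lemma marginal_probOf [IsFiniteMeasure μ] [Fintype T] [MeasurableSpace T]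
    [MeasurableSingletonClass T] {ξ : Ω → T} (hξ : Measurable ξ) (φ : T → V) :
    marginal (probOf μ ξ) φ = probOf μ (φ ∘ ξ) := by
  ext v
  simp only [marginal, probOf]
  rw [← ENNReal.toReal_sum fun _ _ => measure_ne_top μ _]
  refine congrArg ENNReal.toReal ((sum_measure_preimage_singleton _
    fun t _ => hξ (measurableSet_singleton t)).trans (congrArg μ ?_))
  ext ω
  simp

lemma entropyOf_comp [IsFiniteMeasure μ] [Fintype T] [MeasurableSpace T]
    [MeasurableSingletonClass T] [Fintype V] {ξ : Ω → T} (hξ : Measurable ξ) (φ : T → V) :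
    entropyOf μ (φ ∘ ξ) = entropy (probOf μ ξ) φ := by
  rw [entropy, marginal_probOf μ hξ, entropyOf]

lemma CondIndepRV.isCondIndep_probOf [IsFiniteMeasure μ] {A B C : Type*}
    [Fintype A] [MeasurableSpace A] [MeasurableSingletonClass A]
    [Fintype B] [MeasurableSpace B] [MeasurableSingletonClass B]
    [Fintype C] [MeasurableSpace C] [MeasurableSingletonClass C]
    {f : Ω → A} {g : Ω → B} {k : Ω → C} (h : CondIndepRV μ f g k)
    (hf : Measurable f) (hg : Measurable g) (hk : Measurable k) :
    IsCondIndep (probOf μ (fun ω => (f ω, g ω, k ω))) := by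
  rintro ⟨a, b, c⟩
  simp only [marginal_probOf μ (hf.prodMk (hg.prodMk hk)), probOf, Function.comp_def,
    Prod.mk.injEq]
  rw [← ENNReal.toReal_mul, ← ENNReal.toReal_mul, h a b c]

end ProbabilitySpace

theorem conditional_ingleton_5cI_general
    {Ω : Type*} [MeasurableSpace Ω] (μ : Measure Ω) [IsProbabilityMeasure μ]
    {SX SY SZ SU : Type*}
    [Fintype SX] [MeasurableSpace SX] [MeasurableSingletonClass SX]
    [Fintype SY] [MeasurableSpace SY] [MeasurableSingletonClass SY]
    [Fintype SZ] [MeasurableSpace SZ] [MeasurableSingletonClass SZ]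
    [Fintype SU] [MeasurableSpace SU] [MeasurableSingletonClass SU]
    (ξX : Ω → SX) (ξY : Ω → SY) (ξZ : Ω → SZ) (ξU : Ω → SU)
    (mX : Measurable ξX) (mY : Measurable ξY) (mZ : Measurable ξZ) (mU : Measurable ξU)
    (h1 : CondIndepRV μ ξX ξZ ξU) (h2 : CondIndepRV μ ξY ξZ ξU) :
    0 ≤ ingletonEnt μ ξX ξY ξZ ξU := by
  have hξ : Measurable fun ω => ((ξX ω, ξY ω), ξZ ω, ξU ω) :=
    (mX.prodMk mY).prodMk (mZ.prodMk mU)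
  have key := ingleton_nonneg_of_isCondIndep (probOf_nonneg_s8 μ _)
    (by rw [marginal_probOf μ hξ]; exact h1.isCondIndep_probOf μ mX mZ mU)
    (by rw [marginal_probOf μ hξ]; exact h2.isCondIndep_probOf μ mY mZ mU)
  simp only [← entropyOf_comp μ hξ, Function.comp_def] at key
  exact key

/-- Statement: the fifth (new) conditional Ingleton inequality. -/
theorem conditional_ingleton_5cI
    {Ω : Type*} [MeasurableSpace Ω] (μ : Measure Ω) [IsProbabilityMeasure μ]
    {SX SY SZ SU : Type*}
    [Fintype SX] [Nonempty SX] [MeasurableSpace SX] [MeasurableSingletonClass SX]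
    [Fintype SY] [Nonempty SY] [MeasurableSpace SY] [MeasurableSingletonClass SY]
    [Fintype SZ] [Nonempty SZ] [MeasurableSpace SZ] [MeasurableSingletonClass SZ]
    [Fintype SU] [Nonempty SU] [MeasurableSpace SU] [MeasurableSingletonClass SU]
    (ξX : Ω → SX) (ξY : Ω → SY) (ξZ : Ω → SZ) (ξU : Ω → SU)
    (mX : Measurable ξX) (mY : Measurable ξY) (mZ : Measurable ξZ) (mU : Measurable ξU)
    (h1 : CondIndepRV μ ξX ξZ ξU) (h2 : CondIndepRV μ ξY ξZ ξU) :
    0 ≤ ingletonEnt μ ξX ξY ξZ ξU :=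
  conditional_ingleton_5cI_general μ ξX ξY ξZ ξU mX mY mZ mU h1 h2
end

section
/- Double Markov property: let ξ_A, ξ_B, ξ_C be discrete random variables with nonempty finite ranges on a common probability space such that ξ_A ⊥ ξ_B | ξ_C and ξ_A ⊥ ξ_C | ξ_B. Then there exists a random variable ξ_W with a finite range on the same probability space (after possibly extending the vector) such that ξ_W is a function of ξ_B with probability one, ξ_W is a function of ξ_C with probability one, and ξ_A ⊥ (ξ_B, ξ_C) | ξ_W. -/
open MeasureTheory

/-!
Join `b` and `b'` when both occur with positive probability together with a common value `c`
of `ξC`, and let `ξW` be the connected component of `ξB`. Almost surely `ξB` and `ξC` are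
adjacent in the bipartite support graph, so `ξW` is also a function of `ξC`. Along each link
the two Markov conditions give `P(ξA = a | ξB = b) = P(ξA = a | ξC = c) = P(ξA = a | ξB = b')`,
so the conditional law of `ξA` given `ξB` is constant on components; combined with
`ξA ⊥ ξC | ξB` this gives `ξA ⊥ (ξB, ξC) | ξW`.
-/

open scoped ENNReal

theorem ENNReal.cross_mul_trans {q₁ q₂ q₃ p₁ p₂ p₃ : ℝ≥0∞} (h₀ : p₂ ≠ 0) (hT : p₂ ≠ ∞)
    (h₁₂ : q₁ * p₂ = q₂ * p₁) (h₂₃ : q₂ * p₃ = q₃ * p₂) : q₁ * p₃ = q₃ * p₁ := by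
  refine (ENNReal.mul_left_inj h₀ hT).mp ?_
  calc q₁ * p₃ * p₂ = q₁ * p₂ * p₃ := by ring
    _ = q₂ * p₃ * p₁ := by rw [h₁₂]; ring
    _ = q₃ * p₁ * p₂ := by rw [h₂₃]; ring

theorem Relation.equivalence_reflTransGen {β : Type*} {r : β → β → Prop} [Std.Symm r] :
    Equivalence (Relation.ReflTransGen r) :=
  ⟨fun _ => .refl, fun h => Std.Symm.symm _ _ h, .trans⟩

theorem Equivalence.exists_fin_eq_iff {β : Type*} [Finite β] {r : β → β → Prop}
    (hr : Equivalence r) : ∃ (n : ℕ) (f : β → Fin n), ∀ b b', f b = f b' ↔ r b b' := by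
  obtain ⟨n, ⟨e⟩⟩ := Finite.exists_equiv_fin (Quotient ⟨r, hr⟩)
  exact ⟨n, fun b => e ⟦b⟧, fun b b' => e.injective.eq_iff.trans Quotient.eq⟩

section

variable {Ω α β γ τ : Type*} [MeasurableSpace Ω] {μ : Measure Ω}
  {X : Ω → α} {Y : Ω → β} {Z : Ω → γ}

theorem measure_and_comp_eq_sum [Fintype β] [MeasurableSpace β] [MeasurableSingletonClass β]
    [DecidableEq τ] (hY : Measurable Y) (p : Ω → Prop) (f : β → τ) (w : τ) :
    μ {ω | p ω ∧ f (Y ω) = w} = ∑ b with f b = w, μ {ω | p ω ∧ Y ω = b} := by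
  have hfib : {ω | p ω ∧ f (Y ω) = w} = Y ⁻¹' ↑({b | f b = w} : Finset β) ∩ {ω | p ω} := by
    ext; simp [and_comm]
  rw [hfib, ← Measure.restrict_apply (hY (Finset.measurableSet _)),
    ← sum_measure_preimage_singleton _ fun b _ => hY (measurableSet_singleton b)]
  refine Finset.sum_congr rfl fun b _ => ?_
  rw [Measure.restrict_apply (hY (measurableSet_singleton b))]
  congr 1
  ext; simp [and_comm]

theorem CondIndepRV.apply_swap (h : CondIndepRV μ X Z Y) (a : α) (b : β) (c : γ) :
    μ {ω | X ω = a ∧ Y ω = b ∧ Z ω = c} * μ {ω | Y ω = b} =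
      μ {ω | X ω = a ∧ Y ω = b} * μ {ω | Y ω = b ∧ Z ω = c} := by
  simpa only [and_comm, and_left_comm] using h a c b

theorem cross_mul_of_condIndepRV [IsFiniteMeasure μ] (h₁ : CondIndepRV μ X Y Z)
    (h₂ : CondIndepRV μ X Z Y) {b : β} {c : γ} (hbc : μ {ω | Y ω = b ∧ Z ω = c} ≠ 0) (a : α) :
    μ {ω | X ω = a ∧ Y ω = b} * μ {ω | Z ω = c} = μ {ω | X ω = a ∧ Z ω = c} * μ {ω | Y ω = b} :=
  ENNReal.cross_mul_trans hbc (measure_ne_top _ _) (h₂.apply_swap a b c).symm (h₁ a b c)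

def HaveCommonNeighbor (μ : Measure Ω) (Y : Ω → β) (Z : Ω → γ) (b b' : β) : Prop :=
  ∃ c, μ {ω | Y ω = b ∧ Z ω = c} ≠ 0 ∧ μ {ω | Y ω = b' ∧ Z ω = c} ≠ 0

instance : Std.Symm (HaveCommonNeighbor μ Y Z) :=
  ⟨fun _ _ ⟨c, hb, hb'⟩ => ⟨c, hb', hb⟩⟩

theorem cross_mul_of_haveCommonNeighbor [IsFiniteMeasure μ] (h₁ : CondIndepRV μ X Y Z)
    (h₂ : CondIndepRV μ X Z Y) {b b' : β} (h : HaveCommonNeighbor μ Y Z b b') (a : α) :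
    μ {ω | X ω = a ∧ Y ω = b} * μ {ω | Y ω = b'} =
      μ {ω | X ω = a ∧ Y ω = b'} * μ {ω | Y ω = b} := by
  obtain ⟨c, hbc, hb'c⟩ := h
  have hc : μ {ω | Z ω = c} ≠ 0 := fun h0 => hbc (measure_mono_null (fun _ => And.right) h0)
  exact ENNReal.cross_mul_trans hc (measure_ne_top _ _) (cross_mul_of_condIndepRV h₁ h₂ hbc a)
    (cross_mul_of_condIndepRV h₁ h₂ hb'c a).symm

theorem cross_mul_of_reflTransGen [IsFiniteMeasure μ] (h₁ : CondIndepRV μ X Y Z)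
    (h₂ : CondIndepRV μ X Z Y) {b b' : β}
    (h : Relation.ReflTransGen (HaveCommonNeighbor μ Y Z) b b') (a : α) (c : γ) :
    μ {ω | X ω = a ∧ Y ω = b ∧ Z ω = c} * μ {ω | Y ω = b'} =
      μ {ω | X ω = a ∧ Y ω = b'} * μ {ω | Y ω = b ∧ Z ω = c} := by
  induction h with
  | refl => exact h₂.apply_swap a b c
  | @tail b' b'' _ hlink ih =>
    have hb' : μ {ω | Y ω = b'} ≠ 0 := by
      obtain ⟨c', hb'c', -⟩ := hlink
      exact fun h0 => hb'c' (measure_mono_null (fun _ => And.left) h0)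
    exact ENNReal.cross_mul_trans hb' (measure_ne_top _ _) ih
      (cross_mul_of_haveCommonNeighbor h₁ h₂ hlink a)

theorem exists_comp_ae_eq_of_haveCommonNeighbor [IsProbabilityMeasure μ] [Countable β]
    [Countable γ] {f : β → τ} (hf : ∀ b b', HaveCommonNeighbor μ Y Z b b' → f b = f b') :
    ∃ g : γ → τ, μ {ω | f (Y ω) = g (Z ω)} = 1 := by
  classical
  obtain ⟨ω₀⟩ := nonempty_of_isProbabilityMeasure μ
  let g c := if h : ∃ b, μ {ω | Y ω = b ∧ Z ω = c} ≠ 0 then f h.choose else f (Y ω₀)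
  have hg : ∀ b c, μ {ω | Y ω = b ∧ Z ω = c} ≠ 0 → f b = g c := fun b c hbc => by
    have h : ∃ b, μ {ω | Y ω = b ∧ Z ω = c} ≠ 0 := ⟨b, hbc⟩
    simpa only [g, dif_pos h] using hf b _ ⟨c, hbc, h.choose_spec⟩
  have hae : ∀ᵐ ω ∂μ, ∀ p : β × γ, Y ω = p.1 ∧ Z ω = p.2 → f p.1 = g p.2 :=
    ae_all_iff.2 fun ⟨b, c⟩ => by
      by_cases hbc : μ {ω | Y ω = b ∧ Z ω = c} = 0
      · filter_upwards [measure_eq_zero_iff_ae_notMem.1 hbc] with ω hω h using absurd h hω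
      · exact .of_forall fun _ _ => hg b c hbc
  have hfg : ∀ᵐ ω ∂μ, f (Y ω) = g (Z ω) := hae.mono fun ω h => h (Y ω, Z ω) ⟨rfl, rfl⟩
  exact ⟨g, (measure_congr (ae_eq_univ.2 (ae_iff.1 hfg))).trans measure_univ⟩

theorem condIndepRV_prod_comp [Fintype β] [MeasurableSpace β] [MeasurableSingletonClass β]
    [DecidableEq τ] (hY : Measurable Y) {f : β → τ}
    (h : ∀ a b b' c, f b = f b' → μ {ω | X ω = a ∧ Y ω = b ∧ Z ω = c} * μ {ω | Y ω = b'} =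
      μ {ω | X ω = a ∧ Y ω = b'} * μ {ω | Y ω = b ∧ Z ω = c}) :
    CondIndepRV μ X (fun ω => (Y ω, Z ω)) (fun ω => f (Y ω)) := by
  rintro a ⟨b, c⟩ w
  by_cases hw : f b = w
  · subst hw
    have hABC : {ω | X ω = a ∧ (Y ω, Z ω) = (b, c) ∧ f (Y ω) = f b} =
        {ω | X ω = a ∧ Y ω = b ∧ Z ω = c} := by
      ext; simp +contextual [Prod.ext_iff]
    have hBC : {ω | (Y ω, Z ω) = (b, c) ∧ f (Y ω) = f b} = {ω | Y ω = b ∧ Z ω = c} := by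
      ext; simp +contextual [Prod.ext_iff]
    have hW := measure_and_comp_eq_sum (μ := μ) hY (fun _ => True) f (f b)
    simp only [true_and] at hW
    rw [hABC, hBC, hW, measure_and_comp_eq_sum hY, Finset.mul_sum, Finset.sum_mul]
    exact Finset.sum_congr rfl fun b' hb' => h a b b' c (Finset.mem_filter.1 hb').2.symm
  · have hABC : {ω | X ω = a ∧ (Y ω, Z ω) = (b, c) ∧ f (Y ω) = w} = ∅ := by
      ext; simp +contextual [Prod.ext_iff, hw]
    have hBC : {ω | (Y ω, Z ω) = (b, c) ∧ f (Y ω) = w} = ∅ := by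
      ext; simp +contextual [Prod.ext_iff, hw]
    rw [hABC, hBC, measure_empty, zero_mul, mul_zero]

end

theorem double_markov_property_general
    {Ω : Type*} [MeasurableSpace Ω] (μ : Measure Ω) [IsProbabilityMeasure μ]
    {SA SB SC : Type*}
    [Fintype SB] [MeasurableSpace SB] [MeasurableSingletonClass SB]
    [Fintype SC]
    (ξA : Ω → SA) (ξB : Ω → SB) (ξC : Ω → SC)
    (mB : Measurable ξB)
    (h1 : CondIndepRV μ ξA ξB ξC) (h2 : CondIndepRV μ ξA ξC ξB) :
    ∃ (T : Type) (_ : Fintype T) (ξW : Ω → T),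
      (∃ f : SB → T, μ {ω | ξW ω = f (ξB ω)} = 1) ∧
      (∃ g : SC → T, μ {ω | ξW ω = g (ξC ω)} = 1) ∧
      CondIndepRV μ ξA (fun ω => (ξB ω, ξC ω)) ξW := by
  -- Components are indexed by `Fin n`: the quotient itself lives in the universe of `SB`.
  obtain ⟨n, f, hf⟩ :=
    (Relation.equivalence_reflTransGen (r := HaveCommonNeighbor μ ξB ξC)).exists_fin_eq_iff
  obtain ⟨g, hg⟩ := exists_comp_ae_eq_of_haveCommonNeighbor (f := f) fun b b' h =>
    (hf b b').2 (.single h)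
  refine ⟨Fin n, inferInstance, fun ω => f (ξB ω), ⟨f, by simp⟩, ⟨g, hg⟩, ?_⟩
  exact condIndepRV_prod_comp mB fun a b b' c hbb' =>
    cross_mul_of_reflTransGen h1 h2 ((hf b b').1 hbb') a c

/-- double Markov property: if ξ_A ⊥ ξ_B | ξ_C and ξ_A ⊥ ξ_C | ξ_B,
then there is a finite-range random variable ξ_W on the same probability space that
is almost surely a function of ξ_B, almost surely a function of ξ_C, and satisfies
ξ_A ⊥ (ξ_B, ξ_C) | ξ_W. -/
theorem double_markov_property
    {Ω : Type*} [MeasurableSpace Ω] (μ : Measure Ω) [IsProbabilityMeasure μ]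
    {SA SB SC : Type*}
    [Fintype SA] [Nonempty SA] [MeasurableSpace SA] [MeasurableSingletonClass SA]
    [Fintype SB] [Nonempty SB] [MeasurableSpace SB] [MeasurableSingletonClass SB]
    [Fintype SC] [Nonempty SC] [MeasurableSpace SC] [MeasurableSingletonClass SC]
    (ξA : Ω → SA) (ξB : Ω → SB) (ξC : Ω → SC)
    (mA : Measurable ξA) (mB : Measurable ξB) (mC : Measurable ξC)
    (h1 : CondIndepRV μ ξA ξB ξC) (h2 : CondIndepRV μ ξA ξC ξB) :
    ∃ (T : Type) (_ : Fintype T) (ξW : Ω → T),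
      (∃ f : SB → T, μ {ω | ξW ω = f (ξB ω)} = 1) ∧
      (∃ g : SC → T, μ {ω | ξW ω = g (ξC ω)} = 1) ∧
      CondIndepRV μ ξA (fun ω => (ξB ω, ξC ω)) ξW :=
  double_markov_property_general μ ξA ξB ξC mB h1 h2
end

section
/- (E:1) Let h : 𝒫(N) → ℝ be the rank function of a polymatroid over a finite set N, and let X, Y, Z, U ⊆ N be pairwise disjoint. Then [Δh(X,Y|Z) = 0 and Δh(X,Z|U) = 0 and Δh(X,U|Y) = 0] if and only if [Δh(X,Y|U) = 0 and Δh(X,Z|Y) = 0 and Δh(X,U|Z) = 0]. -/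
/-- The difference expression Δh(X,Y|Z) = h(X∪Z) + h(Y∪Z) − h(X∪Y∪Z) − h(Z). -/
def deltaFn {α : Type*} [DecidableEq α] (h : Finset α → ℝ) (X Y Z : Finset α) : ℝ :=
  h (X ∪ Z) + h (Y ∪ Z) - h (X ∪ Y ∪ Z) - h Z

lemma ci_aux {α : Type*} [DecidableEq α] (h : Finset α → ℝ)
    (hpoly : ∀ X Y Z : Finset α, 0 ≤ deltaFn h X Y Z)
    (X Y Z U : Finset α)
    (hA : deltaFn h X Y Z = 0) (hB : deltaFn h X Z U = 0) (hC : deltaFn h X U Y = 0) :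
    deltaFn h X Y U = 0 ∧ deltaFn h X Z Y = 0 ∧ deltaFn h X U Z = 0 := by
  have d1 := hpoly X Y U
  have d2 := hpoly X Z Y
  have d3 := hpoly X U Z
  simp only [deltaFn, Finset.union_comm, Finset.union_assoc, Finset.union_left_comm]
    at hA hB hC d1 d2 d3 ⊢
  refine ⟨by linarith, by linarith, by linarith⟩

/-- CI equivalence for rank functions of polymatroids over a finite set. -/
theorem ci_equivalence_E1
    {α : Type*} [Fintype α] [DecidableEq α] (h : Finset α → ℝ)
    (hempty : h ∅ = 0)
    (hpoly : ∀ X Y Z : Finset α, 0 ≤ deltaFn h X Y Z)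
    (X Y Z U : Finset α)
    (hXY : Disjoint X Y) (hXZ : Disjoint X Z) (hXU : Disjoint X U)
    (hYZ : Disjoint Y Z) (hYU : Disjoint Y U) (hZU : Disjoint Z U) :
    (deltaFn h X Y Z = 0 ∧ deltaFn h X Z U = 0 ∧ deltaFn h X U Y = 0) ↔ (deltaFn h X Y U = 0 ∧ deltaFn h X Z Y = 0 ∧ deltaFn h X U Z = 0) := by
  constructor
  · rintro ⟨a, b, c⟩
    exact ci_aux h hpoly X Y Z U a b c
  · rintro ⟨a, b, c⟩
    obtain ⟨p, q, r⟩ := ci_aux h hpoly X U Z Y c b a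
    exact ⟨r, q, p⟩
end

section
/- (E:2) Let h : 𝒫(N) → ℝ be the rank function of a polymatroid over a finite set N, and let X, Y, Z, U ⊆ N be pairwise disjoint. Then [Δh(X,Y|Z) = 0 and Δh(X,U|Y) = 0 and Δh(Y,Z|U) = 0 and Δh(Z,U|X) = 0] if and only if [Δh(X,Y|U) = 0 and Δh(X,U|Z) = 0 and Δh(Y,Z|X) = 0 and Δh(Z,U|Y) = 0]. -/
/-- CI equivalence for rank functions of polymatroids over a finite set. -/
theorem ci_equivalence_E2
    {α : Type*} [Fintype α] [DecidableEq α] (h : Finset α → ℝ)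
    (hempty : h ∅ = 0)
    (hpoly : ∀ X Y Z : Finset α, 0 ≤ deltaFn h X Y Z)
    (X Y Z U : Finset α)
    (hXY : Disjoint X Y) (hXZ : Disjoint X Z) (hXU : Disjoint X U)
    (hYZ : Disjoint Y Z) (hYU : Disjoint Y U) (hZU : Disjoint Z U) :
    (deltaFn h X Y Z = 0 ∧ deltaFn h X U Y = 0 ∧ deltaFn h Y Z U = 0 ∧ deltaFn h Z U X = 0) ↔ (deltaFn h X Y U = 0 ∧ deltaFn h X U Z = 0 ∧ deltaFn h Y Z X = 0 ∧ deltaFn h Z U Y = 0) := by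
  have key : deltaFn h X Y Z + deltaFn h X U Y + deltaFn h Y Z U + deltaFn h Z U X
      = deltaFn h X Y U + deltaFn h X U Z + deltaFn h Y Z X + deltaFn h Z U Y := by
    simp only [deltaFn, Finset.union_assoc, Finset.union_comm, Finset.union_left_comm]
    ring
  have p1 := hpoly X Y Z
  have p2 := hpoly X U Y
  have p3 := hpoly Y Z U
  have p4 := hpoly Z U X
  have q1 := hpoly X Y U
  have q2 := hpoly X U Z
  have q3 := hpoly Y Z X
  have q4 := hpoly Z U Y
  constructor
  · rintro ⟨a, b, c, d⟩
    refine ⟨?_, ?_, ?_, ?_⟩ <;> linarith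
  · rintro ⟨a, b, c, d⟩
    refine ⟨?_, ?_, ?_, ?_⟩ <;> linarith
end

section
/- (E:3) Let h : 𝒫(N) → ℝ be the rank function of a polymatroid over a finite set N, and let X, Y, Z, U ⊆ N be pairwise disjoint. Then [Δh(X,Y|Z∪U) = 0 and Δh(X,Z|∅) = 0 and Δh(Y,U|∅) = 0 and Δh(Z,U|X∪Y) = 0] if and only if [Δh(X,Y|∅) = 0 and Δh(X,Z|Y∪U) = 0 and Δh(Y,U|X∪Z) = 0 and Δh(Z,U|∅) = 0]. -/
/-- CI equivalence for rank functions of polymatroids over a finite set. -/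
theorem ci_equivalence_E3
    {α : Type*} [Fintype α] [DecidableEq α] (h : Finset α → ℝ)
    (hempty : h ∅ = 0)
    (hpoly : ∀ X Y Z : Finset α, 0 ≤ deltaFn h X Y Z)
    (X Y Z U : Finset α)
    (hXY : Disjoint X Y) (hXZ : Disjoint X Z) (hXU : Disjoint X U)
    (hYZ : Disjoint Y Z) (hYU : Disjoint Y U) (hZU : Disjoint Z U) :
    (deltaFn h X Y (Z ∪ U) = 0 ∧ deltaFn h X Z ∅ = 0 ∧ deltaFn h Y U ∅ = 0 ∧ deltaFn h Z U (X ∪ Y) = 0) ↔ (deltaFn h X Y ∅ = 0 ∧ deltaFn h X Z (Y ∪ U) = 0 ∧ deltaFn h Y U (X ∪ Z) = 0 ∧ deltaFn h Z U ∅ = 0) := by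
  have key : deltaFn h X Y (Z ∪ U) + deltaFn h X Z ∅ + deltaFn h Y U ∅ +
      deltaFn h Z U (X ∪ Y) =
      deltaFn h X Y ∅ + deltaFn h X Z (Y ∪ U) + deltaFn h Y U (X ∪ Z) +
      deltaFn h Z U ∅ := by
    simp only [deltaFn, Finset.union_empty, Finset.union_assoc, Finset.union_comm,
      Finset.union_left_comm]
    ring
  have h1 := hpoly X Y (Z ∪ U)
  have h2 := hpoly X Z ∅
  have h3 := hpoly Y U ∅
  have h4 := hpoly Z U (X ∪ Y)
  have h5 := hpoly X Y ∅
  have h6 := hpoly X Z (Y ∪ U)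
  have h7 := hpoly Y U (X ∪ Z)
  have h8 := hpoly Z U ∅
  constructor
  · rintro ⟨a, b, c, d⟩
    refine ⟨?_, ?_, ?_, ?_⟩ <;> linarith
  · rintro ⟨a, b, c, d⟩
    refine ⟨?_, ?_, ?_, ?_⟩ <;> linarith
end

section
/- (E:4) Let h : 𝒫(N) → ℝ be the rank function of a polymatroid over a finite set N, and let X, Y, Z, U ⊆ N be pairwise disjoint. Then [Δh(X,Y|∅) = 0 and Δh(X,Y|Z∪U) = 0 and Δh(Z,U|X) = 0 and Δh(Z,U|Y) = 0] if and only if [Δh(X,Y|Z) = 0 and Δh(X,Y|U) = 0 and Δh(Z,U|∅) = 0 and Δh(Z,U|X∪Y) = 0]. -/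
lemma delta_key {α : Type*} [DecidableEq α] (h : Finset α → ℝ) (X Y Z U : Finset α) :
    deltaFn h X Y ∅ + deltaFn h X Y (Z ∪ U) + deltaFn h Z U X + deltaFn h Z U Y =
    deltaFn h X Y Z + deltaFn h X Y U + deltaFn h Z U ∅ + deltaFn h Z U (X ∪ Y) := by
  simp only [deltaFn, Finset.union_empty, Finset.union_assoc, Finset.union_comm,
    Finset.union_left_comm]
  ring

/-- CI equivalence for rank functions of polymatroids over a finite set. -/
theorem ci_equivalence_E4
    {α : Type*} [Fintype α] [DecidableEq α] (h : Finset α → ℝ)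
    (hempty : h ∅ = 0)
    (hpoly : ∀ X Y Z : Finset α, 0 ≤ deltaFn h X Y Z)
    (X Y Z U : Finset α)
    (hXY : Disjoint X Y) (hXZ : Disjoint X Z) (hXU : Disjoint X U)
    (hYZ : Disjoint Y Z) (hYU : Disjoint Y U) (hZU : Disjoint Z U) :
    (deltaFn h X Y ∅ = 0 ∧ deltaFn h X Y (Z ∪ U) = 0 ∧ deltaFn h Z U X = 0 ∧ deltaFn h Z U Y = 0) ↔ (deltaFn h X Y Z = 0 ∧ deltaFn h X Y U = 0 ∧ deltaFn h Z U ∅ = 0 ∧ deltaFn h Z U (X ∪ Y) = 0) := by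
  have key := delta_key h X Y Z U
  have n1 := hpoly X Y ∅
  have n2 := hpoly X Y (Z ∪ U)
  have n3 := hpoly Z U X
  have n4 := hpoly Z U Y
  have n5 := hpoly X Y Z
  have n6 := hpoly X Y U
  have n7 := hpoly Z U ∅
  have n8 := hpoly Z U (X ∪ Y)
  constructor
  · rintro ⟨a, b, c, d⟩
    refine ⟨by linarith, by linarith, by linarith, by linarith⟩
  · rintro ⟨a, b, c, d⟩
    refine ⟨by linarith, by linarith, by linarith, by linarith⟩
end

section
/- (E:5) Let h : 𝒫(N) → ℝ be the rank function of a polymatroid over a finite set N, and let X, Y, Z, U ⊆ N be pairwise disjoint. Then [Δh(X,Y|Z∪U) = 0 and Δh(X,U|Y) = 0 and Δh(Y,Z|∅) = 0 and Δh(Z,U|X) = 0] if and only if [Δh(X,Y|U) = 0 and Δh(X,U|Y∪Z) = 0 and Δh(Y,Z|X) = 0 and Δh(Z,U|∅) = 0]. -/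
/-- CI equivalence for rank functions of polymatroids over a finite set. -/
theorem ci_equivalence_E5
    {α : Type*} [Fintype α] [DecidableEq α] (h : Finset α → ℝ)
    (hempty : h ∅ = 0)
    (hpoly : ∀ X Y Z : Finset α, 0 ≤ deltaFn h X Y Z)
    (X Y Z U : Finset α)
    (hXY : Disjoint X Y) (hXZ : Disjoint X Z) (hXU : Disjoint X U)
    (hYZ : Disjoint Y Z) (hYU : Disjoint Y U) (hZU : Disjoint Z U) :
    (deltaFn h X Y (Z ∪ U) = 0 ∧ deltaFn h X U Y = 0 ∧ deltaFn h Y Z ∅ = 0 ∧ deltaFn h Z U X = 0) ↔ (deltaFn h X Y U = 0 ∧ deltaFn h X U (Y ∪ Z) = 0 ∧ deltaFn h Y Z X = 0 ∧ deltaFn h Z U ∅ = 0) := by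
  have key : deltaFn h X Y (Z ∪ U) + deltaFn h X U Y + deltaFn h Y Z ∅ + deltaFn h Z U X
      = deltaFn h X Y U + deltaFn h X U (Y ∪ Z) + deltaFn h Y Z X + deltaFn h Z U ∅ := by
    simp only [deltaFn, Finset.union_empty, Finset.empty_union]
    simp only [Finset.union_assoc, Finset.union_comm, Finset.union_left_comm]
    ring
  have n1 := hpoly X Y (Z ∪ U)
  have n2 := hpoly X U Y
  have n3 := hpoly Y Z ∅
  have n4 := hpoly Z U X
  have n5 := hpoly X Y U
  have n6 := hpoly X U (Y ∪ Z)
  have n7 := hpoly Y Z X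
  have n8 := hpoly Z U ∅
  constructor
  · rintro ⟨a1, a2, a3, a4⟩
    refine ⟨by linarith, by linarith, by linarith, by linarith⟩
  · rintro ⟨a1, a2, a3, a4⟩
    refine ⟨by linarith, by linarith, by linarith, by linarith⟩
end

section
/- CI implication (I:1): let ξ_X, ξ_Y, ξ_Z, ξ_U be discrete random variables with nonempty finite ranges on a common probability space. If ξ_X ⊥ ξ_Y (unconditional independence), ξ_X ⊥ ξ_Y | ξ_Z, ξ_Z ⊥ ξ_U | ξ_X, and ξ_Z ⊥ ξ_U | ξ_Y, then ξ_Z ⊥ ξ_U (unconditional independence). -/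
open MeasureTheory

lemma split_toReal {Ω S : Type*} [MeasurableSpace Ω] (μ : Measure Ω) [IsFiniteMeasure μ]
    [Fintype S] [MeasurableSpace S] [MeasurableSingletonClass S]
    {f : Ω → S} (hf : Measurable f) {s : Set Ω} (hs : MeasurableSet s) :
    ∑ x : S, (μ ({ω | f ω = x} ∩ s)).toReal = (μ s).toReal := by
  rw [← ENNReal.toReal_sum (fun x _ => measure_ne_top μ _)]
  congr 1
  have h : ⋃ x : S, ({ω | f ω = x} ∩ s) = s := by ext ω; simp
  calc ∑ x : S, μ ({ω | f ω = x} ∩ s)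
      = ∑' x : S, μ ({ω | f ω = x} ∩ s) := (tsum_fintype _).symm
    _ = μ (⋃ x, ({ω | f ω = x} ∩ s)) := by
        refine (measure_iUnion ?_ ?_).symm
        · intro i j hij
          refine Set.disjoint_left.2 fun ω hi hj => hij ?_
          rw [← hi.1, ← hj.1]
        · exact fun x => (hf (measurableSet_singleton x)).inter hs
    _ = μ s := by rw [h]

lemma toReal_zero_mono {Ω : Type*} [MeasurableSpace Ω] (μ : Measure Ω) [IsFiniteMeasure μ]
    {s t : Set Ω} (hst : s ⊆ t) (h : (μ t).toReal = 0) : (μ s).toReal = 0 := by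
  have h0 : μ t = 0 := ((ENNReal.toReal_eq_zero_iff _).mp h).resolve_right (measure_ne_top μ t)
  rw [measure_mono_null hst h0, ENNReal.toReal_zero]


lemma split_toReal' {Ω S : Type*} [MeasurableSpace Ω] (μ : Measure Ω) [IsFiniteMeasure μ]
    [Fintype S] [MeasurableSpace S] [MeasurableSingletonClass S]
    {f : Ω → S} (hf : Measurable f) {s : Set Ω} (hs : MeasurableSet s)
    (t : S → Set Ω) (ht : ∀ x, t x = {ω | f ω = x} ∩ s) :
    ∑ x : S, (μ (t x)).toReal = (μ s).toReal := by
  rw [Finset.sum_congr rfl fun x _ => by rw [ht x]]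
  exact split_toReal μ hf hs


lemma aux_ci {SX SY SZ SU : Type*} [Fintype SX] [Fintype SY] [Fintype SZ] [Fintype SU]
    (pX : SX → ℝ) (pY : SY → ℝ) (pZ : SZ → ℝ) (pU : SU → ℝ)
    (pXY : SX → SY → ℝ) (pXZ : SX → SZ → ℝ) (pYZ : SY → SZ → ℝ)
    (pXU : SX → SU → ℝ) (pYU : SY → SU → ℝ) (pZU : SZ → SU → ℝ)
    (pXYZ : SX → SY → SZ → ℝ) (pZUX : SZ → SU → SX → ℝ) (pZUY : SZ → SU → SY → ℝ)
    (hZ0 : ∀ z, 0 ≤ pZ z)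
    (h1 : ∀ x y, pXY x y = pX x * pY y)
    (h2 : ∀ x y z, pXYZ x y z * pZ z = pXZ x z * pYZ y z)
    (h3 : ∀ z u x, pZUX z u x * pX x = pXZ x z * pXU x u)
    (h4 : ∀ z u y, pZUY z u y * pY y = pYZ y z * pYU y u)
    (sX : ∀ z u, ∑ x, pZUX z u x = pZU z u)
    (sY : ∀ z u, ∑ y, pZUY z u y = pZU z u)
    (sZ : ∀ x y, ∑ z, pXYZ x y z = pXY x y)
    (sU1 : ∀ u, ∑ x, pXU x u = pU u)
    (sU2 : ∀ u, ∑ y, pYU y u = pU u)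
    (sPU : ∑ u, pU u = 1)
    (sZU : ∀ z, ∑ u, pZU z u = pZ z)
    (z0X : ∀ z u x, pX x = 0 → pZUX z u x = 0)
    (z0Y : ∀ z u y, pY y = 0 → pZUY z u y = 0)
    (zXU : ∀ x u, pX x = 0 → pXU x u = 0)
    (zYU : ∀ y u, pY y = 0 → pYU y u = 0)
    (zXZ : ∀ x z, pZ z = 0 → pXZ x z = 0)
    (zXYZ : ∀ x y z, pZ z = 0 → pXYZ x y z = 0)
    (zZU : ∀ z u, pZ z = 0 → pZU z u = 0) :
    ∀ z u, pZU z u = pZ z * pU u := by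
  classical
  intro z1 u0
  set γ : SU → ℝ := fun u => (if u = u0 then (1:ℝ) else 0) - pU u0 with hγ
  set a : SX → ℝ := fun x => (∑ u, γ u * pXU x u) / pX x with ha
  set b : SY → ℝ := fun y => (∑ u, γ u * pYU y u) / pY y with hb
  set G : SZ → ℝ := fun z => ∑ u, γ u * pZU z u with hG
  -- step 2 (X side)
  have F2X : ∀ z, G z = ∑ x, a x * pXZ x z := by
    intro z
    simp only [hG]
    calc ∑ u, γ u * pZU z u
        = ∑ u, γ u * ∑ x, pZUX z u x := Finset.sum_congr rfl fun u _ => by rw [sX z u]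
      _ = ∑ u, ∑ x, γ u * pZUX z u x := by simp_rw [Finset.mul_sum]
      _ = ∑ x, ∑ u, γ u * pZUX z u x := Finset.sum_comm
      _ = ∑ x, a x * pXZ x z := by
          refine Finset.sum_congr rfl fun x _ => ?_
          by_cases hx : pX x = 0
          · have l : ∀ u, pZUX z u x = 0 := fun u => z0X z u x hx
            have r : ∀ u, pXU x u = 0 := fun u => zXU x u hx
            simp [ha, l, r]
          · have key : ∀ u, pZUX z u x = pXZ x z * pXU x u / pX x := fun u => by
              rw [eq_div_iff hx]; exact h3 z u x
            calc ∑ u, γ u * pZUX z u x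
                = ∑ u, pXZ x z * (γ u * pXU x u) / pX x :=
                  Finset.sum_congr rfl fun u _ => by rw [key u]; ring
              _ = pXZ x z * (∑ u, γ u * pXU x u) / pX x := by
                  rw [← Finset.sum_div, ← Finset.mul_sum]
              _ = a x * pXZ x z := by simp only [ha]; ring
  -- step 2 (Y side)
  have F2Y : ∀ z, G z = ∑ y, b y * pYZ y z := by
    intro z
    simp only [hG]
    calc ∑ u, γ u * pZU z u
        = ∑ u, γ u * ∑ y, pZUY z u y := Finset.sum_congr rfl fun u _ => by rw [sY z u]
      _ = ∑ u, ∑ y, γ u * pZUY z u y := by simp_rw [Finset.mul_sum]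
      _ = ∑ y, ∑ u, γ u * pZUY z u y := Finset.sum_comm
      _ = ∑ y, b y * pYZ y z := by
          refine Finset.sum_congr rfl fun y _ => ?_
          by_cases hy : pY y = 0
          · have l : ∀ u, pZUY z u y = 0 := fun u => z0Y z u y hy
            have r : ∀ u, pYU y u = 0 := fun u => zYU y u hy
            simp [hb, l, r]
          · have key : ∀ u, pZUY z u y = pYZ y z * pYU y u / pY y := fun u => by
              rw [eq_div_iff hy]; exact h4 z u y
            calc ∑ u, γ u * pZUY z u y
                = ∑ u, pYZ y z * (γ u * pYU y u) / pY y :=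
                  Finset.sum_congr rfl fun u _ => by rw [key u]; ring
              _ = pYZ y z * (∑ u, γ u * pYU y u) / pY y := by
                  rw [← Finset.sum_div, ← Finset.mul_sum]
              _ = b y * pYZ y z := by simp only [hb]; ring
  -- mean zero of γ against pU
  have hγ0 : ∑ u, γ u * pU u = 0 := by
    have e : ∀ u, γ u * pU u = (if u = u0 then pU u else 0) - pU u0 * pU u := by
      intro u; by_cases h : u = u0 <;> simp [hγ, h] <;> ring
    rw [Finset.sum_congr rfl fun u _ => e u, Finset.sum_sub_distrib,
      Finset.sum_ite_eq', ← Finset.mul_sum, sPU]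
    simp
  -- step 3
  have F3X : ∑ x, pX x * a x = 0 := by
    calc ∑ x, pX x * a x
        = ∑ x, ∑ u, γ u * pXU x u := by
          refine Finset.sum_congr rfl fun x _ => ?_
          by_cases hx : pX x = 0
          · have r : ∀ u, pXU x u = 0 := fun u => zXU x u hx
            simp [ha, hx, r]
          · simp only [ha]; rw [mul_comm, div_mul_cancel₀ _ hx]
      _ = ∑ u, ∑ x, γ u * pXU x u := Finset.sum_comm
      _ = ∑ u, γ u * pU u := by simp_rw [← Finset.mul_sum, sU1]
      _ = 0 := hγ0
  have F3Y : ∑ y, pY y * b y = 0 := by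
    calc ∑ y, pY y * b y
        = ∑ y, ∑ u, γ u * pYU y u := by
          refine Finset.sum_congr rfl fun y _ => ?_
          by_cases hy : pY y = 0
          · have r : ∀ u, pYU y u = 0 := fun u => zYU y u hy
            simp [hb, hy, r]
          · simp only [hb]; rw [mul_comm, div_mul_cancel₀ _ hy]
      _ = ∑ u, ∑ y, γ u * pYU y u := Finset.sum_comm
      _ = ∑ u, γ u * pU u := by simp_rw [← Finset.mul_sum, sU2]
      _ = 0 := hγ0
  -- step 1 / F4
  have F4 : ∑ z, (∑ x, a x * pXZ x z) * (∑ y, b y * pYZ y z) / pZ z = 0 := by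
    calc ∑ z, (∑ x, a x * pXZ x z) * (∑ y, b y * pYZ y z) / pZ z
        = ∑ z, ∑ x, ∑ y, a x * b y * pXYZ x y z := by
          refine Finset.sum_congr rfl fun z _ => ?_
          by_cases hz : pZ z = 0
          · have e1 : ∀ x, pXZ x z = 0 := fun x => zXZ x z hz
            have e2 : ∀ x y, pXYZ x y z = 0 := fun x y => zXYZ x y z hz
            simp [e1, e2]
          · have key : ∀ x y, a x * b y * pXYZ x y z
                = (a x * pXZ x z) * (b y * pYZ y z) / pZ z := by
              intro x y
              have hxyz : pXYZ x y z = pXZ x z * pYZ y z / pZ z := by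
                rw [eq_div_iff hz]; exact h2 x y z
              rw [hxyz]; ring
            rw [Finset.sum_mul_sum, Finset.sum_div]
            refine Finset.sum_congr rfl fun x _ => ?_
            rw [Finset.sum_div]
            exact Finset.sum_congr rfl fun y _ => (key x y).symm
      _ = ∑ x, ∑ y, a x * b y * (∑ z, pXYZ x y z) := by
          rw [Finset.sum_comm]
          refine Finset.sum_congr rfl fun x _ => ?_
          rw [Finset.sum_comm]
          exact Finset.sum_congr rfl fun y _ => (Finset.mul_sum _ _ _).symm
      _ = ∑ x, ∑ y, a x * b y * (pX x * pY y) := by simp_rw [sZ, h1]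
      _ = (∑ x, pX x * a x) * (∑ y, pY y * b y) := by
          rw [Finset.sum_mul_sum]
          exact Finset.sum_congr rfl fun x _ => Finset.sum_congr rfl fun y _ => by ring
      _ = 0 := by rw [F3X, zero_mul]
  -- G vanishes
  have hGzero : ∀ z, G z = 0 := by
    have e : ∀ z, G z * G z / pZ z = (∑ x, a x * pXZ x z) * (∑ y, b y * pYZ y z) / pZ z := by
      intro z
      nth_rewrite 1 [F2X z]
      rw [F2Y z]
    have hsum : ∑ z, G z * G z / pZ z = 0 := by
      rw [Finset.sum_congr rfl fun z _ => e z]; exact F4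
    have each := (Finset.sum_eq_zero_iff_of_nonneg
      (fun z _ => div_nonneg (mul_self_nonneg (G z)) (hZ0 z))).mp hsum
    intro z
    by_cases hz : pZ z = 0
    · have : ∀ u, pZU z u = 0 := fun u => zZU z u hz
      simp [hG, this]
    · have h0 := each z (Finset.mem_univ z)
      rcases div_eq_zero_iff.mp h0 with h | h
      · exact mul_self_eq_zero.mp h
      · exact absurd h hz
  -- conclude
  have h6 : G z1 = pZU z1 u0 - pU u0 * pZ z1 := by
    simp only [hG, hγ]
    rw [Finset.sum_congr rfl fun u _ => (sub_mul _ _ _ : ((if u = u0 then (1:ℝ) else 0) - pU u0) * pZU z1 u = _),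
      Finset.sum_sub_distrib]
    congr 1
    · simp [ite_mul]
    · rw [← Finset.mul_sum, sZU z1]
  have hz1 := hGzero z1
  rw [h6] at hz1
  linarith

/-- Statement: the CI implication (I:1) for four discrete random variables. -/
theorem ci_implication_I1
    {Ω : Type*} [MeasurableSpace Ω] (μ : Measure Ω) [IsProbabilityMeasure μ]
    {SX SY SZ SU : Type*}
    [Fintype SX] [Nonempty SX] [MeasurableSpace SX] [MeasurableSingletonClass SX]
    [Fintype SY] [Nonempty SY] [MeasurableSpace SY] [MeasurableSingletonClass SY]
    [Fintype SZ] [Nonempty SZ] [MeasurableSpace SZ] [MeasurableSingletonClass SZ]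
    [Fintype SU] [Nonempty SU] [MeasurableSpace SU] [MeasurableSingletonClass SU]
    (ξX : Ω → SX) (ξY : Ω → SY) (ξZ : Ω → SZ) (ξU : Ω → SU)
    (mX : Measurable ξX) (mY : Measurable ξY) (mZ : Measurable ξZ) (mU : Measurable ξU)
    (h1 : IndepRV μ ξX ξY) (h2 : CondIndepRV μ ξX ξY ξZ) (h3 : CondIndepRV μ ξZ ξU ξX) (h4 : CondIndepRV μ ξZ ξU ξY) :
    IndepRV μ ξZ ξU := by
  have msX : ∀ x : SX, MeasurableSet {ω | ξX ω = x} := fun x => mX (measurableSet_singleton x)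
  have msY : ∀ y : SY, MeasurableSet {ω | ξY ω = y} := fun y => mY (measurableSet_singleton y)
  have msZ : ∀ z : SZ, MeasurableSet {ω | ξZ ω = z} := fun z => mZ (measurableSet_singleton z)
  have msU : ∀ u : SU, MeasurableSet {ω | ξU ω = u} := fun u => mU (measurableSet_singleton u)
  -- real versions of the premises
  have h1R : ∀ (x : SX) (y : SY), (μ {ω | ξX ω = x ∧ ξY ω = y}).toReal
      = (μ {ω | ξX ω = x}).toReal * (μ {ω | ξY ω = y}).toReal := by
    intro x y
    have h := h1 x y ()
    simp only [eq_iff_true_of_subsingleton, and_true, Set.setOf_true, measure_univ, mul_one] at h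
    rw [h, ENNReal.toReal_mul]
  have h2R : ∀ (x : SX) (y : SY) (z : SZ),
      (μ {ω | ξX ω = x ∧ ξY ω = y ∧ ξZ ω = z}).toReal * (μ {ω | ξZ ω = z}).toReal
      = (μ {ω | ξX ω = x ∧ ξZ ω = z}).toReal * (μ {ω | ξY ω = y ∧ ξZ ω = z}).toReal := by
    intro x y z
    have := congrArg ENNReal.toReal (h2 x y z)
    simpa [ENNReal.toReal_mul] using this
  have h3R : ∀ (z : SZ) (u : SU) (x : SX),
      (μ {ω | ξZ ω = z ∧ ξU ω = u ∧ ξX ω = x}).toReal * (μ {ω | ξX ω = x}).toReal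
      = (μ {ω | ξX ω = x ∧ ξZ ω = z}).toReal * (μ {ω | ξX ω = x ∧ ξU ω = u}).toReal := by
    intro z u x
    have h := h3 z u x
    have e1 : {ω | ξZ ω = z ∧ ξX ω = x} = {ω | ξX ω = x ∧ ξZ ω = z} := Set.ext fun ω => and_comm
    have e2 : {ω | ξU ω = u ∧ ξX ω = x} = {ω | ξX ω = x ∧ ξU ω = u} := Set.ext fun ω => and_comm
    rw [e1, e2] at h
    have := congrArg ENNReal.toReal h
    simpa [ENNReal.toReal_mul] using this
  have h4R : ∀ (z : SZ) (u : SU) (y : SY),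
      (μ {ω | ξZ ω = z ∧ ξU ω = u ∧ ξY ω = y}).toReal * (μ {ω | ξY ω = y}).toReal
      = (μ {ω | ξY ω = y ∧ ξZ ω = z}).toReal * (μ {ω | ξY ω = y ∧ ξU ω = u}).toReal := by
    intro z u y
    have h := h4 z u y
    have e1 : {ω | ξZ ω = z ∧ ξY ω = y} = {ω | ξY ω = y ∧ ξZ ω = z} := Set.ext fun ω => and_comm
    have e2 : {ω | ξU ω = u ∧ ξY ω = y} = {ω | ξY ω = y ∧ ξU ω = u} := Set.ext fun ω => and_comm
    rw [e1, e2] at h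
    have := congrArg ENNReal.toReal h
    simpa [ENNReal.toReal_mul] using this
  -- splitting identities
  have sXR : ∀ (z : SZ) (u : SU), ∑ x : SX, (μ {ω | ξZ ω = z ∧ ξU ω = u ∧ ξX ω = x}).toReal
      = (μ {ω | ξZ ω = z ∧ ξU ω = u}).toReal := fun z u =>
    split_toReal' μ mX (s := {ω | ξZ ω = z ∧ ξU ω = u}) ((msZ z).inter (msU u)) _
      (fun x => by ext ω; simp only [Set.mem_inter_iff, Set.mem_setOf_eq]; try tauto)
  have sYR : ∀ (z : SZ) (u : SU), ∑ y : SY, (μ {ω | ξZ ω = z ∧ ξU ω = u ∧ ξY ω = y}).toReal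
      = (μ {ω | ξZ ω = z ∧ ξU ω = u}).toReal := fun z u =>
    split_toReal' μ mY (s := {ω | ξZ ω = z ∧ ξU ω = u}) ((msZ z).inter (msU u)) _
      (fun y => by ext ω; simp only [Set.mem_inter_iff, Set.mem_setOf_eq]; try tauto)
  have sZR : ∀ (x : SX) (y : SY), ∑ z : SZ, (μ {ω | ξX ω = x ∧ ξY ω = y ∧ ξZ ω = z}).toReal
      = (μ {ω | ξX ω = x ∧ ξY ω = y}).toReal := fun x y =>
    split_toReal' μ mZ (s := {ω | ξX ω = x ∧ ξY ω = y}) ((msX x).inter (msY y)) _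
      (fun z => by ext ω; simp only [Set.mem_inter_iff, Set.mem_setOf_eq]; try tauto)
  have sU1R : ∀ u : SU, ∑ x : SX, (μ {ω | ξX ω = x ∧ ξU ω = u}).toReal
      = (μ {ω | ξU ω = u}).toReal := fun u =>
    split_toReal' μ mX (s := {ω | ξU ω = u}) (msU u) _
      (fun x => by ext ω; simp only [Set.mem_inter_iff, Set.mem_setOf_eq]; try tauto)
  have sU2R : ∀ u : SU, ∑ y : SY, (μ {ω | ξY ω = y ∧ ξU ω = u}).toReal
      = (μ {ω | ξU ω = u}).toReal := fun u =>
    split_toReal' μ mY (s := {ω | ξU ω = u}) (msU u) _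
      (fun y => by ext ω; simp only [Set.mem_inter_iff, Set.mem_setOf_eq]; try tauto)
  have sPUR : ∑ u : SU, (μ {ω | ξU ω = u}).toReal = 1 := by
    have h := split_toReal' μ mU (s := Set.univ) MeasurableSet.univ
      (fun u => {ω | ξU ω = u}) (fun u => (Set.inter_univ _).symm)
    rw [h, measure_univ, ENNReal.toReal_one]
  have sZUR : ∀ z : SZ, ∑ u : SU, (μ {ω | ξZ ω = z ∧ ξU ω = u}).toReal
      = (μ {ω | ξZ ω = z}).toReal := fun z =>
    split_toReal' μ mU (s := {ω | ξZ ω = z}) (msZ z) _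
      (fun u => by ext ω; simp only [Set.mem_inter_iff, Set.mem_setOf_eq]; try tauto)
  -- the key identity, via the algebraic lemma
  have key := aux_ci
    (fun x => (μ {ω | ξX ω = x}).toReal) (fun y => (μ {ω | ξY ω = y}).toReal)
    (fun z => (μ {ω | ξZ ω = z}).toReal) (fun u => (μ {ω | ξU ω = u}).toReal)
    (fun x y => (μ {ω | ξX ω = x ∧ ξY ω = y}).toReal)
    (fun x z => (μ {ω | ξX ω = x ∧ ξZ ω = z}).toReal)
    (fun y z => (μ {ω | ξY ω = y ∧ ξZ ω = z}).toReal)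
    (fun x u => (μ {ω | ξX ω = x ∧ ξU ω = u}).toReal)
    (fun y u => (μ {ω | ξY ω = y ∧ ξU ω = u}).toReal)
    (fun z u => (μ {ω | ξZ ω = z ∧ ξU ω = u}).toReal)
    (fun x y z => (μ {ω | ξX ω = x ∧ ξY ω = y ∧ ξZ ω = z}).toReal)
    (fun z u x => (μ {ω | ξZ ω = z ∧ ξU ω = u ∧ ξX ω = x}).toReal)
    (fun z u y => (μ {ω | ξZ ω = z ∧ ξU ω = u ∧ ξY ω = y}).toReal)
    (fun _ => ENNReal.toReal_nonneg) h1R h2R h3R h4R sXR sYR sZR sU1R sU2R sPUR sZUR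
    (fun z u x h => toReal_zero_mono μ (fun ω hω => hω.2.2) h)
    (fun z u y h => toReal_zero_mono μ (fun ω hω => hω.2.2) h)
    (fun x u h => toReal_zero_mono μ (fun ω hω => hω.1) h)
    (fun y u h => toReal_zero_mono μ (fun ω hω => hω.1) h)
    (fun x z h => toReal_zero_mono μ (fun ω hω => hω.2) h)
    (fun x y z h => toReal_zero_mono μ (fun ω hω => hω.2.2) h)
    (fun z u h => toReal_zero_mono μ (fun ω hω => hω.1) h)
  -- conclude
  intro z u c
  simp only [eq_iff_true_of_subsingleton, and_true, Set.setOf_true, measure_univ, mul_one]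
  refine (ENNReal.toReal_eq_toReal_iff' (measure_ne_top μ _)
    (ENNReal.mul_ne_top (measure_ne_top μ _) (measure_ne_top μ _))).mp ?_
  rw [ENNReal.toReal_mul]
  exact key z u
end
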